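/- arXiv:math/0111204 — 10 statements merged into one kernel-verified Lean document; each statement's English description precedes it below -/
import Mathlib

section
/- Let A be a finite-dimensional algebra over a field F with a non-degenerate trace tr : A → F (i.e. tr(ab) = tr(ba) and for every a ≠ 0 there is b with tr(ab) ≠ 0). If tr vanishes on all nilpotent elements of A, then A is semisimple. -/
/-! A finite-dimensional algebra is Artinian, so its Jacobson radical is a nilpotent two-sided
ideal. For `x` in the radical every `x * b` is therefore nilpotent, hence `tr (x * b) = 0` for
all `b`, and non-degeneracy forces `x = 0`. -/

theorem IsArtinianRing.isNilpotent_of_mem_jacobson_bot {R : Type*} [Ring R] [IsArtinianRing R]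
    {x : R} (hx : x ∈ Ideal.jacobson (⊥ : Ideal R)) : IsNilpotent x := by
  obtain ⟨n, hn⟩ := IsArtinianRing.isNilpotent_jacobson_bot (R := R)
  exact ⟨n, by simpa [hn] using Ideal.pow_mem_pow hx n⟩

theorem nondegenerate_trace_vanishing_on_nilpotents_semisimple_general
    (F A : Type*) [Field F] [Ring A] [Algebra F A] [FiniteDimensional F A]
    (tr : A →ₗ[F] F)
    (hnd : ∀ a : A, a ≠ 0 → ∃ b : A, tr (a * b) ≠ 0)
    (hnil : ∀ a : A, IsNilpotent a → tr a = 0) :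
    Ideal.jacobson (⊥ : Ideal A) = ⊥ := by
  have : IsArtinianRing A := .of_finite F A
  refine (Submodule.eq_bot_iff _).2 fun x hx => ?_
  by_contra hx0
  obtain ⟨b, hb⟩ := hnd x hx0
  exact hb <| hnil _ <|
    IsArtinianRing.isNilpotent_of_mem_jacobson_bot (Ideal.mul_mem_right b _ hx)

/-- A finite-dimensional algebra over a field with a non-degenerate trace that vanishes
on nilpotent elements is semisimple (its Jacobson radical is zero). -/
theorem nondegenerate_trace_vanishing_on_nilpotents_semisimple
    (F A : Type*) [Field F] [Ring A] [Algebra F A] [FiniteDimensional F A]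
    (tr : A →ₗ[F] F)
    (htr : ∀ a b : A, tr (a * b) = tr (b * a))
    (hnd : ∀ a : A, a ≠ 0 → ∃ b : A, tr (a * b) ≠ 0)
    (hnil : ∀ a : A, IsNilpotent a → tr a = 0) :
    Ideal.jacobson (⊥ : Ideal A) = ⊥ :=
  nondegenerate_trace_vanishing_on_nilpotents_semisimple_general F A tr hnd hnil
end

section
/- Every F-linear trace (not necessarily non-degenerate) on a finite-dimensional semisimple algebra over a field F vanishes on all nilpotent elements. -/
/-!
A semisimple ring is von Neumann regular: every `a` satisfies `a = a * c * a` for some `c`.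
For a cyclic function `f` this gives `f a = f ((a * c) * a) = f (a * (a * c)) = f (c * a ^ 2)`,
and `c * a ^ 2` has smaller nilpotency index than `a`, because `(c * a ^ 2) ^ n = c * a ^ (n + 1)`.
Induction on the index shows that `f` takes the value `f 0` on every nilpotent element.
-/

theorem IsSemisimpleRing.exists_mul_mul_eq_self {R : Type*} [Ring R] [IsSemisimpleRing R]
    (a : R) : ∃ c, a * c * a = a := by
  obtain ⟨e, he, hspan⟩ := IsSemisimpleRing.ideal_eq_span_idempotent (Ideal.span {a})
  obtain ⟨c, hc⟩ := Ideal.mem_span_singleton'.mp (hspan ▸ Ideal.mem_span_singleton_self e)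
  obtain ⟨d, hd⟩ := Ideal.mem_span_singleton'.mp (hspan ▸ Ideal.mem_span_singleton_self a)
  refine ⟨c, ?_⟩
  rw [mul_assoc, hc, ← hd, mul_assoc, he.eq]

section Cyclic

variable {R β : Type*} [MonoidWithZero R]

theorem mul_sq_pow_succ_of_mul_mul_eq_self {a c : R} (h : a * c * a = a) (n : ℕ) :
    (c * a ^ 2) ^ (n + 1) = c * a ^ (n + 2) := by
  induction n with
  | zero => simp
  | succ n ih =>
    calc (c * a ^ 2) ^ (n + 2) = c * a ^ (n + 1) * (a * c * a) * a := by
          rw [pow_succ, ih]; simp only [pow_succ, pow_zero, one_mul, mul_assoc]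
      _ = c * a ^ (n + 3) := by rw [h]; simp only [pow_succ, mul_assoc]

theorem apply_eq_apply_zero_of_isNilpotent (hreg : ∀ x : R, ∃ c, x * c * x = x) (f : R → β)
    (hf : ∀ x y, f (x * y) = f (y * x)) {a : R} (ha : IsNilpotent a) : f a = f 0 := by
  obtain ⟨n, hn⟩ := ha
  replace hn : a ^ (n + 1) = 0 := by rw [pow_succ, hn, zero_mul]
  induction n generalizing a with
  | zero => rw [← pow_one a, hn]
  | succ n ih =>
    obtain ⟨c, hc⟩ := hreg a
    have hcycle : f a = f (c * a ^ 2) := by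
      calc f a = f (a * c * a) := by rw [hc]
        _ = f (a * a * c) := by rw [hf, mul_assoc]
        _ = f (c * a ^ 2) := by rw [hf, sq]
    rw [hcycle]
    exact ih (by rw [mul_sq_pow_succ_of_mul_mul_eq_self hc, hn, mul_zero])

end Cyclic

theorem trace_on_semisimple_vanishes_on_nilpotents_general
    (F A : Type*) [Field F] [Ring A] [Algebra F A]
    [IsSemisimpleRing A]
    (tr : A →ₗ[F] F)
    (htr : ∀ a b : A, tr (a * b) = tr (b * a))
    (a : A) (ha : IsNilpotent a) :
    tr a = 0 := by
  rw [apply_eq_apply_zero_of_isNilpotent IsSemisimpleRing.exists_mul_mul_eq_self tr htr ha,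
    map_zero]

/-- Every linear trace on a finite-dimensional semisimple algebra over a field vanishes
on nilpotent elements. -/
theorem trace_on_semisimple_vanishes_on_nilpotents
    (F A : Type*) [Field F] [Ring A] [Algebra F A] [FiniteDimensional F A]
    [IsSemisimpleRing A]
    (tr : A →ₗ[F] F)
    (htr : ∀ a b : A, tr (a * b) = tr (b * a))
    (a : A) (ha : IsNilpotent a) :
    tr a = 0 :=
  trace_on_semisimple_vanishes_on_nilpotents_general F A tr htr a ha
end

section
/- Let C be a semisimple F-linear pivotal monoidal category with simple unit. Then C is spherical (the left and right traces agree on all endomorphisms) if and only if d(X) = d(X̄) for every object X, where d(X) is the left categorical dimension. -/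
/-!
Conjugation of morphisms intertwines the two traces, `trR s = trL s̄` (the snake identities
give `s̄̄ = s`), and both traces are additive, `F`-homogeneous and cyclic. Splitting `X` into
simples `Sᵢ` by `∑ᵢ u'ᵢ ≫ uᵢ = 𝟙 X`, cyclicity turns `tr s` into `∑ᵢ tr (uᵢ ≫ s ≫ u'ᵢ)`; each
summand is a scalar `cᵢ` times the identity of `Sᵢ`, so `trL s = ∑ᵢ cᵢ d(Sᵢ)` and
`trR s = ∑ᵢ cᵢ d(S̄ᵢ)`.
-/

open CategoryTheory MonoidalCategory

/-- A (strict) pivotal structure on a monoidal category: a duality map on objects with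
`X̄̄ = X`, chosen duality morphisms `ε(X) : 1 ⟶ X ⊗ X̄` and `ε̄(X) : X ⊗ X̄ ⟶ 1` exhibiting
`X̄` as a two-sided dual of `X`, and a contravariant conjugation on morphisms compatible
with the duality morphisms. -/
structure PivotalData (C : Type*) [Category C] [MonoidalCategory C] where
  bar : C → C
  bar_bar : ∀ X : C, bar (bar X) = X
  ev : ∀ X : C, 𝟙_ C ⟶ X ⊗ bar X
  coev : ∀ X : C, X ⊗ bar X ⟶ 𝟙_ C
  barHom : ∀ {X Y : C}, (X ⟶ Y) → (bar Y ⟶ bar X)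
  barHom_id : ∀ X : C, barHom (𝟙 X) = 𝟙 (bar X)
  barHom_comp : ∀ {X Y Z : C} (f : X ⟶ Y) (g : Y ⟶ Z), barHom (f ≫ g) = barHom g ≫ barHom f
  zig : ∀ X : C,
    (ρ_ X).inv ≫ (X ◁ (ev (bar X) ≫ ((bar X) ◁ eqToHom (bar_bar X)))) ≫
      (α_ X (bar X) X).inv ≫ (coev X ▷ X) ≫ (λ_ X).hom = 𝟙 X
  zag : ∀ X : C,
    (λ_ X).inv ≫ (ev X ▷ X) ≫ (α_ X (bar X) X).hom ≫
      (X ◁ (((bar X) ◁ eqToHom (bar_bar X).symm) ≫ coev (bar X))) ≫ (ρ_ X).hom = 𝟙 X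
  ev_natural : ∀ {X Y : C} (s : X ⟶ Y), ev X ≫ (s ▷ bar X) = ev Y ≫ (Y ◁ barHom s)
  coev_natural : ∀ {X Y : C} (s : X ⟶ Y), (s ▷ bar Y) ≫ coev Y = (X ◁ barHom s) ≫ coev X

/-- The left trace of an endomorphism in a pivotal category. -/
def PivotalData.trL {C : Type*} [Category C] [MonoidalCategory C] (P : PivotalData C)
    {X : C} (s : X ⟶ X) : 𝟙_ C ⟶ 𝟙_ C :=
  P.ev X ≫ (s ▷ P.bar X) ≫ P.coev X

/-- The right trace of an endomorphism in a pivotal category. -/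
def PivotalData.trR {C : Type*} [Category C] [MonoidalCategory C] (P : PivotalData C)
    {X : C} (s : X ⟶ X) : 𝟙_ C ⟶ 𝟙_ C :=
  P.ev (P.bar X) ≫
    ((P.bar X) ◁ (eqToHom (P.bar_bar X) ≫ s ≫ eqToHom (P.bar_bar X).symm)) ≫
    P.coev (P.bar X)

/-- The (left) categorical dimension of an object. -/
def PivotalData.dim {C : Type*} [Category C] [MonoidalCategory C] (P : PivotalData C)
    (X : C) : 𝟙_ C ⟶ 𝟙_ C :=
  P.trL (𝟙 X)

lemma Preadditive.eq_sum_comp_of_sum_comp_eq_id {C : Type*} [Category C] [Preadditive C]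
    {ι : Type*} [Fintype ι] {X : C} {S : ι → C} (u : ∀ i, S i ⟶ X) (u' : ∀ i, X ⟶ S i)
    (hu : ∑ i, u' i ≫ u i = 𝟙 X) (s : X ⟶ X) : s = ∑ i, u' i ≫ u i ≫ s := by
  simp only [← Category.assoc, ← Preadditive.sum_comp, hu, Category.id_comp]

namespace PivotalData

variable {C : Type*} [Category C] [MonoidalCategory C] (P : PivotalData C)

def unbarHom {X Y : C} (t : P.bar Y ⟶ P.bar X) : X ⟶ Y :=
  (λ_ X).inv ≫ (P.ev Y ▷ X) ≫ (α_ Y (P.bar Y) X).hom ≫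
    (Y ◁ ((t ▷ X) ≫ (P.bar X ◁ eqToHom (P.bar_bar X).symm) ≫ P.coev (P.bar X))) ≫ (ρ_ Y).hom

lemma unbarHom_barHom {X Y : C} (s : X ⟶ Y) : P.unbarHom (P.barHom s) = s := by
  unfold unbarHom
  rw [MonoidalCategory.whiskerLeft_comp]
  slice_lhs 3 4 => rw [← associator_naturality_middle]
  slice_lhs 2 3 => rw [← comp_whiskerRight, ← P.ev_natural s, comp_whiskerRight]
  slice_lhs 3 4 => rw [associator_naturality_left]
  slice_lhs 4 5 => rw [← whisker_exchange]
  slice_lhs 5 6 => rw [rightUnitor_naturality]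
  slice_lhs 1 5 => rw [P.zag X]
  simp

lemma zag_bar_bar (Y : C) :
    (λ_ (P.bar (P.bar Y))).inv ≫ (P.ev Y ▷ (P.bar (P.bar Y))) ≫
      (α_ Y (P.bar Y) (P.bar (P.bar Y))).hom ≫ (Y ◁ P.coev (P.bar Y)) ≫ (ρ_ Y).hom =
    eqToHom (P.bar_bar Y) := by
  have h : eqToHom (P.bar_bar Y) ≫ ((λ_ Y).inv ≫ (P.ev Y ▷ Y) ≫ (α_ Y (P.bar Y) Y).hom ≫
      (Y ◁ (((P.bar Y) ◁ eqToHom (P.bar_bar Y).symm) ≫ P.coev (P.bar Y))) ≫ (ρ_ Y).hom) =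
      eqToHom (P.bar_bar Y) := by rw [P.zag Y, Category.comp_id]
  rw [← h, MonoidalCategory.whiskerLeft_comp]
  slice_rhs 1 2 => rw [leftUnitor_inv_naturality]
  slice_rhs 2 3 => rw [whisker_exchange]
  slice_rhs 3 4 => rw [associator_naturality_right]
  slice_rhs 4 5 => rw [← MonoidalCategory.whiskerLeft_comp, ← MonoidalCategory.whiskerLeft_comp,
    eqToHom_trans, eqToHom_refl, MonoidalCategory.whiskerLeft_id, MonoidalCategory.whiskerLeft_id]
  simp

lemma eqToHom_comp_unbarHom {X Y : C} (t : P.bar Y ⟶ P.bar X) :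
    eqToHom (P.bar_bar X) ≫ P.unbarHom t = P.barHom t ≫ eqToHom (P.bar_bar Y) := by
  unfold unbarHom
  simp only [MonoidalCategory.whiskerLeft_comp]
  slice_lhs 5 6 => rw [← MonoidalCategory.whiskerLeft_comp, ← whisker_exchange,
    MonoidalCategory.whiskerLeft_comp]
  slice_lhs 6 7 => rw [← MonoidalCategory.whiskerLeft_comp, P.coev_natural t,
    MonoidalCategory.whiskerLeft_comp]
  slice_lhs 1 2 => rw [leftUnitor_inv_naturality]
  slice_lhs 2 3 => rw [whisker_exchange]
  slice_lhs 3 4 => rw [associator_naturality_right]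
  slice_lhs 4 5 => rw [← MonoidalCategory.whiskerLeft_comp, ← MonoidalCategory.whiskerLeft_comp,
    eqToHom_trans, eqToHom_refl, MonoidalCategory.whiskerLeft_id, MonoidalCategory.whiskerLeft_id]
  simp only [Category.id_comp]
  slice_lhs 3 4 => rw [← associator_naturality_right]
  slice_lhs 2 3 => rw [← whisker_exchange]
  slice_lhs 1 2 => rw [← leftUnitor_inv_naturality]
  slice_lhs 2 6 => rw [P.zag_bar_bar]

lemma barHom_barHom {X Y : C} (s : X ⟶ Y) :
    P.barHom (P.barHom s) = eqToHom (P.bar_bar X) ≫ s ≫ eqToHom (P.bar_bar Y).symm := by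
  have h := P.eqToHom_comp_unbarHom (P.barHom s)
  rw [P.unbarHom_barHom] at h
  rw [← Category.assoc, h]
  simp

lemma trR_eq_trL_barHom {X : C} (s : X ⟶ X) : P.trR s = P.trL (P.barHom s) := by
  unfold trL trR
  slice_rhs 1 2 => rw [P.ev_natural (P.barHom s)]
  rw [P.barHom_barHom]
  simp

lemma trR_id (X : C) : P.trR (𝟙 X) = P.dim (P.bar X) := by
  simp [trR, dim, trL]

lemma trL_comp_comm {X Y : C} (f : X ⟶ Y) (g : Y ⟶ X) : P.trL (f ≫ g) = P.trL (g ≫ f) := by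
  unfold trL
  rw [comp_whiskerRight, comp_whiskerRight]
  slice_lhs 1 2 => rw [P.ev_natural f]
  slice_lhs 3 4 => rw [P.coev_natural g]
  slice_rhs 1 2 => rw [P.ev_natural g]
  slice_rhs 2 3 => rw [whisker_exchange]
  slice_rhs 1 2 => rw [P.ev_natural f]
  simp

lemma trR_comp_comm {X Y : C} (f : X ⟶ Y) (g : Y ⟶ X) : P.trR (f ≫ g) = P.trR (g ≫ f) := by
  rw [P.trR_eq_trL_barHom, P.trR_eq_trL_barHom, P.barHom_comp, P.barHom_comp, P.trL_comp_comm]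

section Preadditive

variable [Preadditive C] [MonoidalPreadditive C]

lemma trL_sum {X : C} {ι : Type*} (s : Finset ι) (f : ι → (X ⟶ X)) :
    P.trL (∑ i ∈ s, f i) = ∑ i ∈ s, P.trL (f i) := by
  simp [trL, sum_whiskerRight, Preadditive.sum_comp, Preadditive.comp_sum]

lemma trR_sum {X : C} {ι : Type*} (s : Finset ι) (f : ι → (X ⟶ X)) :
    P.trR (∑ i ∈ s, f i) = ∑ i ∈ s, P.trR (f i) := by
  simp [trR, whiskerLeft_sum, Preadditive.sum_comp, Preadditive.comp_sum]

variable {ι : Type*} [Fintype ι] {X : C} {S : ι → C} (u : ∀ i, S i ⟶ X) (u' : ∀ i, X ⟶ S i)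

lemma trL_eq_sum_of_sum_eq_id (hu : ∑ i, u' i ≫ u i = 𝟙 X) (s : X ⟶ X) :
    P.trL s = ∑ i, P.trL (u i ≫ s ≫ u' i) := by
  conv_lhs => rw [Preadditive.eq_sum_comp_of_sum_comp_eq_id u u' hu s]
  simp only [P.trL_sum, P.trL_comp_comm (u' _), Category.assoc]

lemma trR_eq_sum_of_sum_eq_id (hu : ∑ i, u' i ≫ u i = 𝟙 X) (s : X ⟶ X) :
    P.trR s = ∑ i, P.trR (u i ≫ s ≫ u' i) := by
  conv_lhs => rw [Preadditive.eq_sum_comp_of_sum_comp_eq_id u u' hu s]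
  simp only [P.trR_sum, P.trR_comp_comm (u' _), Category.assoc]

variable {R : Type*} [Semiring R] [Linear R C] [MonoidalLinear R C]

lemma trL_smul (c : R) {X : C} (s : X ⟶ X) : P.trL (c • s) = c • P.trL s := by
  simp [trL, Linear.smul_comp, Linear.comp_smul]

lemma trR_smul (c : R) {X : C} (s : X ⟶ X) : P.trR (c • s) = c • P.trR s := by
  simp [trR, Linear.smul_comp, Linear.comp_smul]

end Preadditive

end PivotalData

theorem semisimple_pivotal_spherical_iff_dim_eq_dim_bar_general
    {F : Type*} [Field F] {C : Type*} [Category C] [MonoidalCategory C]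
    [Preadditive C] [CategoryTheory.Linear F C]
    [MonoidalPreadditive C] [MonoidalLinear F C]
    (P : PivotalData C)
    (hss : ∀ X : C, ∃ (n : ℕ) (S : Fin n → C) (u : ∀ i, S i ⟶ X) (u' : ∀ i, X ⟶ S i),
      (∀ i, ∀ f : S i ⟶ S i, ∃ c : F, f = c • 𝟙 (S i)) ∧
      (∑ i, u' i ≫ u i) = 𝟙 X ∧
      (∀ i, u i ≫ u' i = 𝟙 (S i)) ∧
      (∀ i j, i ≠ j → u i ≫ u' j = 0)) :
    (∀ (X : C) (s : X ⟶ X), P.trL s = P.trR s) ↔ (∀ X : C, P.dim X = P.dim (P.bar X)) := by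
  refine ⟨fun hsph X => (hsph X (𝟙 X)).trans (P.trR_id X), fun hdim X s => ?_⟩
  obtain ⟨n, S, u, u', hscalar, hu, -, -⟩ := hss X
  rw [P.trL_eq_sum_of_sum_eq_id u u' hu, P.trR_eq_sum_of_sum_eq_id u u' hu]
  refine Finset.sum_congr rfl fun i _ => ?_
  obtain ⟨c, hc⟩ := hscalar i (u i ≫ s ≫ u' i)
  rw [hc, P.trL_smul, P.trR_smul, P.trR_id, ← hdim]
  rfl

/-- A semisimple `F`-linear pivotal category with simple unit is spherical if and only if
`d(X) = d(X̄)` for every object `X`. -/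
theorem semisimple_pivotal_spherical_iff_dim_eq_dim_bar
    {F : Type*} [Field F] {C : Type*} [Category C] [MonoidalCategory C]
    [Preadditive C] [CategoryTheory.Linear F C]
    [MonoidalPreadditive C] [MonoidalLinear F C]
    (P : PivotalData C)
    (hunit : ∀ f : 𝟙_ C ⟶ 𝟙_ C, ∃ c : F, f = c • 𝟙 (𝟙_ C))
    (hss : ∀ X : C, ∃ (n : ℕ) (S : Fin n → C) (u : ∀ i, S i ⟶ X) (u' : ∀ i, X ⟶ S i),
      (∀ i, ∀ f : S i ⟶ S i, ∃ c : F, f = c • 𝟙 (S i)) ∧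
      (∑ i, u' i ≫ u i) = 𝟙 X ∧
      (∀ i, u i ≫ u' i = 𝟙 (S i)) ∧
      (∀ i j, i ≠ j → u i ≫ u' j = 0)) :
    (∀ (X : C) (s : X ⟶ X), P.trL s = P.trR s) ↔ (∀ X : C, P.dim X = P.dim (P.bar X)) :=
  semisimple_pivotal_spherical_iff_dim_eq_dim_bar_general P hss
end

section
/- Let H be a finite-dimensional Hopf algebra over a field F and φ a non-zero left integral in the dual Hopf algebra Ĥ (i.e. α·φ = α(1)φ for all α ∈ Ĥ). Then strong left invariance holds: for all b, c ∈ H, (id ⊗ φ)((1 ⊗ c)Δ(b)) = (id ⊗ φ)((S ⊗ id)(Δ(c))(1 ⊗ b)), where S is the antipode of H. -/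
/-!
Write `Φ = (id ⊗ φ)`. It is left `H`-linear in the first leg, and left invariance says
`Φ (Δ x) = φ x • 1`. Hence the right-hand side is
`∑ S c₁ φ (c₂ b) = ∑ S c₁ Φ (Δ c₂ Δ b) = Φ ((∑ S c₁ c₂ ⊗ c₃) Δ b)`,
and coassociativity with the antipode and counit axioms gives `∑ S c₁ c₂ ⊗ c₃ = 1 ⊗ c`.
-/

open TensorProduct Coalgebra HopfAlgebra

section RightSlice

variable {R A B : Type*} [CommSemiring R]

noncomputable def rightSlice [AddCommMonoid A] [Module R A] [AddCommMonoid B] [Module R B]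
    (φ : B →ₗ[R] R) : A ⊗[R] B →ₗ[R] A :=
  (TensorProduct.rid R A).toLinearMap ∘ₗ φ.lTensor A

@[simp]
lemma rightSlice_tmul [AddCommMonoid A] [Module R A] [AddCommMonoid B] [Module R B]
    (φ : B →ₗ[R] R) (a : A) (b : B) : rightSlice φ (a ⊗ₜ[R] b) = φ b • a := by
  simp [rightSlice]

lemma rightSlice_tmul_one_mul [Semiring A] [Algebra R A] [Semiring B] [Algebra R B]
    (φ : B →ₗ[R] R) (a : A) (z : A ⊗[R] B) :
    rightSlice φ ((a ⊗ₜ[R] (1 : B)) * z) = a * rightSlice φ z := by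
  induction z using TensorProduct.induction_on with
  | zero => simp
  | tmul x y => simp [Algebra.TensorProduct.tmul_mul_tmul]
  | add x y hx hy => simp [mul_add, hx, hy]

end RightSlice

section Hopf

variable {R A : Type*} [CommSemiring R] [Semiring A] [HopfAlgebra R A]

noncomputable def antipodeMulComul : A ⊗[R] A →ₗ[R] A ⊗[R] A :=
  TensorProduct.lift <| (LinearMap.mul R (A ⊗[R] A)).compl₁₂
    (Algebra.TensorProduct.includeLeft.toLinearMap ∘ₗ antipode R) comul

@[simp]
lemma antipodeMulComul_tmul (u v : A) :
    antipodeMulComul (u ⊗ₜ[R] v) = (antipode R u ⊗ₜ[R] (1 : A)) * comul v := by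
  simp [antipodeMulComul]

lemma antipodeMulComul_eq :
    antipodeMulComul =
      (LinearMap.mul' R A ∘ₗ (antipode R).rTensor A).rTensor A ∘ₗ
        (TensorProduct.assoc R A A A).symm.toLinearMap ∘ₗ (comul (R := R) (A := A)).lTensor A := by
  ext u v
  simp only [TensorProduct.AlgebraTensorModule.curry_apply, TensorProduct.curry_apply,
    LinearMap.coe_restrictScalars, antipodeMulComul_tmul, LinearMap.coe_comp,
    LinearEquiv.coe_coe, Function.comp_apply, LinearMap.lTensor_tmul]
  induction comul (R := R) v using TensorProduct.induction_on with
  | zero => simp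
  | tmul x y => simp [Algebra.TensorProduct.tmul_mul_tmul]
  | add x y hx hy => simp only [TensorProduct.tmul_add, map_add, mul_add, hx, hy]

lemma antipodeMulComul_comul (c : A) : antipodeMulComul (comul (R := R) c) = 1 ⊗ₜ[R] c := by
  rw [antipodeMulComul_eq, LinearMap.comp_apply, LinearMap.comp_apply, LinearEquiv.coe_coe,
    coassoc_symm_apply, ← LinearMap.comp_apply, ← LinearMap.rTensor_comp, LinearMap.comp_assoc,
    mul_antipode_rTensor_comul, LinearMap.rTensor_comp, LinearMap.comp_apply,
    rTensor_counit_comul, LinearMap.rTensor_tmul]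
  simp

lemma rightSlice_map_antipode_mul {φ : A →ₗ[R] R}
    (hφ : ∀ x : A, rightSlice φ (comul (R := R) x) = φ x • (1 : A)) (b : A) (z : A ⊗[R] A) :
    rightSlice φ (TensorProduct.map (antipode R) LinearMap.id z * (1 ⊗ₜ[R] b)) =
      rightSlice φ (antipodeMulComul z * comul (R := R) b) := by
  induction z using TensorProduct.induction_on with
  | zero => simp
  | tmul u v =>
    rw [antipodeMulComul_tmul, mul_assoc, ← Bialgebra.comul_mul, rightSlice_tmul_one_mul, hφ]
    simp [Algebra.TensorProduct.tmul_mul_tmul]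
  | add x y hx hy => simp only [map_add, add_mul, hx, hy]

end Hopf

theorem strong_left_invariance_general
    (F H : Type*) [Field F] [Ring H] [HopfAlgebra F H]
    (φ : H →ₗ[F] F)
    (hφ : ∀ x : H,
      TensorProduct.rid F H
        (TensorProduct.map (LinearMap.id : H →ₗ[F] H) φ (Coalgebra.comul (R := F) x))
        = φ x • (1 : H)) :
    ∀ b c : H,
      TensorProduct.rid F H
        (TensorProduct.map (LinearMap.id : H →ₗ[F] H) φ
          (((1 : H) ⊗ₜ[F] c) * Coalgebra.comul (R := F) b))
        =
      TensorProduct.rid F H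
        (TensorProduct.map (LinearMap.id : H →ₗ[F] H) φ
          ((TensorProduct.map (HopfAlgebra.antipode (R := F)) (LinearMap.id : H →ₗ[F] H)
              (Coalgebra.comul (R := F) c)) * ((1 : H) ⊗ₜ[F] b))) := by
  intro b c
  change rightSlice φ _ = rightSlice φ _
  rw [rightSlice_map_antipode_mul hφ, antipodeMulComul_comul]

/-- Strong left invariance: for a finite-dimensional Hopf algebra `H` over a field `F`
and a non-zero left integral `φ` in the dual Hopf algebra (expressed by the left
invariance `(id ⊗ φ) ∘ Δ = φ(·)1`), one has
`(id ⊗ φ)((1 ⊗ c)Δ(b)) = (id ⊗ φ)((S ⊗ id)(Δ(c))(1 ⊗ b))` for all `b c ∈ H`. -/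
theorem strong_left_invariance
    (F H : Type*) [Field F] [Ring H] [HopfAlgebra F H] [FiniteDimensional F H]
    (φ : H →ₗ[F] F) (hφ0 : φ ≠ 0)
    (hφ : ∀ x : H,
      TensorProduct.rid F H
        (TensorProduct.map (LinearMap.id : H →ₗ[F] H) φ (Coalgebra.comul (R := F) x))
        = φ x • (1 : H)) :
    ∀ b c : H,
      TensorProduct.rid F H
        (TensorProduct.map (LinearMap.id : H →ₗ[F] H) φ
          (((1 : H) ⊗ₜ[F] c) * Coalgebra.comul (R := F) b))
        =
      TensorProduct.rid F H
        (TensorProduct.map (LinearMap.id : H →ₗ[F] H) φ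
          ((TensorProduct.map (HopfAlgebra.antipode (R := F)) (LinearMap.id : H →ₗ[F] H)
              (Coalgebra.comul (R := F) c)) * ((1 : H) ⊗ₜ[F] b))) :=
  strong_left_invariance_general F H φ hφ
end

section
/- Let H be a finite-dimensional Hopf algebra over a field F with non-zero left integral Λ ∈ H and non-zero left integral φ ∈ Ĥ normalized so that φ(Λ) = 1. Define w' := m̃ : H ⊗ H → H by m̃(a ⊗ b) = a₍₁₎ φ(S⁻¹(b) a₍₂₎). Then m̃ is associative and Λ is a two-sided unit for m̃. -/
open TensorProduct

suppress_compilation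

namespace HopfIntegralAux

open Coalgebra HopfAlgebra LinearMap

variable {F H : Type*} [Field F] [Ring H] [HopfAlgebra F H]

local notation "S" => HopfAlgebra.antipode (R := F) (A := H)
local notation "Δ" => Coalgebra.comul (R := F) (A := H)
local notation "ε" => Coalgebra.counit (R := F) (A := H)

/-- collapse counit on left legs -/
lemma sum_counit_smul_right {ι : Type*} {x : H} (r : Coalgebra.Repr F x ι) :
    ∑ i ∈ r.index, ε (r.left i) • r.right i = x := by
  have h := congrArg (TensorProduct.lid F H) (Coalgebra.sum_counit_tmul_eq (R := F) r)
  rw [map_sum] at h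
  simp only [TensorProduct.lid_tmul] at h
  simpa using h

lemma sum_counit_smul_left {ι : Type*} {x : H} (r : Coalgebra.Repr F x ι) :
    ∑ i ∈ r.index, ε (r.right i) • r.left i = x := by
  have h := congrArg (TensorProduct.rid F H) (Coalgebra.sum_tmul_counit_eq (R := F) r)
  rw [map_sum] at h
  simp only [TensorProduct.rid_tmul] at h
  simpa using h

/-- coassociativity workhorse -/
lemma sum3 {M : Type*} [AddCommMonoid M] [Module F M] {ι κ κ' : Type*} {x : H} (r : Coalgebra.Repr F x ι)
    (r1 : ∀ i, Coalgebra.Repr F (r.left i) κ) (r2 : ∀ i, Coalgebra.Repr F (r.right i) κ')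
    (U : H ⊗[F] (H ⊗[F] H) →ₗ[F] M) :
    ∑ i ∈ r.index, ∑ j ∈ (r1 i).index,
      U ((r1 i).left j ⊗ₜ ((r1 i).right j ⊗ₜ r.right i)) =
    ∑ i ∈ r.index, ∑ j ∈ (r2 i).index,
      U (r.left i ⊗ₜ ((r2 i).left j ⊗ₜ (r2 i).right j)) := by
  have h := Coalgebra.sum_tmul_tmul_eq (R := F) r r1 r2
  calc ∑ i ∈ r.index, ∑ j ∈ (r1 i).index,
        U ((r1 i).left j ⊗ₜ ((r1 i).right j ⊗ₜ r.right i))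
      = U (∑ i ∈ r.index, ∑ j ∈ (r1 i).index,
          (r1 i).left j ⊗ₜ[F] ((r1 i).right j ⊗ₜ[F] r.right i)) := by
        simp [map_sum]
    _ = U (∑ i ∈ r.index, ∑ j ∈ (r2 i).index,
          r.left i ⊗ₜ[F] ((r2 i).left j ⊗ₜ[F] (r2 i).right j)) := by rw [h]
    _ = _ := by simp [map_sum]

/-- product representation -/
def reprMul {ι κ : Type*} {a b : H} (ra : Coalgebra.Repr F a ι) (rb : Coalgebra.Repr F b κ) : Coalgebra.Repr F (a * b) (ι × κ) where
  index := ra.index ×ˢ rb.index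
  left := fun p => ra.left p.1 * rb.left p.2
  right := fun p => ra.right p.1 * rb.right p.2
  eq := by
    rw [Finset.sum_product, Bialgebra.comul_mul, ← ra.eq, ← rb.eq, Finset.sum_mul_sum]
    simp [Algebra.TensorProduct.tmul_mul_tmul]

@[simp] lemma reprMul_index {ι κ : Type*} {a b : H} (ra : Coalgebra.Repr F a ι) (rb : Coalgebra.Repr F b κ) :
    (reprMul ra rb).index = ra.index ×ˢ rb.index := rfl
@[simp] lemma reprMul_left {ι κ : Type*} {a b : H} (ra : Coalgebra.Repr F a ι) (rb : Coalgebra.Repr F b κ) (p) :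
    (reprMul ra rb).left p = ra.left p.1 * rb.left p.2 := rfl
@[simp] lemma reprMul_right {ι κ : Type*} {a b : H} (ra : Coalgebra.Repr F a ι) (rb : Coalgebra.Repr F b κ) (p) :
    (reprMul ra rb).right p = ra.right p.1 * rb.right p.2 := rfl


section Conv

variable {A : Type*} [Semiring A] [Algebra F A]

/-- convolution product on `Hom(H, A)` -/
def conv (f g : H →ₗ[F] A) : H →ₗ[F] A :=
  LinearMap.mul' F A ∘ₗ TensorProduct.map f g ∘ₗ Coalgebra.comul

/-- convolution unit -/
def cone : H →ₗ[F] A := Algebra.linearMap F A ∘ₗ Coalgebra.counit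

lemma conv_apply (f g : H →ₗ[F] A) {ι : Type*} {x : H} (r : Coalgebra.Repr F x ι) :
    conv f g x = ∑ i ∈ r.index, f (r.left i) * g (r.right i) := by
  simp only [conv, LinearMap.comp_apply, ← r.eq, map_sum, TensorProduct.map_tmul,
    LinearMap.mul'_apply]

/-- triple multiplication -/
def mulT (A : Type*) [Semiring A] [Algebra F A] : A ⊗[F] (A ⊗[F] A) →ₗ[F] A :=
  LinearMap.mul' F A ∘ₗ LinearMap.lTensor A (LinearMap.mul' F A)

@[simp] lemma mulT_tmul (x y z : A) : mulT (F := F) A (x ⊗ₜ (y ⊗ₜ z)) = x * (y * z) := by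
  simp [mulT]

lemma conv_assoc (f g h : H →ₗ[F] A) : conv (conv f g) h = conv f (conv g h) := by
  ext x
  have r := Coalgebra.Repr.arbitrary F x
  have r1 : ∀ i, Coalgebra.Repr F (r.left i) (H × H) := fun i => Coalgebra.Repr.arbitrary F (r.left i)
  have r2 : ∀ i, Coalgebra.Repr F (r.right i) (H × H) := fun i => Coalgebra.Repr.arbitrary F (r.right i)
  have key := sum3 (F := F) r r1 r2
    (mulT (F := F) A ∘ₗ TensorProduct.map f (TensorProduct.map g h))
  rw [conv_apply (conv f g) h r, conv_apply f (conv g h) r]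
  calc ∑ i ∈ r.index, conv f g (r.left i) * h (r.right i)
      = ∑ i ∈ r.index, ∑ j ∈ (r1 i).index,
          (f ((r1 i).left j) * g ((r1 i).right j)) * h (r.right i) := by
        refine Finset.sum_congr rfl fun i _ => ?_
        rw [conv_apply f g (r1 i), Finset.sum_mul]
    _ = ∑ i ∈ r.index, ∑ j ∈ (r2 i).index,
          f (r.left i) * (g ((r2 i).left j) * h ((r2 i).right j)) := by
        simpa [mul_assoc] using key
    _ = _ := by
        refine Finset.sum_congr rfl fun i _ => ?_
        rw [conv_apply g h (r2 i), Finset.mul_sum]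

lemma conv_cone_left (f : H →ₗ[F] A) : conv cone f = f := by
  ext x
  have r := Coalgebra.Repr.arbitrary F x
  rw [conv_apply cone f r]
  calc ∑ i ∈ r.index, cone (r.left i) * f (r.right i)
      = ∑ i ∈ r.index, Coalgebra.counit (R := F) (r.left i) • f (r.right i) := by
        refine Finset.sum_congr rfl fun i _ => ?_
        simp [cone, Algebra.smul_def]
    _ = f (∑ i ∈ r.index, Coalgebra.counit (R := F) (r.left i) • r.right i) := by
        simp [map_sum]
    _ = f x := by rw [sum_counit_smul_right]

lemma conv_cone_right (f : H →ₗ[F] A) : conv f cone = f := by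
  ext x
  have r := Coalgebra.Repr.arbitrary F x
  rw [conv_apply f cone r]
  calc ∑ i ∈ r.index, f (r.left i) * cone (r.right i)
      = ∑ i ∈ r.index, Coalgebra.counit (R := F) (r.right i) • f (r.left i) := by
        refine Finset.sum_congr rfl fun i _ => ?_
        rw [cone]
        simp [Algebra.smul_def, Algebra.commutes]
    _ = f (∑ i ∈ r.index, Coalgebra.counit (R := F) (r.right i) • r.left i) := by
        simp [map_sum]
    _ = f x := by rw [sum_counit_smul_left]

end Conv

lemma conv_antipode_id : conv (F := F) (H := H) (A := H) S LinearMap.id = cone := by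
  ext x
  have r := Coalgebra.Repr.arbitrary F x
  rw [conv_apply _ _ r]
  simpa [cone] using HopfAlgebra.sum_antipode_mul_eq_algebraMap_counit (R := F) r

lemma conv_id_antipode : conv (F := F) (H := H) (A := H) LinearMap.id S = cone := by
  ext x
  have r := Coalgebra.Repr.arbitrary F x
  rw [conv_apply _ _ r]
  simpa [cone] using HopfAlgebra.sum_mul_antipode_eq_algebraMap_counit (R := F) r

lemma antipode_one' : S (1 : H) = 1 := by
  have h := HopfAlgebra.mul_antipode_rTensor_comul_apply (R := F) (1 : H)
  rw [Bialgebra.comul_one] at h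
  rw [Algebra.TensorProduct.one_def] at h
  simpa using h

lemma counit_antipode (x : H) :
    Coalgebra.counit (R := F) (S x) = Coalgebra.counit (R := F) x := by
  have r := Coalgebra.Repr.arbitrary F x
  have h := congrArg (Coalgebra.counit (R := F)) (HopfAlgebra.sum_mul_antipode_eq_algebraMap_counit (R := F) r)
  rw [map_sum] at h
  simp only [Bialgebra.counit_mul, Bialgebra.counit_algebraMap] at h
  calc Coalgebra.counit (R := F) (S x)
      = Coalgebra.counit (R := F)
          (S (∑ i ∈ r.index, Coalgebra.counit (R := F) (r.left i) • r.right i)) := by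
        rw [sum_counit_smul_right]
    _ = ∑ i ∈ r.index, Coalgebra.counit (R := F) (r.left i) *
          Coalgebra.counit (R := F) (S (r.right i)) := by
        rw [map_sum, map_sum]
        refine Finset.sum_congr rfl fun i _ => ?_
        rw [map_smul, map_smul, smul_eq_mul]
    _ = Coalgebra.counit (R := F) x := h


section AntiComul

/-- the candidate anti-coalgebra map `x ↦ Σ S(x₂) ⊗ S(x₁)` -/
def nu : H →ₗ[F] H ⊗[F] H :=
  TensorProduct.map S S ∘ₗ (TensorProduct.comm F H H).toLinearMap ∘ₗ Coalgebra.comul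

lemma nu_apply {ι : Type*} {x : H} (r : Coalgebra.Repr F x ι) :
    nu (F := F) x = ∑ i ∈ r.index, S (r.right i) ⊗ₜ[F] S (r.left i) := by
  simp only [nu, LinearMap.comp_apply, ← r.eq, map_sum, LinearEquiv.coe_coe,
    TensorProduct.comm_tmul, TensorProduct.map_tmul]

lemma conv_comul_comulS :
    conv (F := F) (H := H) (Coalgebra.comul) (Coalgebra.comul ∘ₗ S) = cone := by
  ext x
  have r := Coalgebra.Repr.arbitrary F x
  rw [conv_apply _ _ r]
  calc ∑ i ∈ r.index, Coalgebra.comul (R := F) (r.left i) * (Coalgebra.comul ∘ₗ S) (r.right i)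
      = Coalgebra.comul (R := F) (∑ i ∈ r.index, r.left i * S (r.right i)) := by
        rw [map_sum]
        exact Finset.sum_congr rfl fun i _ => (Bialgebra.comul_mul _ _).symm
    _ = cone x := by
        rw [HopfAlgebra.sum_mul_antipode_eq_algebraMap_counit (R := F) r, Bialgebra.comul_algebraMap]
        simp [cone]

lemma conv_nu_comul :
    conv (F := F) (H := H) (nu) (Coalgebra.comul) = cone := by
  ext x
  have r := Coalgebra.Repr.arbitrary F x
  have r1 : ∀ i, Coalgebra.Repr F (r.left i) (H × H) := fun i => Coalgebra.Repr.arbitrary F (r.left i)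
  have r2 : ∀ i, Coalgebra.Repr F (r.right i) (H × H) := fun i => Coalgebra.Repr.arbitrary F (r.right i)
  have r3 : ∀ i j, Coalgebra.Repr F ((r2 i).right j) (H × H) :=
    fun i j => Coalgebra.Repr.arbitrary F ((r2 i).right j)
  have r4 : ∀ i j, Coalgebra.Repr F ((r2 i).left j) (H × H) :=
    fun i j => Coalgebra.Repr.arbitrary F ((r2 i).left j)
  set U1 : H ⊗[F] (H ⊗[F] H) →ₗ[F] H ⊗[F] H :=
    LinearMap.mul' F (H ⊗[F] H) ∘ₗ
      TensorProduct.map (TensorProduct.map S S ∘ₗ (TensorProduct.comm F H H).toLinearMap)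
        Coalgebra.comul ∘ₗ (TensorProduct.assoc F H H H).symm.toLinearMap with hU1
  have hU1t : ∀ u v w : H, U1 (u ⊗ₜ (v ⊗ₜ w)) =
      (S v ⊗ₜ[F] S u) * Coalgebra.comul (R := F) w := by
    intro u v w
    simp [hU1]
  rw [conv_apply _ _ r]
  calc ∑ i ∈ r.index, nu (F := F) (r.left i) * Coalgebra.comul (R := F) (r.right i)
      = ∑ i ∈ r.index, ∑ j ∈ (r1 i).index,
          U1 ((r1 i).left j ⊗ₜ ((r1 i).right j ⊗ₜ r.right i)) := by
        refine Finset.sum_congr rfl fun i _ => ?_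
        rw [nu_apply (r1 i), Finset.sum_mul]
        exact Finset.sum_congr rfl fun j _ => (hU1t _ _ _).symm
    _ = ∑ i ∈ r.index, ∑ j ∈ (r2 i).index,
          U1 (r.left i ⊗ₜ ((r2 i).left j ⊗ₜ (r2 i).right j)) := sum3 r r1 r2 U1
    _ = ∑ i ∈ r.index, (1 : H) ⊗ₜ[F] (S (r.left i) * r.right i) := by
        refine Finset.sum_congr rfl fun i _ => ?_
        set c := r.left i with hc
        set U2 : H ⊗[F] (H ⊗[F] H) →ₗ[F] H ⊗[F] H :=
          LinearMap.mul' F (H ⊗[F] H) ∘ₗ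
            TensorProduct.map ((TensorProduct.mk F H H).flip (S c) ∘ₗ S) LinearMap.id with hU2
        have hU2t : ∀ u v w : H, U2 (u ⊗ₜ (v ⊗ₜ w)) = (S u * v) ⊗ₜ[F] (S c * w) := by
          intro u v w
          simp [hU2, Algebra.TensorProduct.tmul_mul_tmul]
        calc ∑ j ∈ (r2 i).index, U1 (c ⊗ₜ ((r2 i).left j ⊗ₜ (r2 i).right j))
            = ∑ j ∈ (r2 i).index, ∑ m ∈ (r3 i j).index,
                U2 ((r2 i).left j ⊗ₜ ((r3 i j).left m ⊗ₜ (r3 i j).right m)) := by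
              refine Finset.sum_congr rfl fun j _ => ?_
              rw [hU1t]
              calc (S ((r2 i).left j) ⊗ₜ[F] S c) * Coalgebra.comul (R := F) ((r2 i).right j)
                  = ∑ m ∈ (r3 i j).index,
                      (S ((r2 i).left j) ⊗ₜ[F] S c) * ((r3 i j).left m ⊗ₜ (r3 i j).right m) := by
                    rw [← Finset.mul_sum, (r3 i j).eq]
                _ = _ := by
                    refine Finset.sum_congr rfl fun m _ => ?_
                    rw [hU2t, Algebra.TensorProduct.tmul_mul_tmul]
          _ = ∑ j ∈ (r2 i).index, ∑ m ∈ (r4 i j).index,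
                U2 ((r4 i j).left m ⊗ₜ ((r4 i j).right m ⊗ₜ (r2 i).right j)) :=
              (sum3 (r2 i) (r4 i) (r3 i) U2).symm
          _ = ∑ j ∈ (r2 i).index, Coalgebra.counit (R := F) ((r2 i).left j) •
                ((1 : H) ⊗ₜ[F] (S c * (r2 i).right j)) := by
              refine Finset.sum_congr rfl fun j _ => ?_
              calc ∑ m ∈ (r4 i j).index, U2 ((r4 i j).left m ⊗ₜ ((r4 i j).right m ⊗ₜ (r2 i).right j))
                  = (∑ m ∈ (r4 i j).index, S ((r4 i j).left m) * (r4 i j).right m) ⊗ₜ[F]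
                      (S c * (r2 i).right j) := by
                    rw [TensorProduct.sum_tmul]
                    exact Finset.sum_congr rfl fun m _ => hU2t _ _ _
                _ = _ := by
                    rw [HopfAlgebra.sum_antipode_mul_eq_algebraMap_counit (R := F) (r4 i j),
                      Algebra.algebraMap_eq_smul_one, TensorProduct.smul_tmul']
          _ = (1 : H) ⊗ₜ[F] (S c * r.right i) := by
              set W : H →ₗ[F] H ⊗[F] H :=
                TensorProduct.mk F H H 1 ∘ₗ LinearMap.mulLeft F (S c) with hW
              have hWt : ∀ w : H, W w = (1 : H) ⊗ₜ[F] (S c * w) := fun w => rfl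
              calc ∑ j ∈ (r2 i).index, Coalgebra.counit (R := F) ((r2 i).left j) •
                    ((1 : H) ⊗ₜ[F] (S c * (r2 i).right j))
                  = W (∑ j ∈ (r2 i).index,
                      Coalgebra.counit (R := F) ((r2 i).left j) • (r2 i).right j) := by
                    rw [map_sum]
                    exact Finset.sum_congr rfl fun j _ => by rw [map_smul, hWt]
                _ = _ := by rw [sum_counit_smul_right (r2 i), hWt]
    _ = cone x := by
        rw [← TensorProduct.tmul_sum, HopfAlgebra.sum_antipode_mul_eq_algebraMap_counit (R := F) r]
        simp [cone, Algebra.TensorProduct.one_def, Algebra.TensorProduct.algebraMap_apply,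
          Algebra.algebraMap_eq_smul_one]

lemma comul_antipode :
    Coalgebra.comul (R := F) (A := H) ∘ₗ S = nu (F := F) (H := H) := by
  calc Coalgebra.comul (R := F) (A := H) ∘ₗ S
      = conv cone (Coalgebra.comul ∘ₗ S) := (conv_cone_left _).symm
    _ = conv (conv (nu) Coalgebra.comul) (Coalgebra.comul ∘ₗ S) := by rw [conv_nu_comul]
    _ = conv (nu) (conv Coalgebra.comul (Coalgebra.comul ∘ₗ S)) := conv_assoc _ _ _
    _ = conv (nu) cone := by rw [conv_comul_comulS]
    _ = nu := conv_cone_right _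

lemma comul_antipode_repr {ι : Type*} {x : H} (r : Coalgebra.Repr F x ι) :
    Coalgebra.comul (R := F) (S x) = ∑ i ∈ r.index, S (r.right i) ⊗ₜ[F] S (r.left i) := by
  have h := congrFun (congrArg DFunLike.coe (comul_antipode (F := F) (H := H))) x
  simp only [LinearMap.comp_apply] at h
  rw [h, nu_apply r]

end AntiComul

lemma sum4_comm {M : Type*} [AddCommMonoid M] {ι κ : Type*} {ι' : ι → Type*} {κ' : κ → Type*}
    (s : Finset ι) (t : ∀ i, Finset (ι' i)) (u : Finset κ) (v : ∀ k, Finset (κ' k))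
    (f : (i : ι) → ι' i → (k : κ) → κ' k → M) :
    ∑ i ∈ s, ∑ j ∈ t i, ∑ k ∈ u, ∑ l ∈ v k, f i j k l
      = ∑ k ∈ u, ∑ l ∈ v k, ∑ i ∈ s, ∑ j ∈ t i, f i j k l := by
  calc ∑ i ∈ s, ∑ j ∈ t i, ∑ k ∈ u, ∑ l ∈ v k, f i j k l
      = ∑ p ∈ s.sigma t, ∑ k ∈ u, ∑ l ∈ v k, f p.1 p.2 k l :=
        (Finset.sum_sigma s t fun p => ∑ k ∈ u, ∑ l ∈ v k, f p.1 p.2 k l).symm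
    _ = ∑ p ∈ s.sigma t, ∑ q ∈ u.sigma v, f p.1 p.2 q.1 q.2 :=
        Finset.sum_congr rfl fun p _ =>
          (Finset.sum_sigma u v fun q => f p.1 p.2 q.1 q.2).symm
    _ = ∑ q ∈ u.sigma v, ∑ p ∈ s.sigma t, f p.1 p.2 q.1 q.2 := Finset.sum_comm
    _ = ∑ q ∈ u.sigma v, ∑ i ∈ s, ∑ j ∈ t i, f i j q.1 q.2 :=
        Finset.sum_congr rfl fun q _ => Finset.sum_sigma s t fun p => f p.1 p.2 q.1 q.2
    _ = _ := Finset.sum_sigma u v fun q => ∑ i ∈ s, ∑ j ∈ t i, f i j q.1 q.2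

lemma antipode_mul (a b : H) : S (a * b) = S b * S a := by
  have ra := Coalgebra.Repr.arbitrary F a
  have rb := Coalgebra.Repr.arbitrary F b
  have ra1 : ∀ i, Coalgebra.Repr F (ra.left i) (H × H) := fun i => Coalgebra.Repr.arbitrary F (ra.left i)
  have ra2 : ∀ i, Coalgebra.Repr F (ra.right i) (H × H) := fun i => Coalgebra.Repr.arbitrary F (ra.right i)
  have rb1 : ∀ k, Coalgebra.Repr F (rb.left k) (H × H) := fun k => Coalgebra.Repr.arbitrary F (rb.left k)
  have rb2 : ∀ k, Coalgebra.Repr F (rb.right k) (H × H) := fun k => Coalgebra.Repr.arbitrary F (rb.right k)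
  -- the magic element, in the (a₁, Δa₂), (b₁, Δb₂) presentation
  set X : H := ∑ i ∈ ra.index, ∑ j ∈ (ra2 i).index, ∑ k ∈ rb.index, ∑ l ∈ (rb2 k).index,
      S (ra.left i * rb.left k) *
        ((ra2 i).left j * (((rb2 k).left l * S ((rb2 k).right l)) * S ((ra2 i).right j)))
    with hX
  -- Evaluation 1 : X = S (a * b)
  have evalA : X = S (a * b) := by
    calc X = ∑ i ∈ ra.index, ∑ j ∈ (ra2 i).index, ∑ k ∈ rb.index,
          Coalgebra.counit (R := F) (rb.right k) •
            (S (ra.left i * rb.left k) * ((ra2 i).left j * S ((ra2 i).right j))) := by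
          rw [hX]
          refine Finset.sum_congr rfl fun i _ => Finset.sum_congr rfl fun j _ =>
            Finset.sum_congr rfl fun k _ => ?_
          set T : H →ₗ[F] H := LinearMap.mulLeft F (S (ra.left i * rb.left k)) ∘ₗ
            LinearMap.mulLeft F ((ra2 i).left j) ∘ₗ
            LinearMap.mulRight F (S ((ra2 i).right j)) with hT
          have hTt : ∀ w, T w = S (ra.left i * rb.left k) *
              ((ra2 i).left j * (w * S ((ra2 i).right j))) := fun w => rfl
          calc ∑ l ∈ (rb2 k).index, S (ra.left i * rb.left k) *
                ((ra2 i).left j * (((rb2 k).left l * S ((rb2 k).right l)) * S ((ra2 i).right j)))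
              = T (∑ l ∈ (rb2 k).index, (rb2 k).left l * S ((rb2 k).right l)) := by
                rw [map_sum]; exact Finset.sum_congr rfl fun l _ => (hTt _).symm
            _ = _ := by
                rw [HopfAlgebra.sum_mul_antipode_eq_algebraMap_counit (R := F) (rb2 k),
                  Algebra.algebraMap_eq_smul_one, map_smul, hTt]
                simp
      _ = ∑ i ∈ ra.index, ∑ j ∈ (ra2 i).index,
            S (ra.left i * b) * ((ra2 i).left j * S ((ra2 i).right j)) := by
          refine Finset.sum_congr rfl fun i _ => Finset.sum_congr rfl fun j _ => ?_
          set T2 : H →ₗ[F] H :=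
            LinearMap.mulRight F ((ra2 i).left j * S ((ra2 i).right j)) ∘ₗ S ∘ₗ
              LinearMap.mulLeft F (ra.left i) with hT2
          have hT2t : ∀ w, T2 w = S (ra.left i * w) *
              ((ra2 i).left j * S ((ra2 i).right j)) := fun w => rfl
          calc ∑ k ∈ rb.index, Coalgebra.counit (R := F) (rb.right k) •
                (S (ra.left i * rb.left k) * ((ra2 i).left j * S ((ra2 i).right j)))
              = T2 (∑ k ∈ rb.index, Coalgebra.counit (R := F) (rb.right k) • rb.left k) := by
                rw [map_sum]
                exact Finset.sum_congr rfl fun k _ => by rw [map_smul, hT2t]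
            _ = _ := by rw [sum_counit_smul_left rb, hT2t]
      _ = ∑ i ∈ ra.index, Coalgebra.counit (R := F) (ra.right i) • S (ra.left i * b) := by
          refine Finset.sum_congr rfl fun i _ => ?_
          rw [← Finset.mul_sum, HopfAlgebra.sum_mul_antipode_eq_algebraMap_counit (R := F) (ra2 i),
            Algebra.algebraMap_eq_smul_one]
          simp
      _ = S (a * b) := by
          set T3 : H →ₗ[F] H := S ∘ₗ LinearMap.mulRight F b with hT3
          have hT3t : ∀ w, T3 w = S (w * b) := fun w => rfl
          calc ∑ i ∈ ra.index, Coalgebra.counit (R := F) (ra.right i) • S (ra.left i * b)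
              = T3 (∑ i ∈ ra.index, Coalgebra.counit (R := F) (ra.right i) • ra.left i) := by
                rw [map_sum]
                exact Finset.sum_congr rfl fun i _ => by rw [map_smul, hT3t]
            _ = _ := by rw [sum_counit_smul_left ra, hT3t]
  -- move a to the (Δa₁, a₂) presentation
  set U : H ⊗[F] (H ⊗[F] H) →ₗ[F] H := ∑ k ∈ rb.index, ∑ l ∈ (rb2 k).index,
      mulT (F := F) H ∘ₗ TensorProduct.map (S ∘ₗ LinearMap.mulRight F (rb.left k))
        (TensorProduct.map LinearMap.id
          (LinearMap.mulLeft F ((rb2 k).left l * S ((rb2 k).right l)) ∘ₗ S)) with hU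
  have hUt : ∀ u v w : H, U (u ⊗ₜ (v ⊗ₜ w)) = ∑ k ∈ rb.index, ∑ l ∈ (rb2 k).index,
      S (u * rb.left k) * (v * (((rb2 k).left l * S ((rb2 k).right l)) * S w)) := by
    intro u v w
    rw [hU, LinearMap.sum_apply]
    refine Finset.sum_congr rfl fun k _ => ?_
    rw [LinearMap.sum_apply]
    refine Finset.sum_congr rfl fun l _ => ?_
    simp [mul_assoc]
  have moveA : X = ∑ i ∈ ra.index, ∑ j ∈ (ra1 i).index, ∑ k ∈ rb.index, ∑ l ∈ (rb2 k).index,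
      S ((ra1 i).left j * rb.left k) *
        ((ra1 i).right j * (((rb2 k).left l * S ((rb2 k).right l)) * S (ra.right i))) := by
    have key := sum3 ra ra1 ra2 U
    rw [hX]
    calc ∑ i ∈ ra.index, ∑ j ∈ (ra2 i).index, ∑ k ∈ rb.index, ∑ l ∈ (rb2 k).index,
          S (ra.left i * rb.left k) *
            ((ra2 i).left j * (((rb2 k).left l * S ((rb2 k).right l)) * S ((ra2 i).right j)))
        = ∑ i ∈ ra.index, ∑ j ∈ (ra2 i).index,
            U (ra.left i ⊗ₜ ((ra2 i).left j ⊗ₜ (ra2 i).right j)) := by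
          exact Finset.sum_congr rfl fun i _ => Finset.sum_congr rfl fun j _ => (hUt _ _ _).symm
      _ = ∑ i ∈ ra.index, ∑ j ∈ (ra1 i).index,
            U ((ra1 i).left j ⊗ₜ ((ra1 i).right j ⊗ₜ ra.right i)) := key.symm
      _ = _ := Finset.sum_congr rfl fun i _ => Finset.sum_congr rfl fun j _ => hUt _ _ _
  -- move b to the (Δb₁, b₂) presentation
  set V : H ⊗[F] (H ⊗[F] H) →ₗ[F] H := ∑ i ∈ ra.index, ∑ j ∈ (ra1 i).index,
      mulT (F := F) H ∘ₗ TensorProduct.map (S ∘ₗ LinearMap.mulLeft F ((ra1 i).left j))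
        (TensorProduct.map (LinearMap.mulLeft F ((ra1 i).right j))
          (LinearMap.mulRight F (S (ra.right i)) ∘ₗ S)) with hV
  have hVt : ∀ u v w : H, V (u ⊗ₜ (v ⊗ₜ w)) = ∑ i ∈ ra.index, ∑ j ∈ (ra1 i).index,
      S ((ra1 i).left j * u) * (((ra1 i).right j * v) * (S w * S (ra.right i))) := by
    intro u v w
    rw [hV, LinearMap.sum_apply]
    refine Finset.sum_congr rfl fun i _ => ?_
    rw [LinearMap.sum_apply]
    refine Finset.sum_congr rfl fun j _ => ?_
    simp [mul_assoc]
  have moveB : X = ∑ k ∈ rb.index, ∑ l ∈ (rb1 k).index, ∑ i ∈ ra.index, ∑ j ∈ (ra1 i).index,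
      S ((ra1 i).left j * (rb1 k).left l) *
        (((ra1 i).right j * (rb1 k).right l) * (S (rb.right k) * S (ra.right i))) := by
    have key := sum3 rb rb1 rb2 V
    rw [moveA]
    calc ∑ i ∈ ra.index, ∑ j ∈ (ra1 i).index, ∑ k ∈ rb.index, ∑ l ∈ (rb2 k).index,
          S ((ra1 i).left j * rb.left k) *
            ((ra1 i).right j * (((rb2 k).left l * S ((rb2 k).right l)) * S (ra.right i)))
        = ∑ k ∈ rb.index, ∑ l ∈ (rb2 k).index, ∑ i ∈ ra.index, ∑ j ∈ (ra1 i).index,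
            S ((ra1 i).left j * rb.left k) *
              ((ra1 i).right j * (((rb2 k).left l * S ((rb2 k).right l)) * S (ra.right i))) :=
          sum4_comm _ _ _ _ _
      _ = ∑ k ∈ rb.index, ∑ l ∈ (rb2 k).index,
            V (rb.left k ⊗ₜ ((rb2 k).left l ⊗ₜ (rb2 k).right l)) := by
          refine Finset.sum_congr rfl fun k _ => Finset.sum_congr rfl fun l _ => ?_
          rw [hVt]
          refine Finset.sum_congr rfl fun i _ => Finset.sum_congr rfl fun j _ => ?_
          simp [mul_assoc]
      _ = ∑ k ∈ rb.index, ∑ l ∈ (rb1 k).index,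
            V ((rb1 k).left l ⊗ₜ ((rb1 k).right l ⊗ₜ rb.right k)) := key.symm
      _ = _ := by
          refine Finset.sum_congr rfl fun k _ => Finset.sum_congr rfl fun l _ => ?_
          rw [hVt]
  -- Evaluation 2 : X = S b * S a
  have evalB : X = S b * S a := by
    rw [moveB]
    calc ∑ k ∈ rb.index, ∑ l ∈ (rb1 k).index, ∑ i ∈ ra.index, ∑ j ∈ (ra1 i).index,
          S ((ra1 i).left j * (rb1 k).left l) *
            (((ra1 i).right j * (rb1 k).right l) * (S (rb.right k) * S (ra.right i)))
        = ∑ i ∈ ra.index, ∑ j ∈ (ra1 i).index, ∑ k ∈ rb.index, ∑ l ∈ (rb1 k).index,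
            S ((ra1 i).left j * (rb1 k).left l) *
              (((ra1 i).right j * (rb1 k).right l) * (S (rb.right k) * S (ra.right i))) :=
          sum4_comm _ _ _ _ _
      _ = ∑ i ∈ ra.index, ∑ k ∈ rb.index, ∑ j ∈ (ra1 i).index, ∑ l ∈ (rb1 k).index,
            S ((ra1 i).left j * (rb1 k).left l) *
              (((ra1 i).right j * (rb1 k).right l) * (S (rb.right k) * S (ra.right i))) :=
          Finset.sum_congr rfl fun i _ => Finset.sum_comm
      _ = ∑ i ∈ ra.index, ∑ k ∈ rb.index,
            (Coalgebra.counit (R := F) (ra.left i) * Coalgebra.counit (R := F) (rb.left k)) •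
              (S (rb.right k) * S (ra.right i)) := by
          refine Finset.sum_congr rfl fun i _ => Finset.sum_congr rfl fun k _ => ?_
          have e := HopfAlgebra.sum_antipode_mul_eq_algebraMap_counit (R := F) (reprMul (ra1 i) (rb1 k))
          simp only [reprMul_index, reprMul_left, reprMul_right] at e
          have e2 : ∑ j ∈ (ra1 i).index, ∑ l ∈ (rb1 k).index,
              S ((ra1 i).left j * (rb1 k).left l) * ((ra1 i).right j * (rb1 k).right l)
              = algebraMap F H
                  (Coalgebra.counit (R := F) (ra.left i * rb.left k)) := by
            rw [← Finset.sum_product']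
            exact e
          calc ∑ j ∈ (ra1 i).index, ∑ l ∈ (rb1 k).index,
                S ((ra1 i).left j * (rb1 k).left l) *
                  (((ra1 i).right j * (rb1 k).right l) * (S (rb.right k) * S (ra.right i)))
              = (∑ j ∈ (ra1 i).index, ∑ l ∈ (rb1 k).index,
                  S ((ra1 i).left j * (rb1 k).left l) * ((ra1 i).right j * (rb1 k).right l)) *
                  (S (rb.right k) * S (ra.right i)) := by
                rw [Finset.sum_mul]
                refine Finset.sum_congr rfl fun j _ => ?_
                rw [Finset.sum_mul]
                exact Finset.sum_congr rfl fun l _ => (mul_assoc _ _ _).symm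
            _ = _ := by
                rw [e2, Bialgebra.counit_mul,
                  Algebra.algebraMap_eq_smul_one, smul_mul_assoc, one_mul]
      _ = ∑ i ∈ ra.index, Coalgebra.counit (R := F) (ra.left i) • (S b * S (ra.right i)) := by
          refine Finset.sum_congr rfl fun i _ => ?_
          set T4 : H →ₗ[F] H := LinearMap.mulRight F (S (ra.right i)) ∘ₗ S with hT4
          have hT4t : ∀ w, T4 w = S w * S (ra.right i) := fun w => rfl
          calc ∑ k ∈ rb.index,
                (Coalgebra.counit (R := F) (ra.left i) * Coalgebra.counit (R := F) (rb.left k)) •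
                  (S (rb.right k) * S (ra.right i))
              = Coalgebra.counit (R := F) (ra.left i) •
                  T4 (∑ k ∈ rb.index, Coalgebra.counit (R := F) (rb.left k) • rb.right k) := by
                rw [map_sum, Finset.smul_sum]
                exact Finset.sum_congr rfl fun k _ => by
                  rw [map_smul, hT4t, mul_smul]
            _ = _ := by rw [sum_counit_smul_right rb, hT4t]
      _ = S b * S a := by
          set T5 : H →ₗ[F] H := LinearMap.mulLeft F (S b) ∘ₗ S with hT5
          have hT5t : ∀ w, T5 w = S b * S w := fun w => rfl
          calc ∑ i ∈ ra.index, Coalgebra.counit (R := F) (ra.left i) • (S b * S (ra.right i))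
              = T5 (∑ i ∈ ra.index, Coalgebra.counit (R := F) (ra.left i) • ra.right i) := by
                rw [map_sum]
                exact Finset.sum_congr rfl fun i _ => by rw [map_smul, hT5t]
            _ = _ := by rw [sum_counit_smul_right ra, hT5t]
  rw [← evalA, evalB]

section SiLemmas

variable {Si : H →ₗ[F] H}

lemma Si_mul (hS1 : ∀ z : H, Si (S z) = z) (hS2 : ∀ z : H, S (Si z) = z) (a b : H) :
    Si (a * b) = Si b * Si a := by
  have h : a * b = S (Si b * Si a) := by rw [antipode_mul, hS2, hS2]
  rw [h, hS1]

lemma counit_Si (hS2 : ∀ z : H, S (Si z) = z) (x : H) :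
    Coalgebra.counit (R := F) (Si x) = Coalgebra.counit (R := F) x := by
  conv_rhs => rw [← hS2 x, counit_antipode]

lemma comul_Si_repr (hS1 : ∀ z : H, Si (S z) = z) (hS2 : ∀ z : H, S (Si z) = z)
    {ι : Type*} {c : H} (rc : Coalgebra.Repr F c ι) :
    Coalgebra.comul (R := F) (Si c) = ∑ i ∈ rc.index, Si (rc.right i) ⊗ₜ[F] Si (rc.left i) := by
  set Φ : H ⊗[F] H →ₗ[F] H ⊗[F] H :=
    TensorProduct.map S S ∘ₗ (TensorProduct.comm F H H).toLinearMap with hΦ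
  set Ψ : H ⊗[F] H →ₗ[F] H ⊗[F] H :=
    (TensorProduct.comm F H H).toLinearMap ∘ₗ TensorProduct.map Si Si with hΨ
  have hinj : Function.Injective Φ := by
    have hcomp : ∀ t : H ⊗[F] H, Ψ (Φ t) = t := by
      intro t
      have : Ψ ∘ₗ Φ = LinearMap.id := by
        apply TensorProduct.ext'
        intro u v
        simp [hΦ, hΨ, hS1]
      calc Ψ (Φ t) = (Ψ ∘ₗ Φ) t := rfl
        _ = t := by rw [this]; rfl
    exact Function.LeftInverse.injective hcomp
  apply hinj
  have h1 : Φ (Coalgebra.comul (R := F) (Si c)) = Coalgebra.comul (R := F) c := by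
    have hnu := congrFun (congrArg DFunLike.coe (comul_antipode (F := F) (H := H))) (Si c)
    simp only [LinearMap.comp_apply] at hnu
    calc Φ (Coalgebra.comul (R := F) (Si c))
        = nu (F := F) (Si c) := by simp [hΦ, nu]
      _ = Coalgebra.comul (R := F) (S (Si c)) := by rw [← hnu]
      _ = Coalgebra.comul (R := F) c := by rw [hS2]
  rw [h1, map_sum]
  calc Coalgebra.comul (R := F) c
      = ∑ i ∈ rc.index, rc.left i ⊗ₜ[F] rc.right i := rc.eq.symm
    _ = _ := by
      refine Finset.sum_congr rfl fun i _ => ?_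
      simp [hΦ, hS2]

/-- the representation of `Si c` obtained by flipping a representation of `c` -/
def SiRepr (hS1 : ∀ z : H, Si (S z) = z) (hS2 : ∀ z : H, S (Si z) = z)
    {ι : Type*} {c : H} (rc : Coalgebra.Repr F c ι) : Coalgebra.Repr F (Si c) ι where
  index := rc.index
  left := fun i => Si (rc.right i)
  right := fun i => Si (rc.left i)
  eq := (comul_Si_repr hS1 hS2 rc).symm

@[simp] lemma SiRepr_index (hS1 : ∀ z : H, Si (S z) = z) (hS2 : ∀ z : H, S (Si z) = z)
    {ι : Type*} {c : H} (rc : Coalgebra.Repr F c ι) : (SiRepr hS1 hS2 rc).index = rc.index := rfl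
@[simp] lemma SiRepr_left (hS1 : ∀ z : H, Si (S z) = z) (hS2 : ∀ z : H, S (Si z) = z)
    {ι : Type*} {c : H} (rc : Coalgebra.Repr F c ι) (i) : (SiRepr hS1 hS2 rc).left i = Si (rc.right i) := rfl
@[simp] lemma SiRepr_right (hS1 : ∀ z : H, Si (S z) = z) (hS2 : ∀ z : H, S (Si z) = z)
    {ι : Type*} {c : H} (rc : Coalgebra.Repr F c ι) (i) : (SiRepr hS1 hS2 rc).right i = Si (rc.left i) := rfl

end SiLemmas

section IntegralPhi

variable {φ : H →ₗ[F] F}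

lemma hphi_sum
    (hφ : ∀ x : H, TensorProduct.rid F H
        (TensorProduct.map (LinearMap.id : H →ₗ[F] H) φ (Coalgebra.comul (R := F) x))
        = φ x • (1 : H))
    {ι : Type*} {x : H} (r : Coalgebra.Repr F x ι) :
    ∑ i ∈ r.index, φ (r.right i) • r.left i = φ x • (1 : H) := by
  have h := hφ x
  rw [← r.eq] at h
  simp only [map_sum, TensorProduct.map_tmul, TensorProduct.rid_tmul, LinearMap.id_coe,
    id_eq] at h
  exact h

lemma hphi_prod
    (hφ : ∀ x : H, TensorProduct.rid F H
        (TensorProduct.map (LinearMap.id : H →ₗ[F] H) φ (Coalgebra.comul (R := F) x))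
        = φ x • (1 : H))
    {ι κ : Type*} {x y : H} (rx : Coalgebra.Repr F x ι) (ry : Coalgebra.Repr F y κ) :
    ∑ i ∈ rx.index, ∑ j ∈ ry.index,
        φ (rx.right i * ry.right j) • (rx.left i * ry.left j) = φ (x * y) • (1 : H) := by
  have e := hphi_sum hφ (reprMul rx ry)
  simp only [reprMul_index, reprMul_left, reprMul_right] at e
  rw [← Finset.sum_product']
  exact e

/-- the fundamental integral identity `Σ y₁ φ(x y₂) = Σ S(x₁) φ(x₂ y)` -/
lemma idA
    (hφ : ∀ x : H, TensorProduct.rid F H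
        (TensorProduct.map (LinearMap.id : H →ₗ[F] H) φ (Coalgebra.comul (R := F) x))
        = φ x • (1 : H))
    {ι κ : Type*} (x y : H) (rx : Coalgebra.Repr F x ι) (ry : Coalgebra.Repr F y κ) :
    ∑ j ∈ ry.index, φ (x * ry.right j) • ry.left j
      = ∑ i ∈ rx.index, φ (rx.right i * y) • S (rx.left i) := by
  have rx1 : ∀ i, Coalgebra.Repr F (rx.left i) (H × H) := fun i => Coalgebra.Repr.arbitrary F (rx.left i)
  have rx2 : ∀ i, Coalgebra.Repr F (rx.right i) (H × H) := fun i => Coalgebra.Repr.arbitrary F (rx.right i)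
  set U : H ⊗[F] (H ⊗[F] H) →ₗ[F] H := ∑ k ∈ ry.index,
      mulT (F := F) H ∘ₗ
        TensorProduct.map S
          (TensorProduct.map (LinearMap.mulRight F (ry.left k))
            ((φ ∘ₗ LinearMap.mulRight F (ry.right k)).smulRight (1 : H))) with hU
  have hUt : ∀ u v w : H, U (u ⊗ₜ (v ⊗ₜ w)) = ∑ k ∈ ry.index,
      φ (w * ry.right k) • (S u * (v * ry.left k)) := by
    intro u v w
    rw [hU, LinearMap.sum_apply]
    refine Finset.sum_congr rfl fun k _ => ?_
    simp [mul_smul_comm]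
  calc ∑ j ∈ ry.index, φ (x * ry.right j) • ry.left j
      = ∑ j ∈ ry.index,
          φ ((∑ i ∈ rx.index, Coalgebra.counit (R := F) (rx.left i) • rx.right i) * ry.right j)
            • ry.left j := by rw [sum_counit_smul_right rx]
    _ = ∑ j ∈ ry.index, ∑ i ∈ rx.index,
          (Coalgebra.counit (R := F) (rx.left i) * φ (rx.right i * ry.right j)) • ry.left j := by
        refine Finset.sum_congr rfl fun j _ => ?_
        rw [Finset.sum_mul]
        simp only [smul_mul_assoc, map_sum, map_smul, smul_eq_mul]
        rw [Finset.sum_smul]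
    _ = ∑ i ∈ rx.index, ∑ j ∈ ry.index,
          (Coalgebra.counit (R := F) (rx.left i) * φ (rx.right i * ry.right j)) • ry.left j :=
        Finset.sum_comm
    _ = ∑ i ∈ rx.index, ∑ j ∈ (rx1 i).index,
          U ((rx1 i).left j ⊗ₜ ((rx1 i).right j ⊗ₜ rx.right i)) := by
        refine Finset.sum_congr rfl fun i _ => ?_
        have ecol := HopfAlgebra.sum_antipode_mul_eq_algebraMap_counit (R := F) (rx1 i)
        calc ∑ k ∈ ry.index,
              (Coalgebra.counit (R := F) (rx.left i) * φ (rx.right i * ry.right k)) • ry.left k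
            = ∑ k ∈ ry.index, φ (rx.right i * ry.right k) •
                ((∑ j ∈ (rx1 i).index, S ((rx1 i).left j) * (rx1 i).right j) * ry.left k) := by
              refine Finset.sum_congr rfl fun k _ => ?_
              rw [ecol, Algebra.algebraMap_eq_smul_one, smul_mul_assoc, one_mul, smul_smul,
                mul_comm]
          _ = ∑ k ∈ ry.index, ∑ j ∈ (rx1 i).index, φ (rx.right i * ry.right k) •
                (S ((rx1 i).left j) * ((rx1 i).right j * ry.left k)) := by
              refine Finset.sum_congr rfl fun k _ => ?_
              rw [Finset.sum_mul, Finset.smul_sum]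
              exact Finset.sum_congr rfl fun j _ => by rw [mul_assoc]
          _ = ∑ j ∈ (rx1 i).index, ∑ k ∈ ry.index, φ (rx.right i * ry.right k) •
                (S ((rx1 i).left j) * ((rx1 i).right j * ry.left k)) := Finset.sum_comm
          _ = _ := by
              refine Finset.sum_congr rfl fun j _ => ?_
              rw [hUt]
    _ = ∑ i ∈ rx.index, ∑ j ∈ (rx2 i).index,
          U (rx.left i ⊗ₜ ((rx2 i).left j ⊗ₜ (rx2 i).right j)) := sum3 rx rx1 rx2 U
    _ = ∑ i ∈ rx.index, φ (rx.right i * y) • S (rx.left i) := by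
        refine Finset.sum_congr rfl fun i _ => ?_
        calc ∑ j ∈ (rx2 i).index, U (rx.left i ⊗ₜ ((rx2 i).left j ⊗ₜ (rx2 i).right j))
            = ∑ j ∈ (rx2 i).index, ∑ k ∈ ry.index,
                φ ((rx2 i).right j * ry.right k) •
                  (S (rx.left i) * ((rx2 i).left j * ry.left k)) := by
              refine Finset.sum_congr rfl fun j _ => ?_
              rw [hUt]
          _ = S (rx.left i) * ∑ j ∈ (rx2 i).index, ∑ k ∈ ry.index,
                φ ((rx2 i).right j * ry.right k) • ((rx2 i).left j * ry.left k) := by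
              rw [Finset.mul_sum]
              refine Finset.sum_congr rfl fun j _ => ?_
              rw [Finset.mul_sum]
              exact Finset.sum_congr rfl fun k _ => (mul_smul_comm _ _ _).symm
          _ = _ := by
              rw [hphi_prod hφ (rx2 i) ry, mul_smul_comm, mul_one]

end IntegralPhi
end HopfIntegralAux

open Coalgebra HopfIntegralAux

/-- For a finite-dimensional Hopf algebra `H` with non-zero left integrals `Λ ∈ H` and
`φ ∈ Ĥ` normalized by `φ(Λ) = 1`, the map `m̃(a ⊗ b) = a₍₁₎ φ(S⁻¹(b) a₍₂₎)` is associative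
and `Λ` is a two-sided unit for it. -/
theorem integral_multiplication_assoc_and_unit
    (F H : Type*) [Field F] [Ring H] [HopfAlgebra F H] [FiniteDimensional F H]
    (Λ : H) (hΛ0 : Λ ≠ 0)
    (hΛ : ∀ x : H, x * Λ = Coalgebra.counit (R := F) x • Λ)
    (φ : H →ₗ[F] F) (hφ0 : φ ≠ 0)
    (hφ : ∀ x : H,
      TensorProduct.rid F H
        (TensorProduct.map (LinearMap.id : H →ₗ[F] H) φ (Coalgebra.comul (R := F) x))
        = φ x • (1 : H))
    (hnorm : φ Λ = 1)
    (Si : H →ₗ[F] H)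
    (hSi₁ : Si ∘ₗ HopfAlgebra.antipode (R := F) = (LinearMap.id : H →ₗ[F] H))
    (hSi₂ : HopfAlgebra.antipode (R := F) ∘ₗ Si = (LinearMap.id : H →ₗ[F] H))
    (mt : H → H → H)
    (hmt : ∀ a b : H, mt a b =
      TensorProduct.rid F H
        (TensorProduct.map (LinearMap.id : H →ₗ[F] H) (φ ∘ₗ LinearMap.mulLeft F (Si b))
          (Coalgebra.comul (R := F) a))) :
    (∀ a b c : H, mt (mt a b) c = mt a (mt b c)) ∧
    (∀ a : H, mt Λ a = a ∧ mt a Λ = a) := by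
  classical
  have hS1 : ∀ z : H, Si (HopfAlgebra.antipode (R := F) z) = z := fun z => by
    have h := congrFun (congrArg DFunLike.coe hSi₁) z
    simpa using h
  have hS2 : ∀ z : H, HopfAlgebra.antipode (R := F) (Si z) = z := fun z => by
    have h := congrFun (congrArg DFunLike.coe hSi₂) z
    simpa using h
  -- sum form of mt
  have mt_sum : ∀ (a b : H) (r : Coalgebra.Repr F a (H × H)),
      mt a b = ∑ i ∈ r.index, φ (Si b * r.right i) • r.left i := by
    intro a b r
    rw [hmt, ← r.eq]
    simp only [map_sum, TensorProduct.map_tmul, TensorProduct.rid_tmul, LinearMap.id_coe,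
      id_eq, LinearMap.comp_apply, LinearMap.mulLeft_apply]
  -- mt is linear in its first argument
  have hLc : ∀ c : H, ∃ L : H →ₗ[F] H, ∀ a, mt a c = L a := by
    intro c
    refine ⟨(TensorProduct.rid F H).toLinearMap ∘ₗ
      TensorProduct.map (LinearMap.id : H →ₗ[F] H) (φ ∘ₗ LinearMap.mulLeft F (Si c)) ∘ₗ
      Coalgebra.comul, fun a => ?_⟩
    rw [hmt]
    rfl
  have rΛ := Coalgebra.Repr.arbitrary F Λ
  have hxΛ : ∀ x : H, φ (x * Λ) = Coalgebra.counit (R := F) x := fun x => by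
    rw [hΛ x, map_smul, hnorm, smul_eq_mul, mul_one]
  have keyI : ∀ x : H, ∑ j ∈ rΛ.index, φ (x * rΛ.right j) • rΛ.left j
      = HopfAlgebra.antipode (R := F) x := by
    intro x
    have rx := Coalgebra.Repr.arbitrary F x
    rw [HopfIntegralAux.idA hφ x Λ rx rΛ]
    calc ∑ i ∈ rx.index, φ (rx.right i * Λ) • HopfAlgebra.antipode (R := F) (rx.left i)
        = ∑ i ∈ rx.index, Coalgebra.counit (R := F) (rx.right i) •
            HopfAlgebra.antipode (R := F) (rx.left i) := by
          exact Finset.sum_congr rfl fun i _ => by rw [hxΛ]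
      _ = HopfAlgebra.antipode (R := F)
            (∑ i ∈ rx.index, Coalgebra.counit (R := F) (rx.right i) • rx.left i) := by
          rw [map_sum]
          exact Finset.sum_congr rfl fun i _ => (map_smul _ _ _).symm
      _ = HopfAlgebra.antipode (R := F) x := by rw [sum_counit_smul_left rx]
  have hSiΛmul : ∀ z : H, Si Λ * z = Coalgebra.counit (R := F) z • Si Λ := fun z => by
    have h1 : Si Λ * z = Si (HopfAlgebra.antipode (R := F) z * Λ) := by
      rw [HopfIntegralAux.Si_mul hS1 hS2, hS1]
    rw [h1, hΛ (HopfAlgebra.antipode (R := F) z), HopfIntegralAux.counit_antipode, map_smul]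
  have hφSiΛz : ∀ z : H, φ (Si Λ * z) = Coalgebra.counit (R := F) z * φ (Si Λ) := fun z => by
    rw [hSiΛmul, map_smul, smul_eq_mul]
  have hφSiΛ : φ (Si Λ) = 1 := by
    have h := keyI (Si Λ)
    rw [hS2] at h
    have h2 : ∑ j ∈ rΛ.index, φ (Si Λ * rΛ.right j) • rΛ.left j = φ (Si Λ) • Λ := by
      calc ∑ j ∈ rΛ.index, φ (Si Λ * rΛ.right j) • rΛ.left j
          = ∑ j ∈ rΛ.index, φ (Si Λ) •
              (Coalgebra.counit (R := F) (rΛ.right j) • rΛ.left j) := by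
            refine Finset.sum_congr rfl fun j _ => ?_
            rw [hφSiΛz, smul_smul, mul_comm]
        _ = φ (Si Λ) • ∑ j ∈ rΛ.index, Coalgebra.counit (R := F) (rΛ.right j) • rΛ.left j := by
            rw [Finset.smul_sum]
        _ = φ (Si Λ) • Λ := by rw [sum_counit_smul_left rΛ]
    rw [h2] at h
    have h3 : (φ (Si Λ) - 1) • Λ = 0 := by rw [sub_smul, one_smul, h, sub_self]
    rcases smul_eq_zero.mp h3 with h4 | h4
    · exact sub_eq_zero.mp h4
    · exact absurd h4 hΛ0
  -- units
  have unitL : ∀ a : H, mt Λ a = a := fun a => by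
    rw [mt_sum Λ a rΛ, keyI (Si a), hS2]
  have unitR : ∀ a : H, mt a Λ = a := fun a => by
    have ra := Coalgebra.Repr.arbitrary F a
    rw [mt_sum a Λ ra]
    calc ∑ i ∈ ra.index, φ (Si Λ * ra.right i) • ra.left i
        = ∑ i ∈ ra.index, Coalgebra.counit (R := F) (ra.right i) • ra.left i := by
          refine Finset.sum_congr rfl fun i _ => ?_
          rw [hφSiΛz, hφSiΛ, mul_one]
      _ = a := sum_counit_smul_left ra
  -- associativity
  have star : ∀ (b c z : H) (rb : Coalgebra.Repr F b (H × H)) (rz : Coalgebra.Repr F z (H × H)),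
      ∑ j ∈ rz.index, φ (Si c * rz.left j) * φ (Si b * rz.right j)
        = ∑ k ∈ rb.index, φ (Si c * rb.right k) * φ (Si (rb.left k) * z) := by
    intro b c z rb rz
    have hin := HopfIntegralAux.idA hφ (Si b) z (SiRepr hS1 hS2 rb) rz
    simp only [SiRepr_index, SiRepr_left, SiRepr_right, hS2] at hin
    calc ∑ j ∈ rz.index, φ (Si c * rz.left j) * φ (Si b * rz.right j)
        = φ (Si c * ∑ j ∈ rz.index, φ (Si b * rz.right j) • rz.left j) := by
          rw [Finset.mul_sum, map_sum]
          exact Finset.sum_congr rfl fun j _ => by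
            rw [mul_smul_comm, map_smul, smul_eq_mul, mul_comm]
      _ = φ (Si c * ∑ k ∈ rb.index, φ (Si (rb.left k) * z) • rb.right k) :=
          congrArg (fun t => φ (Si c * t)) hin
      _ = ∑ k ∈ rb.index, φ (Si c * rb.right k) * φ (Si (rb.left k) * z) := by
          rw [Finset.mul_sum, map_sum]
          exact Finset.sum_congr rfl fun k _ => by
            rw [mul_smul_comm, map_smul, smul_eq_mul, mul_comm]
  have assoc : ∀ a b c : H, mt (mt a b) c = mt a (mt b c) := by
    intro a b c
    have ra := Coalgebra.Repr.arbitrary F a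
    have ra1 : ∀ i, Coalgebra.Repr F (ra.left i) (H × H) :=
      fun i => Coalgebra.Repr.arbitrary F (ra.left i)
    have ra2 : ∀ i, Coalgebra.Repr F (ra.right i) (H × H) :=
      fun i => Coalgebra.Repr.arbitrary F (ra.right i)
    have rb := Coalgebra.Repr.arbitrary F b
    obtain ⟨L, hL⟩ := hLc c
    set U : H ⊗[F] (H ⊗[F] H) →ₗ[F] H :=
      (TensorProduct.rid F H).toLinearMap ∘ₗ
        TensorProduct.map (LinearMap.id : H →ₗ[F] H)
          (LinearMap.mul' F F ∘ₗ
            TensorProduct.map (φ ∘ₗ LinearMap.mulLeft F (Si c))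
              (φ ∘ₗ LinearMap.mulLeft F (Si b))) with hU
    have hUt : ∀ u v w : H,
        U (u ⊗ₜ (v ⊗ₜ w)) = (φ (Si c * v) * φ (Si b * w)) • u := by
      intro u v w
      simp [hU, smul_eq_mul]
    calc mt (mt a b) c
        = L (mt a b) := hL _
      _ = ∑ i ∈ ra.index, φ (Si b * ra.right i) • mt (ra.left i) c := by
          rw [mt_sum a b ra, map_sum]
          exact Finset.sum_congr rfl fun i _ => by rw [map_smul, hL]
      _ = ∑ i ∈ ra.index, ∑ j ∈ (ra1 i).index,
            (φ (Si c * (ra1 i).right j) * φ (Si b * ra.right i)) • (ra1 i).left j := by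
          refine Finset.sum_congr rfl fun i _ => ?_
          rw [mt_sum (ra.left i) c (ra1 i), Finset.smul_sum]
          exact Finset.sum_congr rfl fun j _ => by rw [smul_smul, mul_comm]
      _ = ∑ i ∈ ra.index, ∑ j ∈ (ra1 i).index,
            U ((ra1 i).left j ⊗ₜ ((ra1 i).right j ⊗ₜ ra.right i)) := by
          exact Finset.sum_congr rfl fun i _ => Finset.sum_congr rfl fun j _ => (hUt _ _ _).symm
      _ = ∑ i ∈ ra.index, ∑ j ∈ (ra2 i).index,
            U (ra.left i ⊗ₜ ((ra2 i).left j ⊗ₜ (ra2 i).right j)) := sum3 ra ra1 ra2 U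
      _ = ∑ i ∈ ra.index,
            (∑ k ∈ rb.index, φ (Si c * rb.right k) * φ (Si (rb.left k) * ra.right i)) •
              ra.left i := by
          refine Finset.sum_congr rfl fun i _ => ?_
          calc ∑ j ∈ (ra2 i).index, U (ra.left i ⊗ₜ ((ra2 i).left j ⊗ₜ (ra2 i).right j))
              = ∑ j ∈ (ra2 i).index,
                  (φ (Si c * (ra2 i).left j) * φ (Si b * (ra2 i).right j)) • ra.left i := by
                exact Finset.sum_congr rfl fun j _ => hUt _ _ _
            _ = (∑ j ∈ (ra2 i).index,
                  φ (Si c * (ra2 i).left j) * φ (Si b * (ra2 i).right j)) • ra.left i := by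
                rw [Finset.sum_smul]
            _ = _ := by rw [star b c (ra.right i) rb (ra2 i)]
      _ = ∑ i ∈ ra.index, φ (Si (mt b c) * ra.right i) • ra.left i := by
          refine Finset.sum_congr rfl fun i _ => ?_
          have hSimt : Si (mt b c) = ∑ k ∈ rb.index, φ (Si c * rb.right k) • Si (rb.left k) := by
            rw [mt_sum b c rb, map_sum]
            exact Finset.sum_congr rfl fun k _ => by rw [map_smul]
          rw [hSimt, Finset.sum_mul, map_sum]
          congr 1
          exact Finset.sum_congr rfl fun k _ => by
            rw [smul_mul_assoc, map_smul, smul_eq_mul]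
      _ = mt a (mt b c) := (mt_sum a (mt b c) ra).symm
  exact ⟨assoc, fun a => ⟨unitL a, unitR a⟩⟩
end

section
/- Let H be a finite-dimensional Hopf algebra over a field F with left integrals Λ ∈ H, φ ∈ Ĥ, normalized with φ(Λ) = 1. With m̃(a ⊗ b) = a₍₁₎ φ(S⁻¹(b) a₍₂₎), the composite m̃ ∘ Δ : H → H equals multiplication by the scalar φ(1): m̃(Δ(a)) = φ(1)·a for all a ∈ H. -/
/-! By coassociativity, `m̃(Δ a) = a₍₁₎ φ(S⁻¹(a₍₃₎) a₍₂₎)`. Since `S⁻¹` is an anti-algebra map,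
applying it to `S(b₍₁₎) b₍₂₎ = ε(b) 1` gives `S⁻¹(b₍₂₎) b₍₁₎ = ε(b) 1`; so the factor
`φ(S⁻¹(a₍₃₎) a₍₂₎)` collapses to `ε(a₍₂₎) φ(1)`, and counitality leaves `φ(1) a`. -/

open TensorProduct

section Coalgebra

variable {R A : Type*} [CommSemiring R] [AddCommMonoid A] [Module R A] [Coalgebra R A]

lemma rid_comp_lTensor_comp_assoc_comp_rTensor_comul_comp_comul {f : A ⊗[R] A →ₗ[R] R} {c : R}
    (hf : f ∘ₗ Coalgebra.comul = c • Coalgebra.counit) :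
    (TensorProduct.rid R A).toLinearMap ∘ₗ f.lTensor A ∘ₗ (TensorProduct.assoc R A A A).toLinearMap
      ∘ₗ Coalgebra.comul.rTensor A ∘ₗ Coalgebra.comul = c • LinearMap.id := by
  ext a
  simp [Coalgebra.coassoc_apply, ← LinearMap.lTensor_comp_apply, hf]

end Coalgebra

namespace HopfAlgebra

variable {R A : Type*} [CommSemiring R] [Semiring A] [HopfAlgebra R A] {Si : A →ₗ[R] A}

lemma inverse_antipode_one (h₁ : Si ∘ₗ antipode R = .id) : Si 1 = 1 := by
  simpa using LinearMap.congr_fun h₁ 1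

lemma inverse_antipode_mul_antidistrib (h₁ : Si ∘ₗ antipode R = .id)
    (h₂ : antipode R ∘ₗ Si = .id) (a b : A) : Si (a * b) = Si b * Si a := by
  have h : a * b = antipode R (Si b * Si a) := by
    rw [antipode_mul_antidistrib]
    simpa using congr($h₂ a * $h₂ b).symm
  simpa [h] using LinearMap.congr_fun h₁ (Si b * Si a)

lemma mul'_comp_rTensor_inverse_antipode_comp_comm_comp_comul (h₁ : Si ∘ₗ antipode R = .id)
    (h₂ : antipode R ∘ₗ Si = .id) :
    LinearMap.mul' R A ∘ₗ Si.rTensor A ∘ₗ (TensorProduct.comm R A A).toLinearMap ∘ₗ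
      Coalgebra.comul = Algebra.linearMap R A ∘ₗ Coalgebra.counit := by
  have hswap : LinearMap.mul' R A ∘ₗ Si.rTensor A ∘ₗ (TensorProduct.comm R A A).toLinearMap =
      Si ∘ₗ LinearMap.mul' R A ∘ₗ (antipode R).rTensor A := by
    ext a b
    simpa [inverse_antipode_mul_antidistrib h₁ h₂] using congr(Si b * $h₁ a).symm
  ext a
  simpa [Algebra.algebraMap_eq_smul_one, inverse_antipode_one h₁] using
    congr($hswap (Coalgebra.comul a))

end HopfAlgebra

theorem integral_multiplication_comp_comul_general
    (F H : Type*) [Field F] [Ring H] [HopfAlgebra F H]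
    (φ : H →ₗ[F] F)
    (Si : H →ₗ[F] H)
    (hSi₁ : Si ∘ₗ HopfAlgebra.antipode (R := F) = (LinearMap.id : H →ₗ[F] H))
    (hSi₂ : HopfAlgebra.antipode (R := F) ∘ₗ Si = (LinearMap.id : H →ₗ[F] H))
    (M : H ⊗[F] H →ₗ[F] H)
    (hM : ∀ a b : H, M (a ⊗ₜ[F] b) =
      TensorProduct.rid F H
        (TensorProduct.map (LinearMap.id : H →ₗ[F] H) (φ ∘ₗ LinearMap.mulLeft F (Si b))
          (Coalgebra.comul (R := F) a))) :
    ∀ a : H, M (Coalgebra.comul (R := F) a) = φ 1 • a := by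
  -- `g (y ⊗ z) = φ (S⁻¹ z * y)`
  let g := φ ∘ₗ LinearMap.mul' F H ∘ₗ Si.rTensor H ∘ₗ (TensorProduct.comm F H H).toLinearMap
  have hMg : M = (TensorProduct.rid F H).toLinearMap ∘ₗ g.lTensor H ∘ₗ
      (TensorProduct.assoc F H H H).toLinearMap ∘ₗ Coalgebra.comul.rTensor H := by
    refine TensorProduct.ext' fun a b => ?_
    rw [hM, LinearMap.comp_apply, LinearMap.comp_apply, LinearMap.comp_apply,
      LinearMap.rTensor_tmul]
    induction Coalgebra.comul (R := F) a using TensorProduct.induction_on with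
    | zero => simp
    | tmul x y => simp [g]
    | add s t hs ht => simp only [map_add, TensorProduct.add_tmul, hs, ht]
  have hg : g ∘ₗ Coalgebra.comul = φ 1 • Coalgebra.counit := by
    simp only [g, LinearMap.comp_assoc,
      HopfAlgebra.mul'_comp_rTensor_inverse_antipode_comp_comm_comp_comul hSi₁ hSi₂]
    ext a
    simp [Algebra.algebraMap_eq_smul_one, mul_comm]
  intro a
  simpa [hMg] using congr($(rid_comp_lTensor_comp_assoc_comp_rTensor_comul_comp_comul hg) a)

/-- For a finite-dimensional Hopf algebra `H` with left integrals `Λ ∈ H` and `φ ∈ Ĥ`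
normalized by `φ(Λ) = 1`, the composite `m̃ ∘ Δ : H → H` (where
`m̃(a ⊗ b) = a₍₁₎ φ(S⁻¹(b) a₍₂₎)`) equals multiplication by the scalar `φ(1)`. -/
theorem integral_multiplication_comp_comul
    (F H : Type*) [Field F] [Ring H] [HopfAlgebra F H] [FiniteDimensional F H]
    (Λ : H) (hΛ0 : Λ ≠ 0)
    (hΛ : ∀ x : H, x * Λ = Coalgebra.counit (R := F) x • Λ)
    (φ : H →ₗ[F] F) (hφ0 : φ ≠ 0)
    (hφ : ∀ x : H,
      TensorProduct.rid F H
        (TensorProduct.map (LinearMap.id : H →ₗ[F] H) φ (Coalgebra.comul (R := F) x))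
        = φ x • (1 : H))
    (hnorm : φ Λ = 1)
    (Si : H →ₗ[F] H)
    (hSi₁ : Si ∘ₗ HopfAlgebra.antipode (R := F) = (LinearMap.id : H →ₗ[F] H))
    (hSi₂ : HopfAlgebra.antipode (R := F) ∘ₗ Si = (LinearMap.id : H →ₗ[F] H))
    (M : H ⊗[F] H →ₗ[F] H)
    (hM : ∀ a b : H, M (a ⊗ₜ[F] b) =
      TensorProduct.rid F H
        (TensorProduct.map (LinearMap.id : H →ₗ[F] H) (φ ∘ₗ LinearMap.mulLeft F (Si b))
          (Coalgebra.comul (R := F) a))) :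
    ∀ a : H, M (Coalgebra.comul (R := F) a) = φ 1 • a :=
  integral_multiplication_comp_comul_general F H φ Si hSi₁ hSi₂ M hM
end

section
/- Let H be a finite-dimensional Hopf algebra over a field F, Λ a non-zero left integral in H and φ a non-zero left integral in Ĥ, normalized so that φ(Λ)=1. Then the regular representation Q of H (H acting on itself by left multiplication), together with v : F → Q, c ↦ cΛ; v' : Q → F, x ↦ ε(x); w : Q → Q ⊗ Q, x ↦ Δ(x); and w' : Q ⊗ Q → Q, x ⊗ y ↦ x₍₁₎ φ(S⁻¹(y) x₍₂₎), is a Frobenius algebra in the category H-mod, i.e. all four maps are H-module morphisms, (Q, w', v) is a monoid, (Q, w, v') is a comonoid, and the Frobenius condition (w' ⊗ id) ∘ (id ⊗ w) = w ∘ w' = (id ⊗ w') ∘ (w ⊗ id) holds. -/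
open TensorProduct

open Coalgebra HopfAlgebra

section Aux
variable {F H : Type*} [Field F] [Ring H] [HopfAlgebra F H]
variable {ι κ ν : Type*}

lemma csum_r {a : H} (r : Coalgebra.Repr F a ι) :
    ∑ i ∈ r.index, Coalgebra.counit (R := F) (r.right i) • r.left i = a := by
  have h := congrArg (TensorProduct.rid F H) (Coalgebra.sum_tmul_counit_eq r)
  simp only [map_sum, rid_tmul, one_smul] at h
  exact h

lemma csum_l {a : H} (r : Coalgebra.Repr F a ι) :
    ∑ i ∈ r.index, Coalgebra.counit (R := F) (r.left i) • r.right i = a := by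
  have h := congrArg (TensorProduct.lid F H) (Coalgebra.sum_counit_tmul_eq r)
  simp only [map_sum, lid_tmul, one_smul] at h
  exact h

lemma sum_ex {N : Type*} [AddCommMonoid N] [Module F N] (T : H ⊗[F] (H ⊗[F] H) →ₗ[F] N)
    {a : H} (r : Coalgebra.Repr F a ι) (rL : ∀ i, Coalgebra.Repr F (r.left i) κ)
    (rR : ∀ i, Coalgebra.Repr F (r.right i) ν) :
    ∑ i ∈ r.index, ∑ j ∈ (rL i).index,
        T ((rL i).left j ⊗ₜ[F] ((rL i).right j ⊗ₜ[F] r.right i))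
      = ∑ i ∈ r.index, ∑ j ∈ (rR i).index,
        T (r.left i ⊗ₜ[F] ((rR i).left j ⊗ₜ[F] (rR i).right j)) := by
  have h := congrArg T (Coalgebra.sum_tmul_tmul_eq r rL rR)
  simp only [map_sum] at h
  exact h


-- gadget linear maps
noncomputable def mul2 (f g : H →ₗ[F] H) : H ⊗[F] H →ₗ[F] H :=
  LinearMap.mul' F H ∘ₗ TensorProduct.map f g

@[simp] lemma mul2_apply (f g : H →ₗ[F] H) (p q : H) : mul2 f g (p ⊗ₜ q) = f p * g q := by
  simp [mul2]

noncomputable def T1 (f : H →ₗ[F] H) (g : H ⊗[F] H →ₗ[F] F) : H ⊗[F] (H ⊗[F] H) →ₗ[F] H :=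
  (TensorProduct.rid F H).toLinearMap ∘ₗ TensorProduct.map f g

@[simp] lemma T1_apply (f : H →ₗ[F] H) (g : H ⊗[F] H →ₗ[F] F) (p : H) (q : H ⊗[F] H) :
    T1 f g (p ⊗ₜ q) = g q • f p := by simp [T1]

noncomputable def TL (f : H ⊗[F] H →ₗ[F] H) : H ⊗[F] (H ⊗[F] H) →ₗ[F] (H ⊗[F] H) :=
  TensorProduct.map f LinearMap.id ∘ₗ (TensorProduct.assoc F H H H).symm.toLinearMap

@[simp] lemma TL_apply (f : H ⊗[F] H →ₗ[F] H) (p q w : H) :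
    TL f (p ⊗ₜ (q ⊗ₜ w)) = f (p ⊗ₜ q) ⊗ₜ w := by simp [TL]

noncomputable def TM (f : H ⊗[F] H →ₗ[F] H) (g : H →ₗ[F] H) : H ⊗[F] (H ⊗[F] H) →ₗ[F] H :=
  LinearMap.mul' F H ∘ₗ TensorProduct.map f g ∘ₗ (TensorProduct.assoc F H H H).symm.toLinearMap

@[simp] lemma TM_apply (f : H ⊗[F] H →ₗ[F] H) (g : H →ₗ[F] H) (p q w : H) :
    TM f g (p ⊗ₜ (q ⊗ₜ w)) = f (p ⊗ₜ q) * g w := by simp [TM]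

noncomputable def TK (f : H ⊗[F] H →ₗ[F] H ⊗[F] H) (g : H →ₗ[F] H ⊗[F] H) :
    H ⊗[F] (H ⊗[F] H) →ₗ[F] (H ⊗[F] H) :=
  LinearMap.mul' F (H ⊗[F] H) ∘ₗ TensorProduct.map f g
    ∘ₗ (TensorProduct.assoc F H H H).symm.toLinearMap

@[simp] lemma TK_apply (f : H ⊗[F] H →ₗ[F] H ⊗[F] H) (g : H →ₗ[F] H ⊗[F] H) (p q w : H) :
    TK f g (p ⊗ₜ (q ⊗ₜ w)) = f (p ⊗ₜ q) * g w := by simp [TK]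

noncomputable def TM2 (f : H →ₗ[F] H ⊗[F] H) (g : H ⊗[F] H →ₗ[F] H ⊗[F] H) :
    H ⊗[F] (H ⊗[F] H) →ₗ[F] (H ⊗[F] H) :=
  LinearMap.mul' F (H ⊗[F] H) ∘ₗ TensorProduct.map f g

@[simp] lemma TM2_apply (f : H →ₗ[F] H ⊗[F] H) (g : H ⊗[F] H →ₗ[F] H ⊗[F] H)
    (p : H) (q : H ⊗[F] H) : TM2 f g (p ⊗ₜ q) = f p * g q := by simp [TM2]

noncomputable def TS (g : H →ₗ[F] F) : H ⊗[F] (H ⊗[F] H) →ₗ[F] (H ⊗[F] H) :=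
  (TensorProduct.rid F (H ⊗[F] H)).toLinearMap ∘ₗ
    TensorProduct.map LinearMap.id g ∘ₗ (TensorProduct.assoc F H H H).symm.toLinearMap

@[simp] lemma TS_apply (g : H →ₗ[F] F) (p q w : H) :
    TS g (p ⊗ₜ (q ⊗ₜ w)) = g w • (p ⊗ₜ[F] q) := by simp [TS]

-- product of representations
noncomputable def reprMul {a b : H} (ra : Coalgebra.Repr F a ι) (rb : Coalgebra.Repr F b κ) :
    Coalgebra.Repr F (a * b) (ι × κ) where
  index := ra.index ×ˢ rb.index
  left p := ra.left p.1 * rb.left p.2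
  right p := ra.right p.1 * rb.right p.2
  eq := by
    rw [Bialgebra.comul_mul, ← ra.eq, ← rb.eq, Finset.sum_mul_sum, ← Finset.sum_product']
    exact Finset.sum_congr rfl fun p _ => by rw [Algebra.TensorProduct.tmul_mul_tmul]

@[simp] lemma reprMul_index {a b : H} (ra : Coalgebra.Repr F a ι) (rb : Coalgebra.Repr F b κ) :
    (reprMul ra rb).index = ra.index ×ˢ rb.index := rfl
@[simp] lemma reprMul_left {a b : H} (ra : Coalgebra.Repr F a ι) (rb : Coalgebra.Repr F b κ) (p) :
    (reprMul ra rb).left p = ra.left p.1 * rb.left p.2 := rfl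
@[simp] lemma reprMul_right {a b : H} (ra : Coalgebra.Repr F a ι) (rb : Coalgebra.Repr F b κ) (p) :
    (reprMul ra rb).right p = ra.right p.1 * rb.right p.2 := rfl


lemma eps_S (a : H) :
    Coalgebra.counit (R := F) (antipode (R := F) a) = Coalgebra.counit (R := F) a := by
  classical
  set r := Coalgebra.Repr.arbitrary F a with hr
  have h := congrArg (Coalgebra.counit (R := F)) (sum_antipode_mul_eq_smul r)
  simp only [map_sum, Bialgebra.counit_mul, map_smul, Bialgebra.counit_one, smul_eq_mul,
    mul_one] at h
  calc Coalgebra.counit (R := F) (antipode (R := F) a)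
      = Coalgebra.counit (R := F) (antipode (R := F)
          (∑ i ∈ r.index, Coalgebra.counit (R := F) (r.right i) • r.left i)) := by rw [csum_r]
    _ = ∑ i ∈ r.index, Coalgebra.counit (R := F) (antipode (R := F) (r.left i)) *
          Coalgebra.counit (R := F) (r.right i) := by
        rw [map_sum, map_sum]
        exact Finset.sum_congr rfl fun i _ => by
          rw [map_smul, map_smul, smul_eq_mul, mul_comm]
    _ = Coalgebra.counit (R := F) a := h

lemma S_one : antipode (R := F) (1 : H) = 1 := by
  have h := mul_antipode_rTensor_comul_apply (R := F) (1 : H)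
  rw [Bialgebra.comul_one, Algebra.TensorProduct.one_def] at h
  simpa using h

lemma sum_S_mul_prod {a b : H} (ra : Coalgebra.Repr F a ι) (rb : Coalgebra.Repr F b κ) :
    ∑ i ∈ ra.index, ∑ j ∈ rb.index,
      antipode (R := F) (ra.left i * rb.left j) * (ra.right i * rb.right j)
      = (Coalgebra.counit (R := F) a * Coalgebra.counit (R := F) b) • (1 : H) := by
  have h := sum_antipode_mul_eq_smul (reprMul ra rb)
  simp only [reprMul_index, reprMul_left, reprMul_right] at h
  rw [← Finset.sum_product' (f := fun i j => antipode (R := F) (ra.left i * rb.left j) *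
    (ra.right i * rb.right j))]
  rw [Bialgebra.counit_mul] at h
  exact h

lemma antipode_mul (a b : H) :
    antipode (R := F) (a * b) = antipode (R := F) b * antipode (R := F) a := by
  classical
  set S : H →ₗ[F] H := antipode (R := F) with hS
  set ra := Coalgebra.Repr.arbitrary F a
  set rb := Coalgebra.Repr.arbitrary F b
  set raL : ∀ i, Coalgebra.Repr F (ra.left i) (H × H) := fun i => Coalgebra.Repr.arbitrary F _
  set raR : ∀ i, Coalgebra.Repr F (ra.right i) (H × H) := fun i => Coalgebra.Repr.arbitrary F _
  set rbL : ∀ k, Coalgebra.Repr F (rb.left k) (H × H) := fun k => Coalgebra.Repr.arbitrary F _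
  set rbR : ∀ k, Coalgebra.Repr F (rb.right k) (H × H) := fun k => Coalgebra.Repr.arbitrary F _
  set U : ∀ i, (H × H) → (H ⊗[F] (H ⊗[F] H) →ₗ[F] H) := fun i i' =>
    TM (mul2 (S ∘ₗ LinearMap.mulLeft F ((raL i).left i'))
          (LinearMap.mulLeft F ((raL i).right i')))
       ((LinearMap.mulRight F (S (ra.right i))) ∘ₗ S) with hU
  have hUapp : ∀ i i' p q w, U i i' (p ⊗ₜ (q ⊗ₜ w))
      = (S ((raL i).left i' * p) * ((raL i).right i' * q)) * (S w * S (ra.right i)) := by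
    intro i i' p q w; simp [hU]
  -- the master expression
  set X : H := ∑ i ∈ ra.index, ∑ i' ∈ (raL i).index, ∑ k ∈ rb.index, ∑ k' ∈ (rbL k).index,
      U i i' ((rbL k).left k' ⊗ₜ ((rbL k).right k' ⊗ₜ rb.right k)) with hX
  -- first evaluation : X = S (a * b)
  have ev1 : X = S (a * b) := by
    have step1 : X = ∑ i ∈ ra.index, ∑ i' ∈ (raL i).index,
        S ((raL i).left i' * b) * ((raL i).right i' * S (ra.right i)) := by
      rw [hX]
      refine Finset.sum_congr rfl fun i _ => Finset.sum_congr rfl fun i' _ => ?_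
      rw [sum_ex (U i i') rb rbL rbR]
      have : ∀ k, ∑ m ∈ (rbR k).index,
          U i i' (rb.left k ⊗ₜ ((rbR k).left m ⊗ₜ (rbR k).right m))
          = Coalgebra.counit (R := F) (rb.right k) •
            (S ((raL i).left i' * rb.left k) * ((raL i).right i' * S (ra.right i))) := by
        intro k
        have inner : ∑ m ∈ (rbR k).index,
            ((raL i).right i' * (rbR k).left m) * (S ((rbR k).right m) * S (ra.right i))
            = Coalgebra.counit (R := F) (rb.right k) •
              ((raL i).right i' * S (ra.right i)) := by
          calc ∑ m ∈ (rbR k).index,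
              ((raL i).right i' * (rbR k).left m) * (S ((rbR k).right m) * S (ra.right i))
              = ((raL i).right i' * ∑ m ∈ (rbR k).index,
                  (rbR k).left m * S ((rbR k).right m)) * S (ra.right i) := by
                rw [Finset.mul_sum, Finset.sum_mul]
                exact Finset.sum_congr rfl fun m _ => by noncomm_ring
            _ = _ := by
                rw [sum_mul_antipode_eq_smul (rbR k)]
                simp [mul_smul_comm, smul_mul_assoc]
        calc ∑ m ∈ (rbR k).index,
            U i i' (rb.left k ⊗ₜ ((rbR k).left m ⊗ₜ (rbR k).right m))
            = S ((raL i).left i' * rb.left k) * ∑ m ∈ (rbR k).index,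
                ((raL i).right i' * (rbR k).left m) * (S ((rbR k).right m) * S (ra.right i)) := by
              rw [Finset.mul_sum]
              exact Finset.sum_congr rfl fun m _ => by rw [hUapp]; noncomm_ring
          _ = _ := by rw [inner, mul_smul_comm]
      rw [Finset.sum_congr rfl fun k _ => this k]
      calc ∑ k ∈ rb.index, Coalgebra.counit (R := F) (rb.right k) •
            (S ((raL i).left i' * rb.left k) * ((raL i).right i' * S (ra.right i)))
          = (∑ k ∈ rb.index, Coalgebra.counit (R := F) (rb.right k) •
              S ((raL i).left i' * rb.left k)) * ((raL i).right i' * S (ra.right i)) := by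
            rw [Finset.sum_mul]
            exact Finset.sum_congr rfl fun k _ => by rw [smul_mul_assoc]
        _ = S ((raL i).left i' * b) * ((raL i).right i' * S (ra.right i)) := by
            congr 1
            have : ∀ k, Coalgebra.counit (R := F) (rb.right k) • S ((raL i).left i' * rb.left k)
                = (S ∘ₗ LinearMap.mulLeft F ((raL i).left i'))
                    (Coalgebra.counit (R := F) (rb.right k) • rb.left k) := by
              intro k; simp
            rw [Finset.sum_congr rfl fun k _ => this k, ← map_sum, csum_r rb]
            simp
    -- second exchange, over a
    set V : H ⊗[F] (H ⊗[F] H) →ₗ[F] H :=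
      TM (mul2 (S ∘ₗ LinearMap.mulRight F b) LinearMap.id) S with hV
    have hVapp : ∀ p q w, V (p ⊗ₜ (q ⊗ₜ w)) = S (p * b) * (q * S w) := by
      intro p q w; simp [hV]; noncomm_ring
    have step2 : X = ∑ i ∈ ra.index, ∑ m ∈ (raR i).index,
        S (ra.left i * b) * ((raR i).left m * S ((raR i).right m)) := by
      rw [step1]
      have lhs : ∀ i i', S ((raL i).left i' * b) * ((raL i).right i' * S (ra.right i))
          = V ((raL i).left i' ⊗ₜ ((raL i).right i' ⊗ₜ ra.right i)) := fun i i' =>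
        (hVapp _ _ _).symm
      rw [Finset.sum_congr rfl fun i _ => Finset.sum_congr rfl fun i' _ => lhs i i']
      rw [sum_ex V ra raL raR]
      exact Finset.sum_congr rfl fun i _ => Finset.sum_congr rfl fun m _ => hVapp _ _ _
    rw [step2]
    have : ∀ i, ∑ m ∈ (raR i).index,
        S (ra.left i * b) * ((raR i).left m * S ((raR i).right m))
        = Coalgebra.counit (R := F) (ra.right i) • S (ra.left i * b) := by
      intro i
      rw [← Finset.mul_sum, sum_mul_antipode_eq_smul (raR i)]
      simp [mul_smul_comm]
    rw [Finset.sum_congr rfl fun i _ => this i]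
    have : ∀ i, Coalgebra.counit (R := F) (ra.right i) • S (ra.left i * b)
        = (S ∘ₗ LinearMap.mulRight F b) (Coalgebra.counit (R := F) (ra.right i) • ra.left i) := by
      intro i; simp
    rw [Finset.sum_congr rfl fun i _ => this i, ← map_sum, csum_r ra]
    simp
  -- second evaluation : X = S b * S a
  have ev2 : X = S b * S a := by
    rw [hX]
    have swap : ∀ i, ∑ i' ∈ (raL i).index, ∑ k ∈ rb.index, ∑ k' ∈ (rbL k).index,
        U i i' ((rbL k).left k' ⊗ₜ ((rbL k).right k' ⊗ₜ rb.right k))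
        = ∑ k ∈ rb.index, ∑ i' ∈ (raL i).index, ∑ k' ∈ (rbL k).index,
        U i i' ((rbL k).left k' ⊗ₜ ((rbL k).right k' ⊗ₜ rb.right k)) := fun i =>
      Finset.sum_comm
    rw [Finset.sum_congr rfl fun i _ => swap i]
    have inner : ∀ i k, ∑ i' ∈ (raL i).index, ∑ k' ∈ (rbL k).index,
        U i i' ((rbL k).left k' ⊗ₜ ((rbL k).right k' ⊗ₜ rb.right k))
        = (Coalgebra.counit (R := F) (ra.left i) * Coalgebra.counit (R := F) (rb.left k)) •
          (S (rb.right k) * S (ra.right i)) := by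
      intro i k
      calc ∑ i' ∈ (raL i).index, ∑ k' ∈ (rbL k).index,
          U i i' ((rbL k).left k' ⊗ₜ ((rbL k).right k' ⊗ₜ rb.right k))
          = (∑ i' ∈ (raL i).index, ∑ k' ∈ (rbL k).index,
              S ((raL i).left i' * (rbL k).left k')
                * ((raL i).right i' * (rbL k).right k'))
            * (S (rb.right k) * S (ra.right i)) := by
            rw [Finset.sum_mul]
            refine Finset.sum_congr rfl fun i' _ => ?_
            rw [Finset.sum_mul]
            exact Finset.sum_congr rfl fun k' _ => by rw [hUapp]
        _ = _ := by
            rw [sum_S_mul_prod (raL i) (rbL k), smul_mul_assoc, one_mul]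
    rw [Finset.sum_congr rfl fun i _ => Finset.sum_congr rfl fun k _ => inner i k]
    have colb : ∀ i, ∑ k ∈ rb.index,
        (Coalgebra.counit (R := F) (ra.left i) * Coalgebra.counit (R := F) (rb.left k)) •
          (S (rb.right k) * S (ra.right i))
        = Coalgebra.counit (R := F) (ra.left i) • (S b * S (ra.right i)) := by
      intro i
      have : ∀ k, (Coalgebra.counit (R := F) (ra.left i)
            * Coalgebra.counit (R := F) (rb.left k)) • (S (rb.right k) * S (ra.right i))
          = Coalgebra.counit (R := F) (ra.left i) •
              ((Coalgebra.counit (R := F) (rb.left k) • S (rb.right k)) * S (ra.right i)) := by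
        intro k; rw [mul_smul, smul_mul_assoc]
      rw [Finset.sum_congr rfl fun k _ => this k, ← Finset.smul_sum, ← Finset.sum_mul]
      congr 2
      have : ∀ k, Coalgebra.counit (R := F) (rb.left k) • S (rb.right k)
          = S (Coalgebra.counit (R := F) (rb.left k) • rb.right k) := by intro k; simp
      rw [Finset.sum_congr rfl fun k _ => this k, ← map_sum, csum_l rb]
    rw [Finset.sum_congr rfl fun i _ => colb i]
    have : ∀ i, Coalgebra.counit (R := F) (ra.left i) • (S b * S (ra.right i))
        = S b * (Coalgebra.counit (R := F) (ra.left i) • S (ra.right i)) := by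
      intro i; rw [mul_smul_comm]
    rw [Finset.sum_congr rfl fun i _ => this i, ← Finset.mul_sum]
    congr 1
    have : ∀ i, Coalgebra.counit (R := F) (ra.left i) • S (ra.right i)
        = S (Coalgebra.counit (R := F) (ra.left i) • ra.right i) := by intro i; simp
    rw [Finset.sum_congr rfl fun i _ => this i, ← map_sum, csum_l ra]
  rw [← ev1, ev2]
-- (M1) : ∑ S(a₁) a₂ ⊗ a₃ = 1 ⊗ a
lemma one_tmul {a : H} (r : Coalgebra.Repr F a ι) (rR : ∀ i, Coalgebra.Repr F (r.right i) κ) :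
    ∑ i ∈ r.index, ∑ j ∈ (rR i).index,
      (antipode (R := F) (r.left i) * (rR i).left j) ⊗ₜ[F] (rR i).right j
      = (1 : H) ⊗ₜ[F] a := by
  classical
  set S : H →ₗ[F] H := antipode (R := F) with hS
  set rL : ∀ i, Coalgebra.Repr F (r.left i) (H × H) := fun i => Coalgebra.Repr.arbitrary F _
  set T : H ⊗[F] (H ⊗[F] H) →ₗ[F] (H ⊗[F] H) := TL (mul2 S LinearMap.id) with hT
  have hTapp : ∀ p q w, T (p ⊗ₜ (q ⊗ₜ w)) = (S p * q) ⊗ₜ[F] w := by intro p q w; simp [hT]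
  have h := sum_ex T r rL rR
  rw [Finset.sum_congr rfl fun i _ => Finset.sum_congr rfl fun j _ => hTapp _ _ _] at h
  rw [Finset.sum_congr rfl fun i _ => Finset.sum_congr rfl fun j _ => hTapp _ _ _] at h
  rw [← h]
  have inner : ∀ i, ∑ j ∈ (rL i).index, (S ((rL i).left j) * (rL i).right j) ⊗ₜ[F] r.right i
      = Coalgebra.counit (R := F) (r.left i) • ((1 : H) ⊗ₜ[F] r.right i) := by
    intro i
    rw [← TensorProduct.sum_tmul, sum_antipode_mul_eq_smul (rL i), TensorProduct.smul_tmul']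
  rw [Finset.sum_congr rfl fun i _ => inner i]
  have : ∀ i, Coalgebra.counit (R := F) (r.left i) • ((1 : H) ⊗ₜ[F] r.right i)
      = (1 : H) ⊗ₜ[F] (Coalgebra.counit (R := F) (r.left i) • r.right i) := by
    intro i; rw [TensorProduct.tmul_smul]
  rw [Finset.sum_congr rfl fun i _ => this i, ← TensorProduct.tmul_sum, csum_l r]

-- (GD) : ∑ (S(c₂) ⊗ S(c₁)) * Δ(c₃) = ε(c) • (1 ⊗ 1)
lemma GD {c : H} (rc : Coalgebra.Repr F c ι) :
    ∑ j ∈ rc.index,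
      ((TensorProduct.comm F H H).toLinearMap ∘ₗ
        TensorProduct.map (antipode (R := F)) (antipode (R := F)))
          (Coalgebra.comul (R := F) (rc.left j)) * Coalgebra.comul (R := F) (rc.right j)
      = Coalgebra.counit (R := F) c • ((1 : H) ⊗ₜ[F] (1 : H)) := by
  classical
  set S : H →ₗ[F] H := antipode (R := F) with hS
  set G' : H →ₗ[F] H ⊗[F] H := (TensorProduct.comm F H H).toLinearMap ∘ₗ
    TensorProduct.map S S ∘ₗ Coalgebra.comul (R := F) with hG
  set rcL : ∀ j, Coalgebra.Repr F (rc.left j) (H × H) := fun j => Coalgebra.Repr.arbitrary F _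
  set rcR : ∀ j, Coalgebra.Repr F (rc.right j) (H × H) := fun j => Coalgebra.Repr.arbitrary F _
  set g : H ⊗[F] (H ⊗[F] H) →ₗ[F] (H ⊗[F] H) :=
    TK ((TensorProduct.comm F H H).toLinearMap ∘ₗ TensorProduct.map S S)
       (Coalgebra.comul (R := F)) with hg
  have hgapp : ∀ p q w, g (p ⊗ₜ (q ⊗ₜ w))
      = (S q ⊗ₜ[F] S p) * Coalgebra.comul (R := F) w := by intro p q w; simp [hg]
  have h := sum_ex g rc rcL rcR
  -- LHS of h is the goal LHS
  have lhs : ∀ j, ∑ j' ∈ (rcL j).index,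
      g ((rcL j).left j' ⊗ₜ ((rcL j).right j' ⊗ₜ rc.right j))
      = ((TensorProduct.comm F H H).toLinearMap ∘ₗ TensorProduct.map S S)
          (Coalgebra.comul (R := F) (rc.left j)) * Coalgebra.comul (R := F) (rc.right j) := by
    intro j
    rw [Finset.sum_congr rfl fun j' _ => hgapp _ _ _, ← Finset.sum_mul]
    congr 1
    rw [← (rcL j).eq]
    simp [map_sum]
  rw [Finset.sum_congr rfl fun j _ => (lhs j).symm, h]
  -- now collapse the right side
  have rhs : ∀ j, ∑ m ∈ (rcR j).index,
      g (rc.left j ⊗ₜ ((rcR j).left m ⊗ₜ (rcR j).right m))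
      = (1 : H) ⊗ₜ[F] (S (rc.left j) * rc.right j) := by
    intro j
    set rcRR : ∀ m, Coalgebra.Repr F ((rcR j).right m) (H × H) :=
      fun m => Coalgebra.Repr.arbitrary F _
    have expand : ∀ m, g (rc.left j ⊗ₜ ((rcR j).left m ⊗ₜ (rcR j).right m))
        = ∑ n ∈ (rcRR m).index,
            (S ((rcR j).left m) * (rcRR m).left n) ⊗ₜ[F]
              (S (rc.left j) * (rcRR m).right n) := by
      intro m
      rw [hgapp, ← (rcRR m).eq, Finset.mul_sum]
      exact Finset.sum_congr rfl fun n _ => by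
        rw [Algebra.TensorProduct.tmul_mul_tmul]
    rw [Finset.sum_congr rfl fun m _ => expand m]
    have h1 := one_tmul (rcR j) rcRR
    have := congrArg (LinearMap.lTensor H (LinearMap.mulLeft F (S (rc.left j)))) h1
    simp only [map_sum, LinearMap.lTensor_tmul, LinearMap.mulLeft_apply] at this
    exact this
  rw [Finset.sum_congr rfl fun j _ => rhs j]
  rw [← TensorProduct.tmul_sum, sum_antipode_mul_eq_smul rc, TensorProduct.tmul_smul]

lemma antipode_comul (a : H) :
    Coalgebra.comul (R := F) (antipode (R := F) a)
      = (TensorProduct.comm F H H)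
          (TensorProduct.map (antipode (R := F)) (antipode (R := F))
            (Coalgebra.comul (R := F) a)) := by
  classical
  set S : H →ₗ[F] H := antipode (R := F) with hS
  set ra := Coalgebra.Repr.arbitrary F a
  set raL : ∀ i, Coalgebra.Repr F (ra.left i) (H × H) := fun i => Coalgebra.Repr.arbitrary F _
  set raR : ∀ i, Coalgebra.Repr F (ra.right i) (H × H) := fun i => Coalgebra.Repr.arbitrary F _
  set G' : H →ₗ[F] H ⊗[F] H := (TensorProduct.comm F H H).toLinearMap ∘ₗ
    TensorProduct.map S S ∘ₗ Coalgebra.comul (R := F) with hG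
  set T : H ⊗[F] (H ⊗[F] H) →ₗ[F] (H ⊗[F] H) :=
    TM2 G' (Coalgebra.comul (R := F) ∘ₗ mul2 LinearMap.id S) with hT
  have hTapp : ∀ p q w, T (p ⊗ₜ (q ⊗ₜ w))
      = G' p * Coalgebra.comul (R := F) (q * S w) := by intro p q w; simp [hT]
  set Y := ∑ i ∈ ra.index, ∑ m ∈ (raR i).index,
      T (ra.left i ⊗ₜ ((raR i).left m ⊗ₜ (raR i).right m)) with hY
  have ev1 : Y = G' a := by
    rw [hY]
    have inner : ∀ i, ∑ m ∈ (raR i).index,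
        T (ra.left i ⊗ₜ ((raR i).left m ⊗ₜ (raR i).right m))
        = Coalgebra.counit (R := F) (ra.right i) • G' (ra.left i) := by
      intro i
      rw [Finset.sum_congr rfl fun m _ => hTapp _ _ _, ← Finset.mul_sum, ← map_sum]
      have : ∑ m ∈ (raR i).index, (raR i).left m * S ((raR i).right m)
          = Coalgebra.counit (R := F) (ra.right i) • (1 : H) :=
        sum_mul_antipode_eq_smul (raR i)
      rw [this, map_smul]
      have : Coalgebra.comul (R := F) (1 : H) = (1 : H ⊗[F] H) := Bialgebra.comul_one
      rw [this, mul_smul_comm, mul_one]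
    rw [Finset.sum_congr rfl fun i _ => inner i]
    have : ∀ i, Coalgebra.counit (R := F) (ra.right i) • G' (ra.left i)
        = G' (Coalgebra.counit (R := F) (ra.right i) • ra.left i) := by intro i; simp
    rw [Finset.sum_congr rfl fun i _ => this i, ← map_sum, csum_r ra]
  have ev2 : Y = Coalgebra.comul (R := F) (S a) := by
    rw [hY, ← sum_ex T ra raL raR]
    have inner : ∀ i, ∑ j ∈ (raL i).index,
        T ((raL i).left j ⊗ₜ ((raL i).right j ⊗ₜ ra.right i))
        = Coalgebra.counit (R := F) (ra.left i) •
            Coalgebra.comul (R := F) (S (ra.right i)) := by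
      intro i
      have expand : ∀ j, T ((raL i).left j ⊗ₜ ((raL i).right j ⊗ₜ ra.right i))
          = (G' ((raL i).left j) * Coalgebra.comul (R := F) ((raL i).right j))
              * Coalgebra.comul (R := F) (S (ra.right i)) := by
        intro j
        rw [hTapp]
        have : Coalgebra.comul (R := F) ((raL i).right j * S (ra.right i))
            = Coalgebra.comul (R := F) ((raL i).right j)
              * Coalgebra.comul (R := F) (S (ra.right i)) := Bialgebra.comul_mul _ _
        rw [this, mul_assoc]
      rw [Finset.sum_congr rfl fun j _ => expand j, ← Finset.sum_mul]
      have hgd : ∑ j ∈ (raL i).index,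
          G' ((raL i).left j) * Coalgebra.comul (R := F) ((raL i).right j)
          = Coalgebra.counit (R := F) (ra.left i) • ((1 : H) ⊗ₜ[F] (1 : H)) := by
        have := GD (raL i)
        rw [← this]
        exact Finset.sum_congr rfl fun j _ => by rw [hG]; simp [hS]
      rw [hgd, smul_mul_assoc]
      have : ((1 : H) ⊗ₜ[F] (1 : H)) = (1 : H ⊗[F] H) := rfl
      rw [this, one_mul]
    rw [Finset.sum_congr rfl fun i _ => inner i]
    have : ∀ i, Coalgebra.counit (R := F) (ra.left i) •
        Coalgebra.comul (R := F) (S (ra.right i))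
        = (Coalgebra.comul (R := F) ∘ₗ S)
            (Coalgebra.counit (R := F) (ra.left i) • ra.right i) := by intro i; simp
    rw [Finset.sum_congr rfl fun i _ => this i, ← map_sum, csum_l ra]
    simp
  rw [← ev2, ev1, hG]
  simp
section SiLemmas
variable {Si : H →ₗ[F] H}

lemma S_Si (hSi₂ : HopfAlgebra.antipode (R := F) ∘ₗ Si = (LinearMap.id : H →ₗ[F] H)) (a : H) :
    antipode (R := F) (Si a) = a := LinearMap.congr_fun hSi₂ a
lemma Si_S (hSi₁ : Si ∘ₗ HopfAlgebra.antipode (R := F) = (LinearMap.id : H →ₗ[F] H)) (a : H) :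
    Si (antipode (R := F) a) = a := LinearMap.congr_fun hSi₁ a

lemma S_inj (hSi₁ : Si ∘ₗ HopfAlgebra.antipode (R := F) = (LinearMap.id : H →ₗ[F] H)) :
    Function.Injective (antipode (R := F) (A := H)) := by
  intro x y h
  have := congrArg Si h
  rwa [Si_S hSi₁, Si_S hSi₁] at this

lemma Si_one (hSi₁ : Si ∘ₗ HopfAlgebra.antipode (R := F) = (LinearMap.id : H →ₗ[F] H)) :
    Si (1 : H) = 1 := by
  conv_lhs => rw [← S_one (F := F) (H := H)]
  rw [Si_S hSi₁]

lemma eps_Si (hSi₂ : HopfAlgebra.antipode (R := F) ∘ₗ Si = (LinearMap.id : H →ₗ[F] H)) (a : H) :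
    Coalgebra.counit (R := F) (Si a) = Coalgebra.counit (R := F) a := by
  conv_rhs => rw [← S_Si hSi₂ a]
  rw [eps_S]

lemma Si_mul (hSi₁ : Si ∘ₗ HopfAlgebra.antipode (R := F) = (LinearMap.id : H →ₗ[F] H))
    (hSi₂ : HopfAlgebra.antipode (R := F) ∘ₗ Si = (LinearMap.id : H →ₗ[F] H)) (a b : H) :
    Si (a * b) = Si b * Si a := by
  apply S_inj hSi₁
  rw [S_Si hSi₂, _root_.antipode_mul, S_Si hSi₂, S_Si hSi₂]

lemma comul_Si (hSi₁ : Si ∘ₗ HopfAlgebra.antipode (R := F) = (LinearMap.id : H →ₗ[F] H))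
    (hSi₂ : HopfAlgebra.antipode (R := F) ∘ₗ Si = (LinearMap.id : H →ₗ[F] H)) (a : H) :
    Coalgebra.comul (R := F) (Si a)
      = (TensorProduct.comm F H H) (TensorProduct.map Si Si (Coalgebra.comul (R := F) a)) := by
  classical
  have h := antipode_comul (F := F) (Si a)
  rw [S_Si hSi₂] at h
  set r' := Coalgebra.Repr.arbitrary F (Si a)
  rw [← r'.eq] at h ⊢
  rw [h]
  simp only [map_sum, TensorProduct.map_tmul, TensorProduct.comm_tmul]
  exact Finset.sum_congr rfl fun i _ => by rw [Si_S hSi₁, Si_S hSi₁]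

/-- a representation of `Si a` obtained by flipping and applying `Si` -/
noncomputable def reprSi (hSi₁ : Si ∘ₗ HopfAlgebra.antipode (R := F) = (LinearMap.id : H →ₗ[F] H))
    (hSi₂ : HopfAlgebra.antipode (R := F) ∘ₗ Si = (LinearMap.id : H →ₗ[F] H))
    {a : H} (r : Coalgebra.Repr F a ι) : Coalgebra.Repr F (Si a) ι where
  index := r.index
  left i := Si (r.right i)
  right i := Si (r.left i)
  eq := by
    rw [comul_Si hSi₁ hSi₂, ← r.eq]
    simp [map_sum]

@[simp] lemma reprSi_index (hSi₁ : Si ∘ₗ HopfAlgebra.antipode (R := F) = LinearMap.id)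
    (hSi₂ : HopfAlgebra.antipode (R := F) ∘ₗ Si = LinearMap.id)
    {a : H} (r : Coalgebra.Repr F a ι) : (reprSi hSi₁ hSi₂ r).index = r.index := rfl
@[simp] lemma reprSi_left (hSi₁ : Si ∘ₗ HopfAlgebra.antipode (R := F) = LinearMap.id)
    (hSi₂ : HopfAlgebra.antipode (R := F) ∘ₗ Si = LinearMap.id)
    {a : H} (r : Coalgebra.Repr F a ι) (i) : (reprSi hSi₁ hSi₂ r).left i = Si (r.right i) := rfl
@[simp] lemma reprSi_right (hSi₁ : Si ∘ₗ HopfAlgebra.antipode (R := F) = LinearMap.id)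
    (hSi₂ : HopfAlgebra.antipode (R := F) ∘ₗ Si = LinearMap.id)
    {a : H} (r : Coalgebra.Repr F a ι) (i) : (reprSi hSi₁ hSi₂ r).right i = Si (r.left i) := rfl

lemma sum_Si_right_mul_left
    (hSi₁ : Si ∘ₗ HopfAlgebra.antipode (R := F) = (LinearMap.id : H →ₗ[F] H))
    (hSi₂ : HopfAlgebra.antipode (R := F) ∘ₗ Si = (LinearMap.id : H →ₗ[F] H))
    {a : H} (r : Coalgebra.Repr F a ι) :
    ∑ i ∈ r.index, Si (r.right i) * r.left i
      = Coalgebra.counit (R := F) a • (1 : H) := by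
  apply S_inj hSi₁
  rw [map_sum, map_smul, S_one]
  have : ∀ i ∈ r.index, antipode (R := F) (Si (r.right i) * r.left i)
      = antipode (R := F) (r.left i) * r.right i := by
    intro i _
    rw [_root_.antipode_mul, S_Si hSi₂]
  rw [Finset.sum_congr rfl this, sum_antipode_mul_eq_smul r]

lemma sum_right_mul_Si_left
    (hSi₁ : Si ∘ₗ HopfAlgebra.antipode (R := F) = (LinearMap.id : H →ₗ[F] H))
    (hSi₂ : HopfAlgebra.antipode (R := F) ∘ₗ Si = (LinearMap.id : H →ₗ[F] H))
    {a : H} (r : Coalgebra.Repr F a ι) :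
    ∑ i ∈ r.index, r.right i * Si (r.left i)
      = Coalgebra.counit (R := F) a • (1 : H) := by
  apply S_inj hSi₁
  rw [map_sum, map_smul, S_one]
  have : ∀ i ∈ r.index, antipode (R := F) (r.right i * Si (r.left i))
      = r.left i * antipode (R := F) (r.right i) := by
    intro i _
    rw [_root_.antipode_mul, S_Si hSi₂]
  rw [Finset.sum_congr rfl this, sum_mul_antipode_eq_smul r]

end SiLemmas
noncomputable def T0 (f : H →ₗ[F] H) (g : H →ₗ[F] F) : H ⊗[F] H →ₗ[F] H :=
  (TensorProduct.rid F H).toLinearMap ∘ₗ TensorProduct.map f g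

@[simp] lemma T0_apply (f : H →ₗ[F] H) (g : H →ₗ[F] F) (u v : H) :
    T0 f g (u ⊗ₜ v) = g v • f u := by simp [T0]

section PhiLemmas
variable {φ : H →ₗ[F] F}

lemma hphi_repr
    (hφ : ∀ x : H, TensorProduct.rid F H
      (TensorProduct.map (LinearMap.id : H →ₗ[F] H) φ (Coalgebra.comul (R := F) x))
      = φ x • (1 : H))
    {x : H} (r : Coalgebra.Repr F x ι) :
    ∑ i ∈ r.index, φ (r.right i) • r.left i = φ x • (1 : H) := by
  have h := hφ x
  rw [← r.eq] at h
  simp only [map_sum, TensorProduct.map_tmul, TensorProduct.rid_tmul, LinearMap.id_coe,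
    id_eq] at h
  exact h

lemma phi_prod
    (hφ : ∀ x : H, TensorProduct.rid F H
      (TensorProduct.map (LinearMap.id : H →ₗ[F] H) φ (Coalgebra.comul (R := F) x))
      = φ x • (1 : H))
    {a b : H} (ra : Coalgebra.Repr F a ι) (rb : Coalgebra.Repr F b κ) :
    ∑ i ∈ ra.index, ∑ j ∈ rb.index,
      φ (ra.right i * rb.right j) • (ra.left i * rb.left j) = φ (a * b) • (1 : H) := by
  have h := hphi_repr hφ (reprMul ra rb)
  simp only [reprMul_index, reprMul_left, reprMul_right] at h
  rw [← Finset.sum_product' (f := fun i j =>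
    φ (ra.right i * rb.right j) • (ra.left i * rb.left j))]
  exact h

lemma star
    (hφ : ∀ x : H, TensorProduct.rid F H
      (TensorProduct.map (LinearMap.id : H →ₗ[F] H) φ (Coalgebra.comul (R := F) x))
      = φ x • (1 : H))
    {x a : H} (r : Coalgebra.Repr F x ι) (s : Coalgebra.Repr F a κ) :
    ∑ i ∈ r.index, φ (a * r.right i) • r.left i
      = ∑ j ∈ s.index, φ (s.right j * x) • antipode (R := F) (s.left j) := by
  classical
  set sR : ∀ j, Coalgebra.Repr F (s.right j) (H × H) := fun j => Coalgebra.Repr.arbitrary F _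
  have hm := one_tmul s sR
  set B : ι → (H ⊗[F] H →ₗ[F] H) := fun i =>
    T0 (LinearMap.mulRight F (r.left i)) (φ ∘ₗ LinearMap.mulRight F (r.right i)) with hB
  have lhs : ∀ i, φ (a * r.right i) • r.left i = B i ((1 : H) ⊗ₜ[F] a) := by
    intro i; simp [hB]
  rw [Finset.sum_congr rfl fun i _ => lhs i]
  have expand : ∀ i, B i ((1 : H) ⊗ₜ[F] a) = ∑ j ∈ s.index, ∑ k ∈ (sR j).index,
      φ ((sR j).right k * r.right i) •
        ((antipode (R := F) (s.left j) * (sR j).left k) * r.left i) := by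
    intro i
    rw [← hm, map_sum]
    exact Finset.sum_congr rfl fun j _ => by
      rw [map_sum]
      exact Finset.sum_congr rfl fun k _ => by simp [hB]
  rw [Finset.sum_congr rfl fun i _ => expand i, Finset.sum_comm]
  refine Finset.sum_congr rfl fun j _ => ?_
  rw [Finset.sum_comm]
  calc ∑ k ∈ (sR j).index, ∑ i ∈ r.index,
      φ ((sR j).right k * r.right i) •
        ((antipode (R := F) (s.left j) * (sR j).left k) * r.left i)
      = antipode (R := F) (s.left j) * ∑ k ∈ (sR j).index, ∑ i ∈ r.index,
          φ ((sR j).right k * r.right i) • ((sR j).left k * r.left i) := by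
        rw [Finset.mul_sum]
        refine Finset.sum_congr rfl fun k _ => ?_
        rw [Finset.mul_sum]
        refine Finset.sum_congr rfl fun i _ => ?_
        rw [mul_smul_comm, mul_assoc]
    _ = φ (s.right j * x) • antipode (R := F) (s.left j) := by
        rw [phi_prod hφ (sR j) r, mul_smul_comm, mul_one]

end PhiLemmas
section Integral
variable {φ : H →ₗ[F] F} {Λ : H} {Si : H →ₗ[F] H}

lemma W_eq_S
    (hφ : ∀ x : H, TensorProduct.rid F H
      (TensorProduct.map (LinearMap.id : H →ₗ[F] H) φ (Coalgebra.comul (R := F) x))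
      = φ x • (1 : H))
    (hΛ : ∀ x : H, x * Λ = Coalgebra.counit (R := F) x • Λ)
    (hnorm : φ Λ = 1) (a : H) (t : Coalgebra.Repr F Λ ι) :
    ∑ i ∈ t.index, φ (a * t.right i) • t.left i = antipode (R := F) a := by
  classical
  set s := Coalgebra.Repr.arbitrary F a
  rw [star hφ t s]
  have : ∀ j ∈ s.index, φ (s.right j * Λ) • antipode (R := F) (s.left j)
      = antipode (R := F) (Coalgebra.counit (R := F) (s.right j) • s.left j) := by
    intro j _
    rw [hΛ (s.right j), map_smul, smul_eq_mul, hnorm, mul_one, map_smul]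
  rw [Finset.sum_congr rfl this, ← map_sum, csum_r s]

lemma phi_mul_Lambda
    (hΛ : ∀ x : H, x * Λ = Coalgebra.counit (R := F) x • Λ)
    (hnorm : φ Λ = 1) (b : H) : φ (b * Λ) = Coalgebra.counit (R := F) b := by
  rw [hΛ b, map_smul, smul_eq_mul, hnorm, mul_one]

lemma I3Lambda
    (hφ : ∀ x : H, TensorProduct.rid F H
      (TensorProduct.map (LinearMap.id : H →ₗ[F] H) φ (Coalgebra.comul (R := F) x))
      = φ x • (1 : H))
    (hSi₁ : Si ∘ₗ HopfAlgebra.antipode (R := F) = (LinearMap.id : H →ₗ[F] H))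
    (hSi₂ : HopfAlgebra.antipode (R := F) ∘ₗ Si = (LinearMap.id : H →ₗ[F] H))
    (t : Coalgebra.Repr F Λ ι) :
    ∑ i ∈ t.index, φ (Si (t.left i)) • t.right i = φ (Si Λ) • (1 : H) := by
  have h := hphi_repr hφ (reprSi hSi₁ hSi₂ t)
  simp only [reprSi_index, reprSi_left, reprSi_right] at h
  have h2 := congrArg (antipode (R := F)) h
  simp only [map_sum, map_smul, S_one] at h2
  rw [Finset.sum_congr rfl fun i _ => by rw [S_Si hSi₂ (t.right i)]] at h2
  exact h2

lemma phi_Si_Lambda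
    (hφ : ∀ x : H, TensorProduct.rid F H
      (TensorProduct.map (LinearMap.id : H →ₗ[F] H) φ (Coalgebra.comul (R := F) x))
      = φ x • (1 : H))
    (hφ0 : φ ≠ 0)
    (hΛ : ∀ x : H, x * Λ = Coalgebra.counit (R := F) x • Λ)
    (hnorm : φ Λ = 1)
    (hSi₁ : Si ∘ₗ HopfAlgebra.antipode (R := F) = (LinearMap.id : H →ₗ[F] H))
    (hSi₂ : HopfAlgebra.antipode (R := F) ∘ₗ Si = (LinearMap.id : H →ₗ[F] H)) :
    φ (Si Λ) = 1 := by
  classical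
  obtain ⟨a, ha⟩ : ∃ a, φ a ≠ 0 := by
    by_contra h
    push_neg at h
    exact hφ0 (LinearMap.ext fun x => by rw [h x]; rfl)
  set t := Coalgebra.Repr.arbitrary F Λ
  have h1 := I3Lambda (Λ := Λ) hφ hSi₁ hSi₂ t
  have h2 := congrArg (φ ∘ₗ LinearMap.mulLeft F a) h1
  simp only [map_sum, map_smul, LinearMap.comp_apply, LinearMap.mulLeft_apply, smul_eq_mul,
    mul_one] at h2
  -- h2 : ∑ i, φ (Si (t.left i)) * φ (a * t.right i) = φ (Si Λ) * φ a
  have h3 := congrArg (φ ∘ₗ Si) (W_eq_S hφ hΛ hnorm a t)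
  simp only [map_sum, map_smul, LinearMap.comp_apply, smul_eq_mul] at h3
  rw [Si_S hSi₁] at h3
  -- h3 : ∑ i, φ (a * t.right i) * φ (Si (t.left i)) = φ a
  have : φ (Si Λ) * φ a = φ a := by
    rw [← h2, ← h3]
    exact Finset.sum_congr rfl fun i _ => mul_comm _ _
  exact mul_right_cancel₀ ha (this.trans (one_mul (φ a)).symm)

lemma phi_SiLambda_mul
    (hφ : ∀ x : H, TensorProduct.rid F H
      (TensorProduct.map (LinearMap.id : H →ₗ[F] H) φ (Coalgebra.comul (R := F) x))
      = φ x • (1 : H))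
    (hφ0 : φ ≠ 0)
    (hΛ : ∀ x : H, x * Λ = Coalgebra.counit (R := F) x • Λ)
    (hnorm : φ Λ = 1)
    (hSi₁ : Si ∘ₗ HopfAlgebra.antipode (R := F) = (LinearMap.id : H →ₗ[F] H))
    (hSi₂ : HopfAlgebra.antipode (R := F) ∘ₗ Si = (LinearMap.id : H →ₗ[F] H))
    (h : H) : φ (Si Λ * h) = Coalgebra.counit (R := F) h := by
  have key : Si Λ * h = Coalgebra.counit (R := F) h • Si Λ := by
    have h1 : Si (antipode (R := F) h * Λ) = Si Λ * h := by
      rw [Si_mul hSi₁ hSi₂, Si_S hSi₁]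
    rw [← h1, hΛ (antipode (R := F) h), eps_S, map_smul]
  rw [key, map_smul, smul_eq_mul, phi_Si_Lambda hφ hφ0 hΛ hnorm hSi₁ hSi₂, mul_one]

end Integral
section Mlemmas
variable {φ : H →ₗ[F] F} {Si : H →ₗ[F] H} {M : H ⊗[F] H →ₗ[F] H}

lemma hM_repr
    (hM : ∀ x y : H, M (x ⊗ₜ[F] y) =
      TensorProduct.rid F H
        (TensorProduct.map (LinearMap.id : H →ₗ[F] H) (φ ∘ₗ LinearMap.mulLeft F (Si y))
          (Coalgebra.comul (R := F) x)))
    {p : H} (q : H) (rp : Coalgebra.Repr F p ι) :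
    M (p ⊗ₜ[F] q) = ∑ i ∈ rp.index, φ (Si q * rp.right i) • rp.left i := by
  rw [hM p q, ← rp.eq]
  simp only [map_sum, TensorProduct.map_tmul, TensorProduct.rid_tmul, LinearMap.id_coe,
    id_eq, LinearMap.comp_apply, LinearMap.mulLeft_apply]

lemma comul_M_left
    (hM : ∀ x y : H, M (x ⊗ₜ[F] y) =
      TensorProduct.rid F H
        (TensorProduct.map (LinearMap.id : H →ₗ[F] H) (φ ∘ₗ LinearMap.mulLeft F (Si y))
          (Coalgebra.comul (R := F) x)))
    (x y : H) (r : Coalgebra.Repr F x ι) :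
    Coalgebra.comul (R := F) (M (x ⊗ₜ[F] y))
      = ∑ i ∈ r.index, r.left i ⊗ₜ[F] M (r.right i ⊗ₜ[F] y) := by
  classical
  set rL : ∀ i, Coalgebra.Repr F (r.left i) (H × H) := fun i => Coalgebra.Repr.arbitrary F _
  set rR : ∀ i, Coalgebra.Repr F (r.right i) (H × H) := fun i => Coalgebra.Repr.arbitrary F _
  set g : H ⊗[F] (H ⊗[F] H) →ₗ[F] (H ⊗[F] H) :=
    TS (φ ∘ₗ LinearMap.mulLeft F (Si y)) with hg
  have hgapp : ∀ p q w, g (p ⊗ₜ (q ⊗ₜ w)) = φ (Si y * w) • (p ⊗ₜ[F] q) := by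
    intro p q w; simp [hg]
  calc Coalgebra.comul (R := F) (M (x ⊗ₜ[F] y))
      = ∑ i ∈ r.index, ∑ j ∈ (rL i).index,
          g ((rL i).left j ⊗ₜ ((rL i).right j ⊗ₜ r.right i)) := by
        rw [hM_repr hM y r, map_sum]
        refine Finset.sum_congr rfl fun i _ => ?_
        rw [map_smul, ← (rL i).eq, Finset.smul_sum]
        exact Finset.sum_congr rfl fun j _ => by rw [hgapp]
    _ = ∑ i ∈ r.index, ∑ k ∈ (rR i).index,
          g (r.left i ⊗ₜ ((rR i).left k ⊗ₜ (rR i).right k)) := sum_ex g r rL rR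
    _ = ∑ i ∈ r.index, r.left i ⊗ₜ[F] M (r.right i ⊗ₜ[F] y) := by
        refine Finset.sum_congr rfl fun i _ => ?_
        rw [hM_repr hM y (rR i), TensorProduct.tmul_sum]
        exact Finset.sum_congr rfl fun k _ => by
          rw [hgapp, TensorProduct.tmul_smul]

lemma comul_M_right
    (hφ : ∀ x : H, TensorProduct.rid F H
      (TensorProduct.map (LinearMap.id : H →ₗ[F] H) φ (Coalgebra.comul (R := F) x))
      = φ x • (1 : H))
    (hSi₁ : Si ∘ₗ HopfAlgebra.antipode (R := F) = (LinearMap.id : H →ₗ[F] H))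
    (hSi₂ : HopfAlgebra.antipode (R := F) ∘ₗ Si = (LinearMap.id : H →ₗ[F] H))
    (hM : ∀ x y : H, M (x ⊗ₜ[F] y) =
      TensorProduct.rid F H
        (TensorProduct.map (LinearMap.id : H →ₗ[F] H) (φ ∘ₗ LinearMap.mulLeft F (Si y))
          (Coalgebra.comul (R := F) x)))
    (x y : H) (u : Coalgebra.Repr F y ι) :
    Coalgebra.comul (R := F) (M (x ⊗ₜ[F] y))
      = ∑ j ∈ u.index, M (x ⊗ₜ[F] u.left j) ⊗ₜ[F] u.right j := by
  classical
  set r := Coalgebra.Repr.arbitrary F x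
  set rR : ∀ i, Coalgebra.Repr F (r.right i) (H × H) := fun i => Coalgebra.Repr.arbitrary F _
  rw [comul_M_left hM x y r]
  have key : ∀ i, M (r.right i ⊗ₜ[F] y)
      = ∑ j ∈ u.index, φ (Si (u.left j) * r.right i) • u.right j := by
    intro i
    rw [hM_repr hM y (rR i), star (a := Si y) hφ (rR i) (reprSi hSi₁ hSi₂ u)]
    simp only [reprSi_index, reprSi_left, reprSi_right]
    exact Finset.sum_congr rfl fun j _ => by rw [S_Si hSi₂]
  rw [Finset.sum_congr rfl fun i _ => by rw [key i]]
  calc ∑ i ∈ r.index, r.left i ⊗ₜ[F]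
        (∑ j ∈ u.index, φ (Si (u.left j) * r.right i) • u.right j)
      = ∑ i ∈ r.index, ∑ j ∈ u.index,
          φ (Si (u.left j) * r.right i) • (r.left i ⊗ₜ[F] u.right j) := by
        refine Finset.sum_congr rfl fun i _ => ?_
        rw [TensorProduct.tmul_sum]
        exact Finset.sum_congr rfl fun j _ => by rw [TensorProduct.tmul_smul]
    _ = ∑ j ∈ u.index, (∑ i ∈ r.index,
          φ (Si (u.left j) * r.right i) • r.left i) ⊗ₜ[F] u.right j := by
        rw [Finset.sum_comm]
        refine Finset.sum_congr rfl fun j _ => ?_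
        rw [TensorProduct.sum_tmul]
        exact Finset.sum_congr rfl fun i _ => by rw [TensorProduct.smul_tmul']
    _ = ∑ j ∈ u.index, M (x ⊗ₜ[F] u.left j) ⊗ₜ[F] u.right j := by
        exact Finset.sum_congr rfl fun j _ => by rw [hM_repr hM (u.left j) r]

end Mlemmas
end Aux

set_option synthInstance.maxHeartbeats 1000000

/-- The regular representation `Q = H` of a finite-dimensional Hopf algebra `H`, with
`v : c ↦ cΛ`, `v' = ε`, `w = Δ` and `w' = m̃` (the pullback of the multiplication of `Ĥ`,
with `m̃(x ⊗ y) = x₍₁₎ φ(S⁻¹(y) x₍₂₎)`), is a Frobenius algebra in `H`-mod: all four maps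
are morphisms of left `H`-modules (with `H` acting on `F` via `ε` and on `H ⊗ H` via `Δ`),
`(Q, w', v)` is a monoid, `(Q, w, v')` is a comonoid, and the Frobenius condition holds. -/
theorem regular_representation_frobenius_algebra
    (F H : Type*) [Field F] [Ring H] [HopfAlgebra F H] [FiniteDimensional F H]
    (Λ : H) (hΛ0 : Λ ≠ 0)
    (hΛ : ∀ x : H, x * Λ = Coalgebra.counit (R := F) x • Λ)
    (φ : H →ₗ[F] F) (hφ0 : φ ≠ 0)
    (hφ : ∀ x : H,
      TensorProduct.rid F H
        (TensorProduct.map (LinearMap.id : H →ₗ[F] H) φ (Coalgebra.comul (R := F) x))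
        = φ x • (1 : H))
    (hnorm : φ Λ = 1)
    (Si : H →ₗ[F] H)
    (hSi₁ : Si ∘ₗ HopfAlgebra.antipode (R := F) = (LinearMap.id : H →ₗ[F] H))
    (hSi₂ : HopfAlgebra.antipode (R := F) ∘ₗ Si = (LinearMap.id : H →ₗ[F] H))
    (M : H ⊗[F] H →ₗ[F] H)
    (hM : ∀ x y : H, M (x ⊗ₜ[F] y) =
      TensorProduct.rid F H
        (TensorProduct.map (LinearMap.id : H →ₗ[F] H) (φ ∘ₗ LinearMap.mulLeft F (Si y))
          (Coalgebra.comul (R := F) x))) :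
    -- `v : c ↦ c • Λ` is a morphism of `H`-modules (`H` acts on `F` through `ε`):
    (∀ (z : H) (c : F), (Coalgebra.counit (R := F) z * c) • Λ = z * (c • Λ)) ∧
    -- `v' = ε` is a morphism of `H`-modules:
    (∀ z x : H, Coalgebra.counit (R := F) (z * x)
        = Coalgebra.counit (R := F) z * Coalgebra.counit (R := F) x) ∧
    -- `w = Δ` is a morphism of `H`-modules (`H` acts on `H ⊗ H` through `Δ`):
    (∀ z x : H, Coalgebra.comul (R := F) (z * x)
        = Coalgebra.comul (R := F) z * Coalgebra.comul (R := F) x) ∧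
    -- `w' = m̃` is a morphism of `H`-modules:
    (∀ (z : H) (t : H ⊗[F] H), M (Coalgebra.comul (R := F) z * t) = z * M t) ∧
    -- `(Q, w', v)` is a monoid:
    (∀ x y z : H, M (M (x ⊗ₜ[F] y) ⊗ₜ[F] z) = M (x ⊗ₜ[F] M (y ⊗ₜ[F] z))) ∧
    (∀ x : H, M (Λ ⊗ₜ[F] x) = x ∧ M (x ⊗ₜ[F] Λ) = x) ∧
    -- `(Q, w, v')` is a comonoid:
    (∀ x : H, TensorProduct.assoc F H H H
        (LinearMap.rTensor H (Coalgebra.comul (R := F)) (Coalgebra.comul (R := F) x))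
        = LinearMap.lTensor H (Coalgebra.comul (R := F)) (Coalgebra.comul (R := F) x)) ∧
    (∀ x : H, TensorProduct.lid F H
          (LinearMap.rTensor H (Coalgebra.counit (R := F)) (Coalgebra.comul (R := F) x)) = x ∧
        TensorProduct.rid F H
          (LinearMap.lTensor H (Coalgebra.counit (R := F)) (Coalgebra.comul (R := F) x)) = x) ∧
    -- the Frobenius condition `(w' ⊗ id) ∘ (id ⊗ w) = w ∘ w' = (id ⊗ w') ∘ (w ⊗ id)`:
    (∀ x y : H,
      LinearMap.rTensor H M
          ((TensorProduct.assoc F H H H).symm (x ⊗ₜ[F] Coalgebra.comul (R := F) y))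
        = Coalgebra.comul (R := F) (M (x ⊗ₜ[F] y)) ∧
      Coalgebra.comul (R := F) (M (x ⊗ₜ[F] y))
        = LinearMap.lTensor H M
            (TensorProduct.assoc F H H H (Coalgebra.comul (R := F) x ⊗ₜ[F] y))) := by
  classical
  refine ⟨?_, ?_, ?_, ?_, ?_, ?_, ?_, ?_, ?_⟩
  · -- v is a module morphism
    intro z c
    rw [mul_smul_comm, hΛ z, smul_smul, mul_comm]
  · -- counit is an algebra morphism
    intro z x
    exact Bialgebra.counit_mul z x
  · -- comul is an algebra morphism
    intro z x
    exact Bialgebra.comul_mul z x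
  · -- M is a module morphism
    intro z t
    induction t using TensorProduct.induction_on with
    | zero => simp
    | add t₁ t₂ ih₁ ih₂ => rw [mul_add, map_add, ih₁, ih₂, map_add, mul_add]
    | tmul x y =>
      set rs := Coalgebra.Repr.arbitrary F z
      set sL : ∀ j, Coalgebra.Repr F (rs.left j) (H × H) := fun j => Coalgebra.Repr.arbitrary F _
      set sR : ∀ j, Coalgebra.Repr F (rs.right j) (H × H) := fun j => Coalgebra.Repr.arbitrary F _
      set rx := Coalgebra.Repr.arbitrary F x
      set κ : (H × H) → (H ⊗[F] H →ₗ[F] F) := fun i =>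
        φ ∘ₗ LinearMap.mulLeft F (Si y) ∘ₗ LinearMap.mul' F H ∘ₗ
          TensorProduct.map Si (LinearMap.mulRight F (rx.right i)) ∘ₗ
          (TensorProduct.comm F H H).toLinearMap with hκ
      have hκapp : ∀ i q w, κ i (q ⊗ₜ w) = φ (Si y * (Si w * (q * rx.right i))) := by
        intro i q w; simp [hκ]
      set T : H ⊗[F] (H ⊗[F] H) →ₗ[F] H := ∑ i ∈ rx.index,
        T1 (LinearMap.mulRight F (rx.left i)) (κ i) with hT
      have hTapp : ∀ p q w, T (p ⊗ₜ (q ⊗ₜ w))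
          = ∑ i ∈ rx.index, φ (Si y * (Si w * (q * rx.right i))) • (p * rx.left i) := by
        intro p q w
        rw [hT, LinearMap.sum_apply]
        exact Finset.sum_congr rfl fun i _ => by
          rw [T1_apply, hκapp, LinearMap.mulRight_apply]
      -- expand the left-hand side
      have step1 : M (Coalgebra.comul (R := F) z * (x ⊗ₜ[F] y))
          = ∑ j ∈ rs.index, ∑ j' ∈ (sL j).index,
              T ((sL j).left j' ⊗ₜ ((sL j).right j' ⊗ₜ rs.right j)) := by
        rw [← rs.eq, Finset.sum_mul, map_sum]
        refine Finset.sum_congr rfl fun j _ => ?_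
        rw [Algebra.TensorProduct.tmul_mul_tmul, hM_repr hM _ (reprMul (sL j) rx)]
        simp only [reprMul_index, reprMul_left, reprMul_right]
        have rhs : ∑ j' ∈ (sL j).index, T ((sL j).left j' ⊗ₜ ((sL j).right j' ⊗ₜ rs.right j))
            = ∑ j' ∈ (sL j).index, ∑ i ∈ rx.index,
                φ (Si y * (Si (rs.right j) * ((sL j).right j' * rx.right i)))
                  • ((sL j).left j' * rx.left i) :=
          Finset.sum_congr rfl fun j' _ => hTapp _ _ _
        rw [rhs, ← Finset.sum_product' (f := fun j' i =>
          φ (Si y * (Si (rs.right j) * ((sL j).right j' * rx.right i)))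
            • ((sL j).left j' * rx.left i))]
        refine Finset.sum_congr rfl fun p _ => ?_
        congr 2
        rw [Si_mul hSi₁ hSi₂, mul_assoc]
      rw [step1, sum_ex T rs sL sR]
      -- collapse
      have step2 : ∀ j, ∑ k ∈ (sR j).index,
          T (rs.left j ⊗ₜ ((sR j).left k ⊗ₜ (sR j).right k))
          = ∑ i ∈ rx.index, (Coalgebra.counit (R := F) (rs.right j)
              * φ (Si y * rx.right i)) • (rs.left j * rx.left i) := by
        intro j
        rw [Finset.sum_congr rfl fun k _ => hTapp _ _ _, Finset.sum_comm]
        refine Finset.sum_congr rfl fun i _ => ?_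
        rw [← Finset.sum_smul]
        congr 1
        have : ∀ k, φ (Si y * (Si ((sR j).right k) * ((sR j).left k * rx.right i)))
            = φ (Si y * ((Si ((sR j).right k) * (sR j).left k) * rx.right i)) := by
          intro k; rw [mul_assoc]
        rw [Finset.sum_congr rfl fun k _ => this k]
        have lin : ∀ k, φ (Si y * ((Si ((sR j).right k) * (sR j).left k) * rx.right i))
            = (φ ∘ₗ LinearMap.mulLeft F (Si y) ∘ₗ LinearMap.mulRight F (rx.right i))
                (Si ((sR j).right k) * (sR j).left k) := by
          intro k; simp
        rw [Finset.sum_congr rfl fun k _ => lin k, ← map_sum,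
          sum_Si_right_mul_left hSi₁ hSi₂ (sR j)]
        simp [smul_mul_assoc]
      rw [Finset.sum_congr rfl fun j _ => step2 j]
      -- assemble the right-hand side
      rw [hM_repr hM y rx]
      conv_rhs => rw [← csum_r rs]
      rw [Finset.sum_mul]
      refine Finset.sum_congr rfl fun j _ => ?_
      rw [smul_mul_assoc, Finset.mul_sum, Finset.smul_sum]
      refine Finset.sum_congr rfl fun i _ => ?_
      rw [mul_smul_comm, smul_smul]
  · -- associativity of M
    intro x y z
    set u := Coalgebra.Repr.arbitrary F y
    have hL : M (M (x ⊗ₜ[F] y) ⊗ₜ[F] z)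
        = ∑ j ∈ u.index, φ (Si z * u.right j) • M (x ⊗ₜ[F] u.left j) := by
      rw [hM (M (x ⊗ₜ[F] y)) z, comul_M_right hφ hSi₁ hSi₂ hM x y u, map_sum, map_sum]
      exact Finset.sum_congr rfl fun j _ => by simp
    have hR : M (x ⊗ₜ[F] M (y ⊗ₜ[F] z))
        = ∑ j ∈ u.index, φ (Si z * u.right j) • M (x ⊗ₜ[F] u.left j) := by
      rw [hM_repr hM z u, TensorProduct.tmul_sum, map_sum]
      exact Finset.sum_congr rfl fun j _ => by rw [TensorProduct.tmul_smul, map_smul]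
    rw [hL, hR]
  · -- unit laws
    intro x
    constructor
    · rw [hM_repr hM x (Coalgebra.Repr.arbitrary F Λ),
        W_eq_S hφ hΛ hnorm (Si x) (Coalgebra.Repr.arbitrary F Λ), S_Si hSi₂]
    · rw [hM_repr hM Λ (Coalgebra.Repr.arbitrary F x)]
      rw [Finset.sum_congr rfl fun i _ => by
        rw [phi_SiLambda_mul hφ hφ0 hΛ hnorm hSi₁ hSi₂]]
      exact csum_r _
  · -- coassociativity
    intro x
    exact Coalgebra.coassoc_apply x
  · -- counit laws
    intro x
    constructor
    · rw [Coalgebra.rTensor_counit_comul]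
      simp
    · rw [Coalgebra.lTensor_counit_comul]
      simp
  · -- Frobenius condition
    intro x y
    constructor
    · set u := Coalgebra.Repr.arbitrary F y
      rw [comul_M_right hφ hSi₁ hSi₂ hM x y u, ← u.eq, TensorProduct.tmul_sum]
      rw [map_sum, map_sum]
      exact Finset.sum_congr rfl fun j _ => by
        rw [TensorProduct.assoc_symm_tmul, LinearMap.rTensor_tmul]
    · set r := Coalgebra.Repr.arbitrary F x
      rw [comul_M_left hM x y r, ← r.eq, TensorProduct.sum_tmul]
      rw [map_sum, map_sum]
      exact Finset.sum_congr rfl fun i _ => by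
        rw [TensorProduct.assoc_tmul, LinearMap.lTensor_tmul]
end

section
/- Let E be a bicategory with objects A, B and a 1-morphism J : B → A with two-sided dual J̄ : A → B, such that the duality 2-morphisms can be chosen with η_J ∘ e_J invertible in End(1_A) and d_J ∘ ε_J invertible in End(1_B). Then the functor X ↦ X ∘ J from Hom_E(A,A) to Hom_E(B,A) is faithful, and every 1-morphism X : B → A is a retract of Y ∘ J for some Y : A → A (namely Y = X ∘ J̄). -/
open CategoryTheory Bicategory

/-!
Whiskering by `𝟙` is isomorphic to the identity, and `𝟙 a` is a retract of `J̄ ≫ J` (resp.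
`𝟙 b` of `J ≫ J̄`) as soon as `e ≫ η` (resp. `ε ≫ d`) is invertible. Retracts survive
whiskering, so `J̄ ≫ J ≫ -` is faithful because `𝟙 a ≫ -` is, hence so is `J ≫ -`; and
`X ≅ 𝟙 b ≫ X` is a retract of `(J ≫ J̄) ≫ X ≅ J ≫ (J̄ ≫ X)`.
-/

namespace CategoryTheory

variable {C : Type*} [Category C]

noncomputable def Retract.ofIsIsoComp {X Y : C} (i : X ⟶ Y) (r : Y ⟶ X) [IsIso (i ≫ r)] :
    Retract X Y where
  i := i
  r := r ≫ inv (i ≫ r)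
  retract := by rw [← Category.assoc, IsIso.hom_inv_id]

theorem Functor.Faithful.of_retract {D : Type*} [Category D] {F G : C ⥤ D}
    (ρ : Retract F G) [F.Faithful] : G.Faithful where
  map_injective {X Y} k k' h := F.map_injective <| by
    have hF : ∀ k : X ⟶ Y, F.map k = ρ.i.app X ≫ G.map k ≫ ρ.r.app Y := fun k => by
      rw [← NatTrans.naturality_assoc, ← NatTrans.comp_app, ρ.retract, NatTrans.id_app,
        Category.comp_id]
    rw [hF k, hF k', h]

namespace Bicategory

variable {B : Type*} [Bicategory B] {a b : B}

instance precomp_id_faithful (c : B) : (precomp c (𝟙 a)).Faithful :=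
  Functor.Faithful.of_iso (leftUnitorNatIso a c).symm

theorem precomp_faithful_of_retract {h : a ⟶ a} (ρ : Retract (𝟙 a) h) (c : B) :
    (precomp c h).Faithful :=
  Functor.Faithful.of_retract (F := precomp c (𝟙 a)) (ρ.map (precomposing a a c))

theorem precomp_faithful_of_isIso_comp {f : a ⟶ b} {g : b ⟶ a} (e : 𝟙 a ⟶ f ≫ g)
    (η : f ≫ g ⟶ 𝟙 a) [IsIso (e ≫ η)] (c : B) : (precomp c g).Faithful :=
  have := precomp_faithful_of_retract (Retract.ofIsIsoComp e η) c
  Functor.Faithful.of_comp_iso (H := precomp c (f ≫ g)) (associatorNatIsoRight f g c).symm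

def retractCompOfRetractId {h : b ⟶ b} (ρ : Retract (𝟙 b) h) {c : B} (X : b ⟶ c) :
    Retract X (h ≫ X) :=
  (Retract.ofIso (λ_ X).symm).trans (ρ.map (postcomp b X))

end Bicategory

end CategoryTheory

theorem dual_one_morphism_faithful_dominant_general
    {B : Type*} [Bicategory B] {a b : B}
    (J : b ⟶ a) (Jbar : a ⟶ b)
    (e : 𝟙 a ⟶ Jbar ≫ J) (d : J ≫ Jbar ⟶ 𝟙 b)
    (εJ : 𝟙 b ⟶ J ≫ Jbar) (η : Jbar ≫ J ⟶ 𝟙 a)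
    -- invertibility of `η ∘ e` in `End(𝟙 A)` and of `d ∘ ε` in `End(𝟙 B)`:
    (hinv₁ : IsIso (e ≫ η)) (hinv₂ : IsIso (εJ ≫ d)) :
    (∀ (X Y : a ⟶ a) (f g : X ⟶ Y), J ◁ f = J ◁ g → f = g) ∧
    (∀ X : b ⟶ a, ∃ (Y : a ⟶ a) (i : X ⟶ J ≫ Y) (p : J ≫ Y ⟶ X), i ≫ p = 𝟙 X) := by
  refine ⟨fun X Y f g h => ?_, fun X => ?_⟩
  · have := precomp_faithful_of_isIso_comp e η a
    exact (precomp a J).map_injective h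
  · let ρ := (retractCompOfRetractId (Retract.ofIsIsoComp εJ d) X).trans
      (Retract.ofIso (α_ J Jbar X))
    exact ⟨Jbar ≫ X, ρ.i, ρ.r, ρ.retract⟩

/-- In a bicategory, if `J : B ⟶ A` has a two-sided dual `J̄ : A ⟶ B` whose duality 2-cells
can be chosen with `η_J ∘ e_J` and `d_J ∘ ε_J` invertible, then the functor `X ↦ X ∘ J`
from `Hom(A,A)` to `Hom(B,A)` is faithful, and every `X : B ⟶ A` is a retract of `Y ∘ J`
for some `Y : A ⟶ A`. -/
theorem dual_one_morphism_faithful_dominant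
    {B : Type*} [Bicategory B] {a b : B}
    (J : b ⟶ a) (Jbar : a ⟶ b)
    (e : 𝟙 a ⟶ Jbar ≫ J) (d : J ≫ Jbar ⟶ 𝟙 b)
    (εJ : 𝟙 b ⟶ J ≫ Jbar) (η : Jbar ≫ J ⟶ 𝟙 a)
    -- `(e, d)` exhibits an adjunction `J ⊣ J̄` (triangle identities):
    (zig₁ : (ρ_ J).inv ≫ (J ◁ e) ≫ (α_ J Jbar J).inv ≫ (d ▷ J) ≫ (λ_ J).hom = 𝟙 J)
    (zig₂ : (λ_ Jbar).inv ≫ (e ▷ Jbar) ≫ (α_ Jbar J Jbar).hom ≫ (Jbar ◁ d) ≫ (ρ_ Jbar).hom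
        = 𝟙 Jbar)
    -- `(ε, η)` exhibits an adjunction `J̄ ⊣ J` (triangle identities):
    (zag₁ : (λ_ J).inv ≫ (εJ ▷ J) ≫ (α_ J Jbar J).hom ≫ (J ◁ η) ≫ (ρ_ J).hom = 𝟙 J)
    (zag₂ : (ρ_ Jbar).inv ≫ (Jbar ◁ εJ) ≫ (α_ Jbar J Jbar).inv ≫ (η ▷ Jbar) ≫ (λ_ Jbar).hom
        = 𝟙 Jbar)
    -- invertibility of `η ∘ e` in `End(𝟙 A)` and of `d ∘ ε` in `End(𝟙 B)`:
    (hinv₁ : IsIso (e ≫ η)) (hinv₂ : IsIso (εJ ≫ d)) :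
    (∀ (X Y : a ⟶ a) (f g : X ⟶ Y), J ◁ f = J ◁ g → f = g) ∧
    (∀ X : b ⟶ a, ∃ (Y : a ⟶ a) (i : X ⟶ J ≫ Y) (p : J ≫ Y ⟶ X), i ≫ p = 𝟙 X) :=
  dual_one_morphism_faithful_dominant_general J Jbar e d εJ η hinv₁ hinv₂
end

section
/- Let E be a semisimple F-linear bicategory (a Morita context) with two objects A, B, simple units 1_A, 1_B, and mutually dual 1-morphisms J : B → A, J̄ : A → B with d(J) = d(J̄) ≠ 0, such that finitely many isomorphism classes of simple 1-morphisms exist and each simple 1-morphism of each of the four hom-categories appears as a retract of an alternating composite of J and J̄. Then Σ_i d(X_i)² = Σ_k d(Y_k)², where {X_i} are representatives of the simple objects of END_E(A) and {Y_k} representatives of the simple 1-morphisms in Hom_E(B,A); in particular dim END_E(A) = dim END_E(B). -/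
open CategoryTheory Bicategory Module

/-! Let `N i k = dim Hom(Y k, J ≫ X i)`. Decomposing `J ≫ X i` into the `Y k` gives
`d(J) d(X i) = Σ k, N i k * d(Y k)`; the adjunction `J ⊣ J̄` identifies `N i k` with
`dim Hom(J̄ ≫ Y k, X i)`, so decomposing `J̄ ≫ Y k` into the `X i` gives
`d(J̄) d(Y k) = Σ i, N i k * d(X i)`. Summing `d(X i) * N i k * d(Y k)` both ways yields
`d(J) Σ d(X i)² = d(J) Σ d(Y k)²`, and `d(J) ≠ 0` cancels. -/

namespace CategoryTheory

section Semisimple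

variable {C : Type*} [Category C] [Preadditive C]

def IsDirectSumDecomposition {ι : Type*} [Fintype ι] (Z : C) (W : ι → C)
    (u : ∀ p, W p ⟶ Z) (u' : ∀ p, Z ⟶ W p) : Prop :=
  (∑ p, u' p ≫ u p) = 𝟙 Z ∧ (∀ p, u p ≫ u' p = 𝟙 (W p)) ∧ ∀ p q, p ≠ q → u p ≫ u' q = 0

def IsAdditiveOnDirectSums {M : Type*} [AddCommMonoid M] (d : C → M) : Prop :=
  ∀ (Z : C) (N : ℕ) (W : Fin N → C) (u : ∀ p, W p ⟶ Z) (u' : ∀ p, Z ⟶ W p),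
    IsDirectSumDecomposition Z W u u' → d Z = ∑ p, d (W p)

theorem IsAdditiveOnDirectSums.eq_zero_of_id_eq_zero {M : Type*} [AddCommMonoid M] {d : C → M}
    (hd : IsAdditiveOnDirectSums d) {S : C} (h : 𝟙 S = 0) : d S = 0 := by
  simpa using hd S 0 Fin.elim0 (fun p => p.elim0) (fun p => p.elim0)
    ⟨by simp [h], fun p => p.elim0, fun p => p.elim0⟩

variable {F : Type*} [Field F] [Linear F C]

namespace IsDirectSumDecomposition

variable {ι : Type*} [Fintype ι] {Z : C} {W : ι → C} {u : ∀ p, W p ⟶ Z} {u' : ∀ p, Z ⟶ W p}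

variable (F) in
def homLinearEquivPi (hZ : IsDirectSumDecomposition Z W u u') (S : C) :
    (S ⟶ Z) ≃ₗ[F] (∀ p, S ⟶ W p) where
  toFun f p := f ≫ u' p
  invFun g := ∑ p, g p ≫ u p
  map_add' f g := by ext; simp
  map_smul' t f := by ext; simp
  left_inv f := by simp [← Preadditive.comp_sum, hZ.1]
  right_inv g := by
    ext q
    simp only [Preadditive.sum_comp, Category.assoc]
    rw [Finset.sum_eq_single q (fun p _ hpq => by rw [hZ.2.2 p q hpq, Limits.comp_zero])
      (by simp), hZ.2.1, Category.comp_id]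

variable (F) in
def homLinearEquivPi' (hZ : IsDirectSumDecomposition Z W u u') (S : C) :
    (Z ⟶ S) ≃ₗ[F] (∀ p, W p ⟶ S) where
  toFun f p := u p ≫ f
  invFun g := ∑ p, u' p ≫ g p
  map_add' f g := by ext; simp
  map_smul' t f := by ext; simp
  left_inv f := by simp [← Category.assoc, ← Preadditive.sum_comp, hZ.1]
  right_inv g := by
    ext p
    simp only [Preadditive.comp_sum, ← Category.assoc]
    rw [Finset.sum_eq_single p (fun q _ hqp => by rw [hZ.2.2 p q hqp.symm, Limits.zero_comp])
      (by simp), hZ.2.1, Category.id_comp]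

theorem finrank_hom_eq_sum (hZ : IsDirectSumDecomposition Z W u u') (S : C)
    [∀ p, Module.Finite F (S ⟶ W p)] :
    finrank F (S ⟶ Z) = ∑ p, finrank F (S ⟶ W p) := by
  rw [(hZ.homLinearEquivPi F S).finrank_eq, Module.finrank_pi_fintype]

theorem finrank_hom_eq_sum' (hZ : IsDirectSumDecomposition Z W u u') (S : C)
    [∀ p, Module.Finite F (W p ⟶ S)] :
    finrank F (Z ⟶ S) = ∑ p, finrank F (W p ⟶ S) := by
  rw [(hZ.homLinearEquivPi' F S).finrank_eq, Module.finrank_pi_fintype]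

end IsDirectSumDecomposition

theorem finite_end_of_forall_eq_smul_id {S : C} (hS : ∀ f : S ⟶ S, ∃ c : F, f = c • 𝟙 S) :
    Module.Finite F (S ⟶ S) :=
  Module.Finite.of_surjective (LinearMap.toSpanSingleton F (S ⟶ S) (𝟙 S))
    fun f => (hS f).imp fun _ hc => hc.symm

theorem finrank_end_of_forall_eq_smul_id {S : C} (hS : ∀ f : S ⟶ S, ∃ c : F, f = c • 𝟙 S)
    (h1 : 𝟙 S ≠ 0) : finrank F (S ⟶ S) = 1 :=
  (finrank_eq_one_iff_of_nonzero' _ h1).mpr fun f => (hS f).imp fun _ hc => hc.symm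

theorem IsAdditiveOnDirectSums.finrank_end_mul {d : C → F} (hd : IsAdditiveOnDirectSums d)
    {S : C} (hS : ∀ f : S ⟶ S, ∃ c : F, f = c • 𝟙 S) :
    (finrank F (S ⟶ S) : F) * d S = d S := by
  by_cases h1 : 𝟙 S = 0
  · simp [hd.eq_zero_of_id_eq_zero h1]
  · simp [finrank_end_of_forall_eq_smul_id hS h1]

section Family

variable {ι : Type*} {Y : ι → C}

theorem subsingleton_hom_of_ne (hYdisj : ∀ k l, k ≠ l → ∀ f : Y k ⟶ Y l, f = 0) {k l : ι}
    (hkl : k ≠ l) : Subsingleton (Y k ⟶ Y l) :=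
  ⟨fun f g => (hYdisj k l hkl f).trans (hYdisj k l hkl g).symm⟩

theorem finite_hom_of_forall_eq_smul_id (hY : ∀ k (f : Y k ⟶ Y k), ∃ c : F, f = c • 𝟙 (Y k))
    (hYdisj : ∀ k l, k ≠ l → ∀ f : Y k ⟶ Y l, f = 0) (k l : ι) :
    Module.Finite F (Y k ⟶ Y l) := by
  by_cases hkl : k = l
  · subst hkl
    exact finite_end_of_forall_eq_smul_id (hY k)
  · have := subsingleton_hom_of_ne hYdisj hkl
    infer_instance

theorem IsAdditiveOnDirectSums.sum_finrank_hom_mul [Fintype ι] {d : C → F}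
    (hd : IsAdditiveOnDirectSums d)
    (hY : ∀ k (f : Y k ⟶ Y k), ∃ c : F, f = c • 𝟙 (Y k))
    (hYdisj : ∀ k l, k ≠ l → ∀ f : Y k ⟶ Y l, f = 0) (l : ι) :
    ∑ k, (finrank F (Y k ⟶ Y l) : F) * d (Y k) = d (Y l) := by
  refine (Finset.sum_eq_single l (fun k _ hkl => ?_) (by simp)).trans
    (hd.finrank_end_mul (hY l))
  have := subsingleton_hom_of_ne hYdisj hkl
  simp [finrank_zero_of_subsingleton]

theorem IsAdditiveOnDirectSums.sum_finrank_hom_mul' [Fintype ι] {d : C → F}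
    (hd : IsAdditiveOnDirectSums d)
    (hY : ∀ k (f : Y k ⟶ Y k), ∃ c : F, f = c • 𝟙 (Y k))
    (hYdisj : ∀ k l, k ≠ l → ∀ f : Y k ⟶ Y l, f = 0) (l : ι) :
    ∑ k, (finrank F (Y l ⟶ Y k) : F) * d (Y k) = d (Y l) := by
  refine (Finset.sum_eq_single l (fun k _ hkl => ?_) (by simp)).trans
    (hd.finrank_end_mul (hY l))
  have := subsingleton_hom_of_ne hYdisj hkl.symm
  simp [finrank_zero_of_subsingleton]

theorem IsAdditiveOnDirectSums.eq_sum_finrank_hom_mul [Fintype ι] {d : C → F}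
    (hd : IsAdditiveOnDirectSums d)
    (hY : ∀ k (f : Y k ⟶ Y k), ∃ c : F, f = c • 𝟙 (Y k))
    (hYdisj : ∀ k l, k ≠ l → ∀ f : Y k ⟶ Y l, f = 0) {Z : C} {N : ℕ} {c : Fin N → ι}
    {u : ∀ p, Y (c p) ⟶ Z} {u' : ∀ p, Z ⟶ Y (c p)}
    (hZ : IsDirectSumDecomposition Z (fun p => Y (c p)) u u') :
    d Z = ∑ k, (finrank F (Y k ⟶ Z) : F) * d (Y k) := by
  have := finite_hom_of_forall_eq_smul_id hY hYdisj
  simp_rw [hZ.finrank_hom_eq_sum, Nat.cast_sum, Finset.sum_mul]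
  rw [Finset.sum_comm, hd Z N _ u u' hZ]
  exact Finset.sum_congr rfl fun p _ => (hd.sum_finrank_hom_mul hY hYdisj (c p)).symm

theorem IsAdditiveOnDirectSums.eq_sum_finrank_hom_mul' [Fintype ι] {d : C → F}
    (hd : IsAdditiveOnDirectSums d)
    (hY : ∀ k (f : Y k ⟶ Y k), ∃ c : F, f = c • 𝟙 (Y k))
    (hYdisj : ∀ k l, k ≠ l → ∀ f : Y k ⟶ Y l, f = 0) {Z : C} {N : ℕ} {c : Fin N → ι}
    {u : ∀ p, Y (c p) ⟶ Z} {u' : ∀ p, Z ⟶ Y (c p)}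
    (hZ : IsDirectSumDecomposition Z (fun p => Y (c p)) u u') :
    d Z = ∑ k, (finrank F (Z ⟶ Y k) : F) * d (Y k) := by
  have := finite_hom_of_forall_eq_smul_id hY hYdisj
  simp_rw [hZ.finrank_hom_eq_sum', Nat.cast_sum, Finset.sum_mul]
  rw [Finset.sum_comm, hd Z N _ u u' hZ]
  exact Finset.sum_congr rfl fun p _ => (hd.sum_finrank_hom_mul' hY hYdisj (c p)).symm

end Family

end Semisimple

namespace Bicategory

variable {B : Type*} [Bicategory B]

def Adjunction.ofZigzag {a b : B} {f : a ⟶ b} {g : b ⟶ a}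
    (unit : 𝟙 a ⟶ f ≫ g) (counit : g ≫ f ⟶ 𝟙 b)
    (left : (λ_ f).inv ≫ (unit ▷ f) ≫ (α_ f g f).hom ≫ (f ◁ counit) ≫ (ρ_ f).hom = 𝟙 f)
    (right : (ρ_ g).inv ≫ (g ◁ unit) ≫ (α_ g f g).inv ≫ (counit ▷ g) ≫ (λ_ g).hom = 𝟙 g) :
    f ⊣ g where
  unit := unit
  counit := counit
  left_triangle := by
    rw [← cancel_epi (λ_ f).inv, ← cancel_mono (ρ_ f).hom]
    simpa [leftZigzag, bicategoricalComp] using left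
  right_triangle := by
    rw [← cancel_epi (ρ_ g).inv, ← cancel_mono (λ_ g).hom]
    simpa [rightZigzag, bicategoricalComp] using right

variable {F : Type*} [Field F] [∀ x y : B, Preadditive (x ⟶ y)] [∀ x y : B, Linear F (x ⟶ y)]
  {b c d : B} {l : b ⟶ c} {r : c ⟶ b} {g : b ⟶ d} {h : c ⟶ d}

def Adjunction.homLinearEquiv₁ (adj : l ⊣ r)
    (hadd : ∀ β γ : g ⟶ l ≫ h, r ◁ (β + γ) = r ◁ β + r ◁ γ)
    (hsmul : ∀ (t : F) (β : g ⟶ l ≫ h), r ◁ (t • β) = t • r ◁ β) :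
    (g ⟶ l ≫ h) ≃ₗ[F] (r ≫ g ⟶ h) where
  __ := adj.homEquiv₁
  map_add' β γ := by simp [Adjunction.homEquiv₁_apply, hadd, Preadditive.add_comp]
  map_smul' t β := by simp [Adjunction.homEquiv₁_apply, hsmul, Linear.smul_comp]

end Bicategory

end CategoryTheory

theorem sum_sq_eq_of_mul_eq_sum {R : Type*} [CommRing R] [IsDomain R] {ι κ : Type*}
    [Fintype ι] [Fintype κ] {x : ι → R} {y : κ → R} (N : ι → κ → R) {t : R} (ht : t ≠ 0)
    (hx : ∀ i, t * x i = ∑ k, N i k * y k) (hy : ∀ k, t * y k = ∑ i, N i k * x i) :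
    ∑ i, x i ^ 2 = ∑ k, y k ^ 2 := by
  refine mul_left_cancel₀ ht ?_
  calc t * ∑ i, x i ^ 2
      = ∑ i, x i * (t * x i) := by
        rw [Finset.mul_sum]; exact Finset.sum_congr rfl fun i _ => by ring
    _ = ∑ k, y k * (t * y k) := by
        simp_rw [hx, hy, Finset.mul_sum]
        rw [Finset.sum_comm]
        exact Finset.sum_congr rfl fun k _ => Finset.sum_congr rfl fun i _ => by ring
    _ = t * ∑ k, y k ^ 2 := by
        rw [Finset.mul_sum]; exact Finset.sum_congr rfl fun k _ => by ring

theorem morita_context_equal_dimensions_general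
    {B : Type*} [Bicategory B] {F : Type*} [Field F] {a b : B}
    [∀ (x y : B), Preadditive (x ⟶ y)] [∀ (x y : B), CategoryTheory.Linear F (x ⟶ y)]
    -- whiskering is additive and `F`-linear:
    (hwl : ∀ {x y z : B} (f : x ⟶ y) {g h : y ⟶ z} (β γ : g ⟶ h),
      f ◁ (β + γ) = f ◁ β + f ◁ γ)
    (hwl' : ∀ {x y z : B} (f : x ⟶ y) {g h : y ⟶ z} (c : F) (β : g ⟶ h),
      f ◁ (c • β) = c • (f ◁ β))
    -- the dimension function, multiplicative over composition and additive over
    -- direct-sum decompositions: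
    (dim : ∀ {x y : B}, (x ⟶ y) → F)
    (hdmul : ∀ {x y z : B} (f : x ⟶ y) (g : y ⟶ z), dim (f ≫ g) = dim f * dim g)
    (hdadd : ∀ {x y : B} (Z : x ⟶ y) (N : ℕ) (W : Fin N → (x ⟶ y))
        (u : ∀ p, W p ⟶ Z) (u' : ∀ p, Z ⟶ W p),
        (∑ p, u' p ≫ u p) = 𝟙 Z → (∀ p, u p ≫ u' p = 𝟙 (W p)) →
        (∀ p q, p ≠ q → u p ≫ u' q = 0) → dim Z = ∑ p, dim (W p))
    -- the mutually dual 1-morphisms `J`, `J̄`: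
    (J : b ⟶ a) (Jbar : a ⟶ b)
    (eps : 𝟙 b ⟶ J ≫ Jbar) (η : Jbar ≫ J ⟶ 𝟙 a)
    (zag₁ : (λ_ J).inv ≫ (eps ▷ J) ≫ (α_ J Jbar J).hom ≫ (J ◁ η) ≫ (ρ_ J).hom = 𝟙 J)
    (zag₂ : (ρ_ Jbar).inv ≫ (Jbar ◁ eps) ≫ (α_ Jbar J Jbar).inv ≫ (η ▷ Jbar) ≫ (λ_ Jbar).hom
        = 𝟙 Jbar)
    (hdJ : dim J = dim Jbar) (hdJ0 : dim J ≠ 0)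
    -- representatives of the simple 1-morphisms of `End(A)` and of `Hom(B,A)`:
    (m n : ℕ) (X : Fin m → (a ⟶ a)) (Y : Fin n → (b ⟶ a))
    (hXsimple : ∀ i (f : X i ⟶ X i), ∃ c : F, f = c • 𝟙 (X i))
    (hYsimple : ∀ k (f : Y k ⟶ Y k), ∃ c : F, f = c • 𝟙 (Y k))
    (hXdisj : ∀ i j, i ≠ j → ∀ f : X i ⟶ X j, f = 0)
    (hYdisj : ∀ k l, k ≠ l → ∀ f : Y k ⟶ Y l, f = 0)
    -- semisimplicity: every 1-morphism decomposes into the given simples: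
    (hdecX : ∀ Z : a ⟶ a, ∃ (N : ℕ) (c : Fin N → Fin m)
        (u : ∀ p, X (c p) ⟶ Z) (u' : ∀ p, Z ⟶ X (c p)),
        (∑ p, u' p ≫ u p) = 𝟙 Z ∧ (∀ p, u p ≫ u' p = 𝟙 (X (c p))) ∧
        (∀ p q, p ≠ q → u p ≫ u' q = 0))
    (hdecY : ∀ Z : b ⟶ a, ∃ (N : ℕ) (c : Fin N → Fin n)
        (u : ∀ p, Y (c p) ⟶ Z) (u' : ∀ p, Z ⟶ Y (c p)),
        (∑ p, u' p ≫ u p) = 𝟙 Z ∧ (∀ p, u p ≫ u' p = 𝟙 (Y (c p))) ∧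
        (∀ p q, p ≠ q → u p ≫ u' q = 0)) :
    (∑ i, dim (X i) ^ 2) = ∑ k, dim (Y k) ^ 2 := by
  have hd : ∀ x y : B, IsAdditiveOnDirectSums (dim (x := x) (y := y)) :=
    fun _ _ Z N W u u' h => hdadd Z N W u u' h.1 h.2.1 h.2.2
  have hN : ∀ i k, finrank F (Y k ⟶ J ≫ X i) = finrank F (Jbar ≫ Y k ⟶ X i) := fun i k =>
    ((Adjunction.ofZigzag eps η zag₁ zag₂).homLinearEquiv₁ (hwl Jbar) (hwl' Jbar)).finrank_eq
  refine sum_sq_eq_of_mul_eq_sum (fun i k => (finrank F (Y k ⟶ J ≫ X i) : F)) hdJ0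
    (fun i => ?_) (fun k => ?_)
  · obtain ⟨N, c, u, u', hJX⟩ := hdecY (J ≫ X i)
    rw [← hdmul, (hd b a).eq_sum_finrank_hom_mul hYsimple hYdisj hJX]
  · obtain ⟨N, c, u, u', hJY⟩ := hdecX (Jbar ≫ Y k)
    rw [hdJ, ← hdmul, (hd a a).eq_sum_finrank_hom_mul' hXsimple hXdisj hJY]
    simp only [hN]

/-- In a semisimple `F`-linear Morita context (a bicategory with two objects `A`, `B`,
simple units, mutually dual `J : B ⟶ A`, `J̄ : A ⟶ B` with `d(J) = d(J̄) ≠ 0`, a dimension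
function on 1-morphisms which is additive over direct sums and multiplicative over
composition, finitely many simple 1-morphisms `{Xᵢ}` of `End(A)` and `{Y_k}` of
`Hom(B,A)` into which everything decomposes), one has `Σᵢ d(Xᵢ)² = Σ_k d(Y_k)²`. -/
theorem morita_context_equal_dimensions
    {B : Type*} [Bicategory B] {F : Type*} [Field F] {a b : B}
    [∀ (x y : B), Preadditive (x ⟶ y)] [∀ (x y : B), CategoryTheory.Linear F (x ⟶ y)]
    -- whiskering is additive and `F`-linear:
    (hwl : ∀ {x y z : B} (f : x ⟶ y) {g h : y ⟶ z} (β γ : g ⟶ h),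
      f ◁ (β + γ) = f ◁ β + f ◁ γ)
    (hwr : ∀ {x y z : B} {g h : x ⟶ y} (β γ : g ⟶ h) (f : y ⟶ z),
      (β + γ) ▷ f = β ▷ f + γ ▷ f)
    (hwl' : ∀ {x y z : B} (f : x ⟶ y) {g h : y ⟶ z} (c : F) (β : g ⟶ h),
      f ◁ (c • β) = c • (f ◁ β))
    (hwr' : ∀ {x y z : B} {g h : x ⟶ y} (c : F) (β : g ⟶ h) (f : y ⟶ z),
      (c • β) ▷ f = c • (β ▷ f))
    -- the dimension function, multiplicative over composition and additive over
    -- direct-sum decompositions: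
    (dim : ∀ {x y : B}, (x ⟶ y) → F)
    (hdmul : ∀ {x y z : B} (f : x ⟶ y) (g : y ⟶ z), dim (f ≫ g) = dim f * dim g)
    (hdadd : ∀ {x y : B} (Z : x ⟶ y) (N : ℕ) (W : Fin N → (x ⟶ y))
        (u : ∀ p, W p ⟶ Z) (u' : ∀ p, Z ⟶ W p),
        (∑ p, u' p ≫ u p) = 𝟙 Z → (∀ p, u p ≫ u' p = 𝟙 (W p)) →
        (∀ p q, p ≠ q → u p ≫ u' q = 0) → dim Z = ∑ p, dim (W p))
    -- the mutually dual 1-morphisms `J`, `J̄`: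
    (J : b ⟶ a) (Jbar : a ⟶ b)
    (e : 𝟙 a ⟶ Jbar ≫ J) (d₂ : J ≫ Jbar ⟶ 𝟙 b)
    (eps : 𝟙 b ⟶ J ≫ Jbar) (η : Jbar ≫ J ⟶ 𝟙 a)
    (zig₁ : (ρ_ J).inv ≫ (J ◁ e) ≫ (α_ J Jbar J).inv ≫ (d₂ ▷ J) ≫ (λ_ J).hom = 𝟙 J)
    (zig₂ : (λ_ Jbar).inv ≫ (e ▷ Jbar) ≫ (α_ Jbar J Jbar).hom ≫ (Jbar ◁ d₂) ≫ (ρ_ Jbar).hom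
        = 𝟙 Jbar)
    (zag₁ : (λ_ J).inv ≫ (eps ▷ J) ≫ (α_ J Jbar J).hom ≫ (J ◁ η) ≫ (ρ_ J).hom = 𝟙 J)
    (zag₂ : (ρ_ Jbar).inv ≫ (Jbar ◁ eps) ≫ (α_ Jbar J Jbar).inv ≫ (η ▷ Jbar) ≫ (λ_ Jbar).hom
        = 𝟙 Jbar)
    (hdJ : dim J = dim Jbar) (hdJ0 : dim J ≠ 0)
    -- the unit 1-morphisms are simple:
    (hIda : ∀ f : 𝟙 a ⟶ 𝟙 a, ∃ c : F, f = c • 𝟙 (𝟙 a))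
    (hIdb : ∀ f : 𝟙 b ⟶ 𝟙 b, ∃ c : F, f = c • 𝟙 (𝟙 b))
    -- representatives of the simple 1-morphisms of `End(A)` and of `Hom(B,A)`:
    (m n : ℕ) (X : Fin m → (a ⟶ a)) (Y : Fin n → (b ⟶ a))
    (hXsimple : ∀ i (f : X i ⟶ X i), ∃ c : F, f = c • 𝟙 (X i))
    (hYsimple : ∀ k (f : Y k ⟶ Y k), ∃ c : F, f = c • 𝟙 (Y k))
    (hXdisj : ∀ i j, i ≠ j → ∀ f : X i ⟶ X j, f = 0)
    (hYdisj : ∀ k l, k ≠ l → ∀ f : Y k ⟶ Y l, f = 0)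
    -- semisimplicity: every 1-morphism decomposes into the given simples:
    (hdecX : ∀ Z : a ⟶ a, ∃ (N : ℕ) (c : Fin N → Fin m)
        (u : ∀ p, X (c p) ⟶ Z) (u' : ∀ p, Z ⟶ X (c p)),
        (∑ p, u' p ≫ u p) = 𝟙 Z ∧ (∀ p, u p ≫ u' p = 𝟙 (X (c p))) ∧
        (∀ p q, p ≠ q → u p ≫ u' q = 0))
    (hdecY : ∀ Z : b ⟶ a, ∃ (N : ℕ) (c : Fin N → Fin n)
        (u : ∀ p, Y (c p) ⟶ Z) (u' : ∀ p, Z ⟶ Y (c p)),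
        (∑ p, u' p ≫ u p) = 𝟙 Z ∧ (∀ p, u p ≫ u' p = 𝟙 (Y (c p))) ∧
        (∀ p q, p ≠ q → u p ≫ u' q = 0)) :
    (∑ i, dim (X i) ^ 2) = ∑ k, dim (Y k) ^ 2 :=
  morita_context_equal_dimensions_general hwl hwl' dim hdmul hdadd J Jbar eps η zag₁ zag₂ hdJ hdJ0 m
    n X Y hXsimple hYsimple hXdisj hYdisj hdecX hdecY
end

section
/- Let F : C → D be a functor with a simultaneous left and right adjoint G : D → C, with 2-morphisms r : Id_C → GF, s : FG → Id_D (from F ⊣ G) and p : Id_D → FG, q : GF → Id_C (from G ⊣ F). Then T = GF with m = GsF, η = r, Δ = GpF, ε = q is a Frobenius algebra in End(C): (T, m, η) is a monad, (T, Δ, ε) is a comonad, and (id_T ⊗ m) ∘ (Δ ⊗ id_T) = Δ ∘ m = (m ⊗ id_T) ∘ (id_T ⊗ Δ). -/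
/-!
`T = GF` is the monad of `F ⊣ G` and the comonad of `G ⊣ F`. Each Frobenius equation is `G`
applied to the interchange `s ≫ p = FG p ≫ s_FG = p_FG ≫ FG s` of the counit `s : FG ⟶ 𝟭`
with the unit `p : 𝟭 ⟶ FG`, and each of these is a naturality square of `s` or of `p`.
-/

open CategoryTheory

namespace CategoryTheory.NatTrans

variable {D : Type*} [Category D] {H : D ⥤ D} (s : H ⟶ 𝟭 D) (p : 𝟭 D ⟶ H)

lemma app_comp_app_eq_map_app_comp_app (Y : D) :
    s.app Y ≫ p.app Y = H.map (p.app Y) ≫ s.app (H.obj Y) :=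
  (s.naturality (p.app Y)).symm

lemma app_comp_app_eq_app_comp_map_app (Y : D) :
    s.app Y ≫ p.app Y = p.app (H.obj Y) ≫ H.map (s.app Y) :=
  p.naturality (s.app Y)

end CategoryTheory.NatTrans

/-- If `G` is a simultaneous left and right adjoint of `F` (with `F ⊣ G` given by unit `r`,
counit `s`, and `G ⊣ F` given by unit `p`, counit `q`), then `T = GF` with `m = GsF`,
`η = r`, `Δ = GpF`, `ε = q` is a Frobenius algebra in the endofunctor category of `C`:
`(T, m, η)` is a monad, `(T, Δ, ε)` is a comonad, and the Frobenius condition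
`(id ⊗ m) ∘ (Δ ⊗ id) = Δ ∘ m = (m ⊗ id) ∘ (id ⊗ Δ)` holds (stated componentwise). -/
theorem two_sided_adjoint_gives_frobenius_monad
    {C D : Type*} [Category C] [Category D]
    (F : C ⥤ D) (G : D ⥤ C) (adj₁ : F ⊣ G) (adj₂ : G ⊣ F) :
    -- `(T, m, η)` is a monad:
    ((∀ X : C,
        G.map (F.map (G.map (adj₁.counit.app (F.obj X)))) ≫ G.map (adj₁.counit.app (F.obj X))
          = G.map (adj₁.counit.app (F.obj (G.obj (F.obj X))))
              ≫ G.map (adj₁.counit.app (F.obj X))) ∧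
      (∀ X : C,
        adj₁.unit.app (G.obj (F.obj X)) ≫ G.map (adj₁.counit.app (F.obj X))
          = 𝟙 (G.obj (F.obj X))) ∧
      (∀ X : C,
        G.map (F.map (adj₁.unit.app X)) ≫ G.map (adj₁.counit.app (F.obj X))
          = 𝟙 (G.obj (F.obj X)))) ∧
    -- `(T, Δ, ε)` is a comonad:
    ((∀ X : C,
        G.map (adj₂.unit.app (F.obj X)) ≫ G.map (F.map (G.map (adj₂.unit.app (F.obj X))))
          = G.map (adj₂.unit.app (F.obj X))
              ≫ G.map (adj₂.unit.app (F.obj (G.obj (F.obj X))))) ∧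
      (∀ X : C,
        G.map (adj₂.unit.app (F.obj X)) ≫ adj₂.counit.app (G.obj (F.obj X))
          = 𝟙 (G.obj (F.obj X))) ∧
      (∀ X : C,
        G.map (adj₂.unit.app (F.obj X)) ≫ G.map (F.map (adj₂.counit.app X))
          = 𝟙 (G.obj (F.obj X)))) ∧
    -- the Frobenius condition `(id_T ⊗ m) ∘ (Δ ⊗ id_T) = Δ ∘ m = (m ⊗ id_T) ∘ (id_T ⊗ Δ)`:
    ((∀ X : C,
        G.map (adj₁.counit.app (F.obj X)) ≫ G.map (adj₂.unit.app (F.obj X))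
          = G.map (F.map (G.map (adj₂.unit.app (F.obj X))))
              ≫ G.map (adj₁.counit.app (F.obj (G.obj (F.obj X))))) ∧
      (∀ X : C,
        G.map (adj₁.counit.app (F.obj X)) ≫ G.map (adj₂.unit.app (F.obj X))
          = G.map (adj₂.unit.app (F.obj (G.obj (F.obj X))))
              ≫ G.map (F.map (G.map (adj₁.counit.app (F.obj X)))))) := by
  let T := adj₁.toMonad
  let S := adj₂.toComonad
  refine ⟨⟨T.assoc, T.left_unit, T.right_unit⟩, ⟨S.coassoc, S.left_counit, S.right_counit⟩,
    fun X => ?_, fun X => ?_⟩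
  · simpa only [G.map_comp, Functor.comp_map, Functor.comp_obj] using congrArg G.map
      (adj₁.counit.app_comp_app_eq_map_app_comp_app adj₂.unit (F.obj X))
  · simpa only [G.map_comp, Functor.comp_map, Functor.comp_obj] using congrArg G.map
      (adj₁.counit.app_comp_app_eq_app_comp_map_app adj₂.unit (F.obj X))
end
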